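/- arXiv:2408.15074 — 3 statements merged into one kernel-verified Lean document; each statement's English description precedes it below -/
import Mathlib

section
/- For every integer n ≥ 3 and every partition μ of 3n−1, the squid graph Sq(2n−1;1^n) has a stable partition of type μ if and only if μ ≤ (2n−1, n−1, 1) in dominance order. -/
def IsStableSet {V : Type*} (G : SimpleGraph V) (S : Finset V) : Prop :=
  ∀ v ∈ S, ∀ w ∈ S, ¬ G.Adj v w

def SemiOrderedStable {V : Type*} (G : SimpleGraph V) (L : List ℕ)
    (B : Fin L.length → Finset V) : Prop :=
  (∀ i, IsStableSet G (B i)) ∧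
  (∀ i j, i ≠ j → Disjoint (B i) (B j)) ∧
  (∀ v : V, ∃ i, v ∈ B i) ∧
  (∀ i, (B i).card = L.get i)

noncomputable def aTilde {V : Type*} (G : SimpleGraph V) (L : List ℕ) : ℕ :=
  Nat.card {B : Fin L.length → Finset V // SemiOrderedStable G L B}

def IsPartitionOf (n : ℕ) (L : List ℕ) : Prop :=
  L.Pairwise (· ≥ ·) ∧ (∀ x ∈ L, 0 < x) ∧ L.sum = n

def DominatedBy (M L : List ℕ) : Prop :=
  ∀ k : ℕ, (M.take k).sum ≤ (L.take k).sum

def StronglyNice {V : Type*} [Fintype V] (G : SimpleGraph V) : Prop :=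
  ∀ L M : List ℕ, IsPartitionOf (Fintype.card V) L →
    IsPartitionOf (Fintype.card V) M → DominatedBy M L →
    aTilde G L ≤ aTilde G M

def HasStablePartitionOfType {V : Type*} (G : SimpleGraph V) (L : List ℕ) : Prop :=
  ∃ B : Fin L.length → Finset V, SemiOrderedStable G L B

def ClawFree {V : Type*} (G : SimpleGraph V) : Prop :=
  ¬ ∃ (c a b d : V), a ≠ b ∧ a ≠ d ∧ b ≠ d ∧
    G.Adj c a ∧ G.Adj c b ∧ G.Adj c d ∧ ¬ G.Adj a b ∧ ¬ G.Adj a d ∧ ¬ G.Adj b d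
def squid (n : ℕ) : SimpleGraph (Fin (2 * n - 1) ⊕ Fin n) :=
  SimpleGraph.fromRel (fun x y =>
    match x, y with
    | Sum.inl i, Sum.inl j => (i.val + 1) % (2 * n - 1) = j.val
    | Sum.inl i, Sum.inr _ => i.val = 0
    | _, _ => False)

namespace SquidAux

lemma mod_small {a N : ℕ} (hN : 0 < N) (h : a < 2*N) :
    a % N = if a < N then a else a - N := by
  split_ifs with h'
  · exact Nat.mod_eq_of_lt h'
  · rw [Nat.mod_eq_sub_mod (le_of_not_gt h'), Nat.mod_eq_of_lt (by omega)]

lemma stair (f : ℕ → ℕ) (hf0 : f 0 = 0) :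
    ∀ m x, x < f m → ∃ i, i < m ∧ f i ≤ x ∧ x < f (i+1) := by
  intro m
  induction m with
  | zero => intro x hx; omega
  | succ m ih =>
    intro x hx
    by_cases h : x < f m
    · obtain ⟨i, h1, h2, h3⟩ := ih x h; exact ⟨i, by omega, h2, h3⟩
    · exact ⟨m, by omega, by omega, hx⟩

lemma squid_adj_inl {n : ℕ} (i j : Fin (2*n-1)) :
    (squid n).Adj (Sum.inl i) (Sum.inl j) ↔
    i ≠ j ∧ ((i.val + 1) % (2*n-1) = j.val ∨ (j.val + 1) % (2*n-1) = i.val) := by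
  simp [squid, SimpleGraph.fromRel_adj]

lemma squid_adj_inr {n : ℕ} (i : Fin (2*n-1)) (p : Fin n) :
    (squid n).Adj (Sum.inl i) (Sum.inr p) ↔ i.val = 0 := by
  simp [squid, SimpleGraph.fromRel_adj]

lemma squid_adj_inr' {n : ℕ} (i : Fin (2*n-1)) (p : Fin n) :
    (squid n).Adj (Sum.inr p) (Sum.inl i) ↔ i.val = 0 := by
  rw [SimpleGraph.adj_comm]; exact squid_adj_inr i p

lemma squid_not_adj_inr {n : ℕ} (p q : Fin n) :
    ¬ (squid n).Adj (Sum.inr p) (Sum.inr q) := by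
  simp [squid, SimpleGraph.fromRel_adj]

def Tpre (M : List ℕ) : ℕ → ℕ
  | 0 => 0
  | i+1 => Tpre M i + M.getD i 0

def Cpre (n : ℕ) (M : List ℕ) : ℕ → ℕ
  | 0 => 0
  | i+1 => Cpre n M i + min (M.getD i 0) (n-1)

def SS (n : ℕ) (M : List ℕ) (i : ℕ) : ℕ :=
  min (Cpre n M i) (2*n - 1 - M.getD (M.length - 1) 0)

def PP (n : ℕ) (M : List ℕ) (i : ℕ) : ℕ := Tpre M i - SS n M i

def cycV (n : ℕ) (hn : 3 ≤ n) (t : ℕ) : Fin (2*n-1) ⊕ Fin n :=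
  Sum.inl ⟨(2*t) % (2*n-1), Nat.mod_lt _ (by omega)⟩

def penV (n : ℕ) (hn : 3 ≤ n) (p : ℕ) : Fin (2*n-1) ⊕ Fin n :=
  Sum.inr ⟨p % n, Nat.mod_lt _ (by omega)⟩

def blk (n : ℕ) (hn : 3 ≤ n) (M : List ℕ) (i : ℕ) : Finset (Fin (2*n-1) ⊕ Fin n) :=
  if i = M.length - 1 then (Finset.range (M.getD i 0)).image (cycV n hn)
  else ((Finset.range (SS n M (i+1) - SS n M i)).image
          (fun j => cycV n hn (M.getD (M.length-1) 0 + SS n M i + j))) ∪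
       ((Finset.range (PP n M (i+1) - PP n M i)).image
          (fun j => penV n hn (PP n M i + j)))

lemma take_sum_succ (M : List ℕ) (i : ℕ) :
    (M.take (i+1)).sum = (M.take i).sum + M.getD i 0 := by
  by_cases h : i < M.length
  · rw [List.take_succ, List.sum_append, List.getElem?_eq_getElem h]
    simp [List.getD_eq_getElem?_getD, List.getElem?_eq_getElem h]
  · rw [List.take_of_length_le (by omega), List.take_of_length_le (by omega),
      List.getD_eq_default _ _ (by omega)]
    omega

lemma Tpre_take (M : List ℕ) : ∀ i, Tpre M i = (M.take i).sum := by
  intro i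
  induction i with
  | zero => simp [Tpre]
  | succ i ih => rw [Tpre, ih, take_sum_succ]

lemma take_sum_le (M : List ℕ) (i : ℕ) : (M.take i).sum ≤ M.sum := by
  conv_rhs => rw [← List.take_append_drop i M]
  rw [List.sum_append]
  exact Nat.le_add_right _ _

end SquidAux


set_option maxHeartbeats 1000000 in
open SquidAux in
theorem squid_hasStablePartition_iff_dominated (n : ℕ) (hn : 3 ≤ n)
    (M : List ℕ) (hM : IsPartitionOf (3 * n - 1) M) :
    HasStablePartitionOfType (squid n) M ↔ DominatedBy M [2 * n - 1, n - 1, 1] := by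
  obtain ⟨hsort, hpos, hsum⟩ := hM
  have hNpos : 0 < 2*n-1 := by omega
  have minchar : ∀ a b : ℕ, (min a b = a ∧ a ≤ b) ∨ (min a b = b ∧ b ≤ a) := by
    intro a b
    rcases Nat.le_total a b with h | h
    · left; exact ⟨min_eq_left h, h⟩
    · right; exact ⟨min_eq_right h, h⟩
  have hget0 : ∀ i, M.length ≤ i → M.getD i 0 = 0 := fun i h => List.getD_eq_default _ _ h
  have hgetpos : ∀ i, i < M.length → 0 < M.getD i 0 := by
    intro i h
    rw [List.getD_eq_getElem _ _ h]
    exact hpos _ (List.getElem_mem _)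
  have hgetget : ∀ i : Fin M.length, M.getD i.val 0 = M.get i := by
    intro i
    rw [List.getD_eq_getElem _ _ i.isLt]
    rfl
  have hmono : ∀ i j, i ≤ j → M.getD j 0 ≤ M.getD i 0 := by
    intro i j hij
    by_cases hj : j < M.length
    · have hi : i < M.length := by omega
      rw [List.getD_eq_getElem _ _ hj, List.getD_eq_getElem _ _ hi]
      rcases eq_or_lt_of_le hij with rfl | hlt
      · exact le_refl _
      · exact hsort.rel_get_of_lt (a := ⟨i, hi⟩) (b := ⟨j, hj⟩) hlt
    · rw [hget0 j (by omega)]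
      omega
  have hlen1 : 0 < M.length := by
    rcases M with _ | ⟨a, M'⟩
    · simp at hsum; omega
    · simp
  have htake1 : (M.take 1).sum = M.getD 0 0 := by
    rw [← Tpre_take]; simp [Tpre]
  have htake2 : (M.take 2).sum = M.getD 0 0 + M.getD 1 0 := by
    rw [← Tpre_take]; simp [Tpre]
  have htake3 : (M.take 3).sum = M.getD 0 0 + M.getD 1 0 + M.getD 2 0 := by
    rw [← Tpre_take]; simp [Tpre]
  constructor
  · -- forward direction
    rintro ⟨B, hstab, hdisj, hcov, hcard⟩
    have hsuccinj : ∀ a b : Fin (2*n-1),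
        (a.val + 1) % (2*n-1) = (b.val + 1) % (2*n-1) → a = b := by
      intro a b h
      have e1 := mod_small (a := a.val + 1) hNpos (by have := a.isLt; omega)
      have e2 := mod_small (a := b.val + 1) hNpos (by have := b.isLt; omega)
      have ha := a.isLt; have hb := b.isLt
      apply Fin.ext
      split_ifs at e1 e2 <;> omega
    have hbound : ∀ i, (B i).card ≤ 2*n-1 := by
      intro i
      classical
      have hsplit : B i =
          (Finset.univ.filter (fun v : Fin (2*n-1) => Sum.inl v ∈ B i)).image Sum.inl ∪
          (Finset.univ.filter (fun p : Fin n => Sum.inr p ∈ B i)).image Sum.inr := by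
        ext x
        cases x with
        | inl v => simp
        | inr p => simp
      have hdisjLR : Disjoint
          ((Finset.univ.filter (fun v : Fin (2*n-1) => Sum.inl v ∈ B i)).image Sum.inl)
          ((Finset.univ.filter (fun p : Fin n => Sum.inr p ∈ B i)).image Sum.inr) := by
        rw [Finset.disjoint_left]
        rintro x hx hy
        obtain ⟨v, _, rfl⟩ := Finset.mem_image.1 hx
        obtain ⟨p, _, h⟩ := Finset.mem_image.1 hy
        exact absurd h (by simp)
      have hcards : (B i).card =
          (Finset.univ.filter (fun v : Fin (2*n-1) => Sum.inl v ∈ B i)).card +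
          (Finset.univ.filter (fun p : Fin n => Sum.inr p ∈ B i)).card := by
        conv_lhs => rw [hsplit]
        rw [Finset.card_union_of_disjoint hdisjLR,
          Finset.card_image_of_injective _ Sum.inl_injective,
          Finset.card_image_of_injective _ Sum.inr_injective]
      have hSR : (Finset.univ.filter (fun p : Fin n => Sum.inr p ∈ B i)).card ≤ n :=
        le_trans (Finset.card_filter_le _ _) (by simp)
      have hSL2 : 2 * (Finset.univ.filter (fun v : Fin (2*n-1) => Sum.inl v ∈ B i)).card ≤ 2*n-1 := by
        set SL := Finset.univ.filter (fun v : Fin (2*n-1) => Sum.inl v ∈ B i) with hSLdef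
        set T := SL.image (fun v : Fin (2*n-1) =>
          (⟨(v.val+1) % (2*n-1), Nat.mod_lt _ hNpos⟩ : Fin (2*n-1))) with hTdef
        have hTcard : T.card = SL.card := by
          rw [hTdef]
          apply Finset.card_image_of_injOn
          intro a _ b _ hab
          apply hsuccinj
          exact congrArg Fin.val hab
        have hdisjT : Disjoint SL T := by
          rw [Finset.disjoint_right]
          intro x hxT hxSL
          obtain ⟨u, huSL, hux⟩ := Finset.mem_image.1 hxT
          have hxv : (x : Fin (2*n-1)).val = (u.val + 1) % (2*n-1) := by rw [← hux]
          have hms := mod_small (a := u.val + 1) hNpos (by have := u.isLt; omega)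
          have hne : u ≠ x := by
            intro h
            have hval := congrArg Fin.val h
            have hu := u.isLt
            split_ifs at hms <;> omega
          have hadj : (squid n).Adj (Sum.inl u) (Sum.inl x) :=
            (squid_adj_inl u x).2 ⟨hne, Or.inl hxv.symm⟩
          have hu' : Sum.inl u ∈ B i := (Finset.mem_filter.1 huSL).2
          have hx' : Sum.inl x ∈ B i := (Finset.mem_filter.1 hxSL).2
          exact hstab i _ hu' _ hx' hadj
        have hle : (SL ∪ T).card ≤ 2*n-1 := by
          have h := Finset.card_le_univ (SL ∪ T)
          simpa using h
        rw [Finset.card_union_of_disjoint hdisjT] at hle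
        omega
      omega
    have hlenne1 : M.length ≠ 1 := by
      intro h1
      have hall : ∀ v, v ∈ B ⟨0, by omega⟩ := by
        intro v
        obtain ⟨i, hi⟩ := hcov v
        have : i = ⟨0, by omega⟩ := by
          apply Fin.ext
          have := i.isLt
          omega
        rwa [this] at hi
      have h01 : (squid n).Adj (Sum.inl (⟨0, hNpos⟩ : Fin (2*n-1))) (Sum.inl ⟨1, by omega⟩) := by
        rw [squid_adj_inl]
        refine ⟨Fin.ne_of_val_ne (show (0:ℕ) ≠ 1 by omega), Or.inl ?_⟩
        show (0 + 1) % (2*n-1) = 1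
        rw [Nat.mod_eq_of_lt (by omega)]
      exact hstab _ _ (hall _) _ (hall _) h01
    have hlenne2 : M.length ≠ 2 := by
      intro h2
      have hcov2 : ∀ v, v ∈ B ⟨0, by omega⟩ ∨ v ∈ B ⟨1, by omega⟩ := by
        intro v
        obtain ⟨i, hi⟩ := hcov v
        have hi2 : i.val = 0 ∨ i.val = 1 := by have := i.isLt; omega
        rcases hi2 with h | h
        · left; have : i = ⟨0, by omega⟩ := Fin.ext h; rwa [this] at hi
        · right; have : i = ⟨1, by omega⟩ := Fin.ext h; rwa [this] at hi
      have hnb : ∀ u v, (squid n).Adj u v →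
          ((u ∈ B ⟨0, by omega⟩) ↔ ¬ (v ∈ B ⟨0, by omega⟩)) := by
        intro u v hadj
        constructor
        · intro hu hv
          exact hstab _ _ hu _ hv hadj
        · intro hv
          rcases hcov2 u with h | h
          · exact h
          · rcases hcov2 v with h' | h'
            · exact absurd h' hv
            · exact absurd hadj (hstab _ _ h _ h')
      have hpar : ∀ j, ∀ hj : j < 2*n-1,
          ((Sum.inl (⟨j, hj⟩ : Fin (2*n-1)) ∈ B ⟨0, by omega⟩) ↔
            (Even j ↔ Sum.inl (⟨0, hNpos⟩ : Fin (2*n-1)) ∈ B ⟨0, by omega⟩)) := by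
        intro j
        induction j with
        | zero =>
          intro hj
          simp
        | succ j ih =>
          intro hj
          have hj' : j < 2*n-1 := by omega
          have hadj : (squid n).Adj (Sum.inl (⟨j, hj'⟩ : Fin (2*n-1))) (Sum.inl ⟨j+1, hj⟩) := by
            rw [squid_adj_inl]
            exact ⟨Fin.ne_of_val_ne (show j ≠ j+1 by omega),
              Or.inl (show (j + 1) % (2*n-1) = j+1 from Nat.mod_eq_of_lt hj)⟩
          have h1 := hnb _ _ hadj
          have hih := ih hj'
          rw [Nat.even_add_one]
          tauto
      have hlast : 2*n-2 < 2*n-1 := by omega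
      have heven : Even (2*n-2) := ⟨n-1, by omega⟩
      have h1 := hpar (2*n-2) hlast
      have hadj : (squid n).Adj (Sum.inl (⟨2*n-2, hlast⟩ : Fin (2*n-1))) (Sum.inl ⟨0, hNpos⟩) := by
        rw [squid_adj_inl]
        refine ⟨Fin.ne_of_val_ne (show 2*n-2 ≠ 0 by omega), Or.inl ?_⟩
        show (2*n-2+1) % (2*n-1) = 0
        rw [show 2*n-2+1 = 2*n-1 by omega, Nat.mod_self]
      have h2' := hnb _ _ hadj
      tauto
    intro j
    match j with
    | 0 => simp
    | 1 =>
      have hRHS : ([2*n-1, n-1, 1].take 1).sum = 2*n-1 := by simp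
      have hb := hbound ⟨0, hlen1⟩
      rw [hcard _] at hb
      rw [htake1, hRHS, hgetget ⟨0, hlen1⟩]
      exact hb
    | 2 =>
      have hlen3 : 3 ≤ M.length := by omega
      have hRHS : ([2*n-1, n-1, 1].take 2).sum = (2*n-1) + (n-1) := by simp
      have h3le := take_sum_le M 3
      have hg2 := hgetpos 2 (by omega)
      rw [htake2, hRHS]
      omega
    | (j+3) =>
      have hRHS : ([2*n-1, n-1, 1].take (j+3)) = [2*n-1, n-1, 1] :=
        List.take_of_length_le (by simp)
      rw [hRHS]
      have h1 := take_sum_le M (j+3)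
      have h2 : ([2*n-1, n-1, 1] : List ℕ).sum = 3*n - 1 := by simp; omega
      rw [h2]
      omega
  · -- backward direction
    intro hdom
    have hd1 : M.getD 0 0 ≤ 2*n-1 := by
      have h := hdom 1
      have hRHS : ([2*n-1, n-1, 1].take 1).sum = 2*n-1 := by simp
      rw [htake1, hRHS] at h
      exact h
    have hd2 : M.getD 0 0 + M.getD 1 0 ≤ 3*n-2 := by
      have h := hdom 2
      have hRHS : ([2*n-1, n-1, 1].take 2).sum = (2*n-1) + (n-1) := by simp
      rw [htake2, hRHS] at h
      omega
    have hk3 : 3 ≤ M.length := by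
      by_contra h
      have ht : M.take 2 = M := List.take_of_length_le (by omega)
      have h2 := hdom 2
      have hRHS : ([2*n-1, n-1, 1].take 2).sum = (2*n-1) + (n-1) := by simp
      rw [ht, hsum, hRHS] at h2
      omega
    have hmL_pos : 0 < M.getD (M.length - 1) 0 := hgetpos _ (by omega)
    have hget2 : M.getD 2 0 ≤ n-1 := by
      have hle : Tpre M 3 ≤ M.sum := by rw [Tpre_take]; exact take_sum_le _ _
      have e3 : Tpre M 3 = M.getD 0 0 + M.getD 1 0 + M.getD 2 0 := by
        simp [Tpre]
      have m01 : M.getD 2 0 ≤ M.getD 1 0 := hmono 1 2 (by omega)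
      have m02 : M.getD 2 0 ≤ M.getD 0 0 := hmono 0 2 (by omega)
      omega
    have hmL_le : M.getD (M.length - 1) 0 ≤ n-1 :=
      le_trans (hmono 2 (M.length-1) (by omega)) hget2
    have hCsucc : ∀ i, Cpre n M (i+1) = Cpre n M i + min (M.getD i 0) (n-1) := fun i => rfl
    have hTsucc : ∀ i, Tpre M (i+1) = Tpre M i + M.getD i 0 := fun i => rfl
    have hCT : ∀ i, Cpre n M i ≤ Tpre M i := by
      intro i
      induction i with
      | zero => exact le_refl _
      | succ i ih =>
        rw [hCsucc, hTsucc]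
        have h1 := min_le_left (M.getD i 0) (n-1)
        omega
    have hTlast : Tpre M (M.length - 1) + M.getD (M.length - 1) 0 = 3*n-1 := by
      have h1 : Tpre M M.length = M.sum := by rw [Tpre_take, List.take_length]
      have h2 : Tpre M M.length = Tpre M (M.length - 1) + M.getD (M.length - 1) 0 := by
        conv_lhs => rw [show M.length = (M.length - 1) + 1 by omega]
        exact hTsucc _
      omega
    have hstep2 : ∀ j, Cpre n M (2+j) + Tpre M 2 = Cpre n M 2 + Tpre M (2+j) := by
      intro j
      induction j with
      | zero => rfl
      | succ j ih =>
        have hg : M.getD (2+j) 0 ≤ n-1 := by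
          by_cases h : 2+j < M.length
          · exact le_trans (hmono 2 (2+j) (by omega)) hget2
          · rw [hget0 _ (by omega)]; omega
        have e1 : Cpre n M (2+(j+1)) = Cpre n M (2+j) + min (M.getD (2+j) 0) (n-1) := hCsucc _
        have e2 : Tpre M (2+(j+1)) = Tpre M (2+j) + M.getD (2+j) 0 := hTsucc _
        have e3 : min (M.getD (2+j) 0) (n-1) = M.getD (2+j) 0 := min_eq_left hg
        omega
    have hCkey : 2*n-1 ≤ Cpre n M (M.length - 1) + M.getD (M.length - 1) 0 := by
      have h := hstep2 (M.length - 1 - 2)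
      rw [show 2 + (M.length - 1 - 2) = M.length - 1 by omega] at h
      have hC2 : Cpre n M 2 = 0 + min (M.getD 0 0) (n-1) + min (M.getD 1 0) (n-1) := rfl
      have hT2 : Tpre M 2 = 0 + M.getD 0 0 + M.getD 1 0 := rfl
      have hg10 : M.getD 1 0 ≤ M.getD 0 0 := hmono 0 1 (by omega)
      rcases minchar (M.getD 0 0) (n-1) with ⟨e0, f0⟩ | ⟨e0, f0⟩ <;>
        rcases minchar (M.getD 1 0) (n-1) with ⟨e1, f1⟩ | ⟨e1, f1⟩ <;>
        rw [e0, e1] at hC2 <;> omega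
    have hS0 : SS n M 0 = 0 := by simp [SS, Cpre]
    have hSle : ∀ i, SS n M i ≤ 2*n-1 - M.getD (M.length - 1) 0 := fun i => min_le_right _ _
    have hSstep : ∀ i, SS n M i ≤ SS n M (i+1) ∧
        SS n M (i+1) - SS n M i ≤ M.getD i 0 ∧ SS n M (i+1) - SS n M i ≤ n-1 := by
      intro i
      have dA := minchar (Cpre n M i) (2*n-1 - M.getD (M.length - 1) 0)
      have dB := minchar (Cpre n M (i+1)) (2*n-1 - M.getD (M.length - 1) 0)
      have dC := minchar (M.getD i 0) (n-1)
      have h := hCsucc i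
      unfold SS
      rcases dA with ⟨dA1, dA2⟩ | ⟨dA1, dA2⟩ <;> rcases dB with ⟨dB1, dB2⟩ | ⟨dB1, dB2⟩ <;>
        rcases dC with ⟨dC1, dC2⟩ | ⟨dC1, dC2⟩ <;> omega
    have hSmono : Monotone (SS n M) := monotone_nat_of_le_succ (fun i => (hSstep i).1)
    have hSlast : SS n M (M.length - 1) = 2*n-1 - M.getD (M.length - 1) 0 := by
      apply min_eq_right
      omega
    have hSC : ∀ i, SS n M i ≤ Tpre M i := fun i => le_trans (min_le_left _ _) (hCT i)
    have hPstep : ∀ i, PP n M i ≤ PP n M (i+1) ∧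
        (SS n M (i+1) - SS n M i) + (PP n M (i+1) - PP n M i) = M.getD i 0 := by
      intro i
      have h1 := hSC i
      have h2 := hSC (i+1)
      have h3 := hSstep i
      have h4 := hTsucc i
      unfold PP
      omega
    have hPmono : Monotone (PP n M) := monotone_nat_of_le_succ (fun i => (hPstep i).1)
    have hP0 : PP n M 0 = 0 := by simp [PP, Tpre, hS0]
    have hPlast : PP n M (M.length - 1) = n := by
      unfold PP
      rw [hSlast]
      omega
    have hPub : ∀ i, i < M.length - 1 → PP n M (i+1) ≤ n := by
      intro i hi
      exact le_trans (hPmono (show i+1 ≤ M.length - 1 by omega)) (le_of_eq hPlast)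
    -- injectivity / adjacency helpers
    have hcycinj : ∀ t t', t < 2*n-1 → t' < 2*n-1 → cycV n hn t = cycV n hn t' → t = t' := by
      intro t t' ht ht' h
      have h' : (2*t) % (2*n-1) = (2*t') % (2*n-1) := by
        simpa [cycV, Sum.inl.injEq, Fin.mk.injEq] using h
      have e1 := mod_small (a := 2*t) hNpos (by omega)
      have e2 := mod_small (a := 2*t') hNpos (by omega)
      split_ifs at e1 e2 <;> omega
    have hpeninj : ∀ p p', p < n → p' < n → penV n hn p = penV n hn p' → p = p' := by
      intro p p' hp hp' h
      have h' : p % n = p' % n := by simpa [penV, Sum.inr.injEq, Fin.mk.injEq] using h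
      rwa [Nat.mod_eq_of_lt hp, Nat.mod_eq_of_lt hp'] at h'
    have hcycadj : ∀ t t', t < 2*n-1 → t' < 2*n-1 →
        (squid n).Adj (cycV n hn t) (cycV n hn t') →
        (t' = t + n ∨ t' + (2*n-1) = t + n ∨ t = t' + n ∨ t + (2*n-1) = t' + n) := by
      intro t t' ht ht' hadj
      have hadj' : (squid n).Adj
          (Sum.inl (⟨(2*t) % (2*n-1), Nat.mod_lt _ hNpos⟩ : Fin (2*n-1)))
          (Sum.inl (⟨(2*t') % (2*n-1), Nat.mod_lt _ hNpos⟩ : Fin (2*n-1))) := hadj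
      rw [squid_adj_inl] at hadj'
      obtain ⟨hne, h⟩ := hadj'
      have h' : ((2*t) % (2*n-1) + 1) % (2*n-1) = (2*t') % (2*n-1) ∨
          ((2*t') % (2*n-1) + 1) % (2*n-1) = (2*t) % (2*n-1) := h
      clear h hne hadj
      have e1 := mod_small (a := 2*t) hNpos (by omega)
      have e2 := mod_small (a := 2*t') hNpos (by omega)
      have e3 := mod_small (a := (2*t) % (2*n-1) + 1) hNpos
        (by have := Nat.mod_lt (2*t) hNpos; omega)
      have e4 := mod_small (a := (2*t') % (2*n-1) + 1) hNpos
        (by have := Nat.mod_lt (2*t') hNpos; omega)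
      split_ifs at e1 e2 e3 e4 <;> omega
    have hcyc0 : ∀ t, 0 < t → t < 2*n-1 → ∀ p : Fin n,
        ¬ (squid n).Adj (cycV n hn t) (Sum.inr p) := by
      intro t ht ht' p hadj
      have hadj' : (squid n).Adj
          (Sum.inl (⟨(2*t) % (2*n-1), Nat.mod_lt _ hNpos⟩ : Fin (2*n-1))) (Sum.inr p) := hadj
      rw [squid_adj_inr] at hadj'
      have h' : (2*t) % (2*n-1) = 0 := hadj'
      have e1 := mod_small (a := 2*t) hNpos (by omega)
      split_ifs at e1 <;> omega
    have hcyc_surj : ∀ v : Fin (2*n-1), ∃ t, t < 2*n-1 ∧ cycV n hn t = Sum.inl v := by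
      intro v
      refine ⟨(n * v.val) % (2*n-1), Nat.mod_lt _ hNpos, ?_⟩
      have e : 2 * (n * v.val % (2*n-1)) % (2*n-1) = 2 * (n * v.val) % (2*n-1) :=
        (Nat.mod_modEq _ _).mul_left 2
      have e2 : 2 * (n * v.val) = v.val + (2*n-1) * v.val := by
        have h2n : 2*n = (2*n-1) + 1 := by omega
        calc 2 * (n * v.val) = (2*n) * v.val := by ring
        _ = ((2*n-1) + 1) * v.val := by rw [← h2n]
        _ = v.val + (2*n-1) * v.val := by ring
      have e3 : (v.val + (2*n-1) * v.val) % (2*n-1) = v.val % (2*n-1) :=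
        Nat.add_mul_mod_self_left v.val (2*n-1) v.val
      have efin : 2 * (n * v.val % (2*n-1)) % (2*n-1) = v.val := by
        rw [e, e2, e3, Nat.mod_eq_of_lt v.isLt]
      show Sum.inl (⟨2 * (n * v.val % (2*n-1)) % (2*n-1), Nat.mod_lt _ hNpos⟩ : Fin (2*n-1)) =
        Sum.inl v
      exact congrArg Sum.inl (Fin.ext efin)
    refine ⟨fun i => blk n hn M i.val, ?_, ?_, ?_, ?_⟩
    · -- stability
      intro i x hx y hy hadj
      replace hx : x ∈ blk n hn M i.val := hx
      replace hy : y ∈ blk n hn M i.val := hy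
      by_cases hi : i.val = M.length - 1
      · unfold blk at hx hy
        rw [if_pos hi] at hx hy
        obtain ⟨t, ht, rfl⟩ := Finset.mem_image.1 hx
        obtain ⟨t', ht', rfl⟩ := Finset.mem_image.1 hy
        rw [Finset.mem_range] at ht ht'
        rw [hi] at ht ht'
        have h4 := hcycadj t t' (by omega) (by omega) hadj
        omega
      · unfold blk at hx hy
        rw [if_neg hi] at hx hy
        have hw2 := hSle (i.val + 1)
        have hw3 := hSstep i.val
        rcases Finset.mem_union.1 hx with hx' | hx' <;> rcases Finset.mem_union.1 hy with hy' | hy'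
        · obtain ⟨a, ha, rfl⟩ := Finset.mem_image.1 hx'
          obtain ⟨b, hb, rfl⟩ := Finset.mem_image.1 hy'
          rw [Finset.mem_range] at ha hb
          have h4 := hcycadj _ _ (by omega) (by omega) hadj
          omega
        · obtain ⟨a, ha, rfl⟩ := Finset.mem_image.1 hx'
          obtain ⟨b, hb, rfl⟩ := Finset.mem_image.1 hy'
          rw [Finset.mem_range] at ha hb
          exact hcyc0 _ (by omega) (by omega) _ hadj
        · obtain ⟨a, ha, rfl⟩ := Finset.mem_image.1 hx'
          obtain ⟨b, hb, rfl⟩ := Finset.mem_image.1 hy'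
          rw [Finset.mem_range] at ha hb
          exact hcyc0 _ (by omega) (by omega) _ hadj.symm
        · obtain ⟨a, ha, rfl⟩ := Finset.mem_image.1 hx'
          obtain ⟨b, hb, rfl⟩ := Finset.mem_image.1 hy'
          exact squid_not_adj_inr _ _ hadj
    · -- disjointness
      intro i j hij
      have hijval : i.val ≠ j.val := fun h => hij (Fin.ext h)
      have hmem : ∀ (i : Fin M.length) x, x ∈ blk n hn M i.val →
          (∃ t, x = cycV n hn t ∧
            ((i.val = M.length - 1 ∧ t < M.getD (M.length - 1) 0) ∨
             (i.val ≠ M.length - 1 ∧ M.getD (M.length - 1) 0 + SS n M i.val ≤ t ∧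
               t < M.getD (M.length - 1) 0 + SS n M (i.val+1)))) ∨
          (∃ p, x = penV n hn p ∧ i.val ≠ M.length - 1 ∧
            PP n M i.val ≤ p ∧ p < PP n M (i.val+1)) := by
        intro i x hx
        by_cases hi : i.val = M.length - 1
        · unfold blk at hx
          rw [if_pos hi] at hx
          obtain ⟨t, ht, rfl⟩ := Finset.mem_image.1 hx
          rw [Finset.mem_range] at ht
          rw [hi] at ht
          exact Or.inl ⟨t, rfl, Or.inl ⟨hi, ht⟩⟩
        · unfold blk at hx
          rw [if_neg hi] at hx
          rcases Finset.mem_union.1 hx with hx' | hx'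
          · obtain ⟨a, ha, rfl⟩ := Finset.mem_image.1 hx'
            rw [Finset.mem_range] at ha
            exact Or.inl ⟨_, rfl, Or.inr ⟨hi, by omega, by omega⟩⟩
          · obtain ⟨a, ha, rfl⟩ := Finset.mem_image.1 hx'
            rw [Finset.mem_range] at ha
            have hps := (hPstep i.val).1
            exact Or.inr ⟨_, rfl, hi, by omega, by omega⟩
      rw [Finset.disjoint_left]
      intro x hxi hxj
      replace hxi : x ∈ blk n hn M i.val := hxi
      replace hxj : x ∈ blk n hn M j.val := hxj
      obtain h1 | h1 := hmem i x hxi <;> obtain h2 | h2 := hmem j x hxj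
      · obtain ⟨t, rfl, hti⟩ := h1
        obtain ⟨t', heq, htj⟩ := h2
        have hb1 : t < 2*n-1 := by
          rcases hti with ⟨_, h⟩ | ⟨_, h1', h2'⟩
          · omega
          · have := hSle (i.val + 1); omega
        have hb2 : t' < 2*n-1 := by
          rcases htj with ⟨_, h⟩ | ⟨_, h1', h2'⟩
          · omega
          · have := hSle (j.val + 1); omega
        have heqt := hcycinj t t' hb1 hb2 heq
        rcases hti with ⟨hi1, hi2⟩ | ⟨hi1, hi2, hi3⟩ <;>
          rcases htj with ⟨hj1, hj2⟩ | ⟨hj1, hj2, hj3⟩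
        · omega
        · omega
        · omega
        · rcases Nat.lt_or_ge i.val j.val with hlt | hge
          · have := hSmono (show i.val + 1 ≤ j.val by omega)
            omega
          · have := hSmono (show j.val + 1 ≤ i.val by omega)
            omega
      · obtain ⟨t, rfl, _⟩ := h1
        obtain ⟨p, heq, _⟩ := h2
        simp [cycV, penV] at heq
      · obtain ⟨p, rfl, _⟩ := h1
        obtain ⟨t, heq, _⟩ := h2
        simp [cycV, penV] at heq
      · obtain ⟨p, rfl, hp1, hp2, hp3⟩ := h1
        obtain ⟨p', heq, hq1, hq2, hq3⟩ := h2
        have hb1 : p < n := lt_of_lt_of_le hp3 (hPub i.val (by have := i.isLt; omega))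
        have hb2 : p' < n := lt_of_lt_of_le hq3 (hPub j.val (by have := j.isLt; omega))
        have heqp := hpeninj p p' hb1 hb2 heq
        rcases Nat.lt_or_ge i.val j.val with hlt | hge
        · have := hPmono (show i.val + 1 ≤ j.val by omega)
          omega
        · have := hPmono (show j.val + 1 ≤ i.val by omega)
          omega
    · -- coverage
      intro v
      cases v with
      | inl w =>
        obtain ⟨t, ht, hteq⟩ := hcyc_surj w
        by_cases hcase : t < M.getD (M.length - 1) 0
        · refine ⟨⟨M.length - 1, by omega⟩, ?_⟩
          show Sum.inl w ∈ blk n hn M (M.length - 1)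
          unfold blk
          rw [if_pos rfl]
          exact Finset.mem_image.2 ⟨t, Finset.mem_range.2 hcase, hteq⟩
        · have hx : t - M.getD (M.length - 1) 0 < SS n M (M.length - 1) := by
            rw [hSlast]; omega
          obtain ⟨i, hik, hge, hlt⟩ := stair (SS n M) hS0 (M.length - 1) _ hx
          refine ⟨⟨i, by omega⟩, ?_⟩
          show Sum.inl w ∈ blk n hn M i
          unfold blk
          rw [if_neg (show ¬ (i = M.length - 1) by omega)]
          apply Finset.mem_union_left
          refine Finset.mem_image.2
            ⟨t - M.getD (M.length - 1) 0 - SS n M i, Finset.mem_range.2 (by omega), ?_⟩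
          show cycV n hn (M.getD (M.length - 1) 0 + SS n M i +
            (t - M.getD (M.length - 1) 0 - SS n M i)) = Sum.inl w
          rw [show M.getD (M.length - 1) 0 + SS n M i +
            (t - M.getD (M.length - 1) 0 - SS n M i) = t by omega]
          exact hteq
      | inr q =>
        have hq : q.val < PP n M (M.length - 1) := by rw [hPlast]; exact q.isLt
        obtain ⟨i, hik, hge, hlt⟩ := stair (PP n M) hP0 _ _ hq
        refine ⟨⟨i, by omega⟩, ?_⟩
        show Sum.inr q ∈ blk n hn M i
        unfold blk
        rw [if_neg (show ¬ (i = M.length - 1) by omega)]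
        apply Finset.mem_union_right
        refine Finset.mem_image.2 ⟨q.val - PP n M i, Finset.mem_range.2 (by omega), ?_⟩
        show penV n hn (PP n M i + (q.val - PP n M i)) = Sum.inr q
        rw [show PP n M i + (q.val - PP n M i) = q.val by omega]
        exact congrArg Sum.inr (Fin.ext (by simp [penV, Nat.mod_eq_of_lt q.isLt]))
    · -- cardinalities
      intro i
      show (blk n hn M i.val).card = M.get i
      by_cases hi : i.val = M.length - 1
      · unfold blk
        rw [if_pos hi]
        have hinj : Set.InjOn (cycV n hn) ↑(Finset.range (M.getD i.val 0)) := by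
          intro a ha b hb hab
          rw [Finset.coe_range, Set.mem_Iio] at ha hb
          rw [hi] at ha hb
          exact hcycinj a b (by omega) (by omega) hab
        rw [Finset.card_image_of_injOn hinj, Finset.card_range, hgetget]
      · unfold blk
        rw [if_neg hi]
        have hub := hPub i.val (by have := i.isLt; omega)
        have hw2 := hSle (i.val + 1)
        have hw3 := hSstep i.val
        have hps := (hPstep i.val).1
        have hinj1 : Set.InjOn (fun j => cycV n hn (M.getD (M.length - 1) 0 + SS n M i.val + j))
            ↑(Finset.range (SS n M (i.val+1) - SS n M i.val)) := by
          intro a ha b hb hab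
          rw [Finset.coe_range, Set.mem_Iio] at ha hb
          have := hcycinj _ _ (by omega) (by omega) hab
          omega
        have hinj2 : Set.InjOn (fun j => penV n hn (PP n M i.val + j))
            ↑(Finset.range (PP n M (i.val+1) - PP n M i.val)) := by
          intro a ha b hb hab
          rw [Finset.coe_range, Set.mem_Iio] at ha hb
          have := hpeninj _ _ (by omega) (by omega) hab
          omega
        have hdisj12 : Disjoint
            ((Finset.range (SS n M (i.val+1) - SS n M i.val)).image
              (fun j => cycV n hn (M.getD (M.length - 1) 0 + SS n M i.val + j)))
            ((Finset.range (PP n M (i.val+1) - PP n M i.val)).image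
              (fun j => penV n hn (PP n M i.val + j))) := by
          rw [Finset.disjoint_left]
          rintro x hx hy
          obtain ⟨a, _, rfl⟩ := Finset.mem_image.1 hx
          obtain ⟨b, _, h⟩ := Finset.mem_image.1 hy
          simp [cycV, penV] at h
        rw [Finset.card_union_of_disjoint hdisj12, Finset.card_image_of_injOn hinj1,
          Finset.card_image_of_injOn hinj2, Finset.card_range, Finset.card_range, ← hgetget i]
        exact (hPstep i.val).2
end

section
/- Let G be a finite simple graph on N vertices. Suppose there exists a family of nonnegative rational numbers (c_ν), indexed by partitions ν of N, such that for every partition ρ of N one has ã_ρ(G) = Σ_ν c_ν · K_{νρ}, where K_{νρ} is the Kostka number. Then G is strongly nice. (In other words, if the chromatic symmetric function of G is Schur positive, then G is strongly nice.) -/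
noncomputable def kostka (L M : List ℕ) : ℕ :=
  Nat.card {T : ℕ → ℕ → ℕ //
    (∀ i j : ℕ, T i j ≠ 0 ↔ j < L.getD i 0) ∧
    (∀ i j1 j2 : ℕ, j1 ≤ j2 → j2 < L.getD i 0 → T i j1 ≤ T i j2) ∧
    (∀ i1 i2 j : ℕ, i1 < i2 → j < L.getD i2 0 → T i1 j < T i2 j) ∧
    (∀ k : ℕ, 0 < k →
      Nat.card {p : ℕ × ℕ // p.2 < L.getD p.1 0 ∧ T p.1 p.2 = k} = M.getD (k - 1) 0)}


namespace SchurAux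
open List

/-! ### Height function on boolean words -/

def hgt (w : List Bool) (k : ℕ) : ℤ :=
  ((w.take k).count true : ℤ) - ((w.take k).count false : ℤ)

lemma hgt_zero (w : List Bool) : hgt w 0 = 0 := by simp [hgt]

lemma hgt_succ (w : List Bool) {k : ℕ} (hk : k < w.length) :
    hgt w (k+1) = hgt w k + (if w.getD k false then 1 else -1) := by
  have h1 : w.take (k+1) = w.take k ++ [w[k]] := by
    rw [List.take_succ]; simp [List.getElem?_eq_getElem hk]
  have h2 : w.getD k false = w[k] := List.getD_eq_getElem w false hk
  rw [h2]
  cases hb : w[k] <;> simp [hgt, h1, List.count_append, hb] <;> ring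

def FreeX (w : List Bool) (p : ℕ) : Prop :=
  w.getD p false = true ∧ ∀ q ≤ w.length, p < q → hgt w p < hgt w q

def FreeY (w : List Bool) (p : ℕ) : Prop :=
  p < w.length ∧ w.getD p false = false ∧ ∀ q ≤ p, hgt w p ≤ hgt w q

lemma FreeX.lt_length {w : List Bool} {p : ℕ} (h : FreeX w p) : p < w.length := by
  by_contra hc
  have := h.1
  rw [List.getD_eq_default w false (le_of_not_gt hc)] at this
  exact Bool.false_ne_true this

/-- last argmin -/
lemma exists_last_argmin (g : ℕ → ℤ) (n : ℕ) :
    ∃ m ≤ n, (∀ q ≤ n, g m ≤ g q) ∧ (∀ q ≤ n, m < q → g m < g q) := by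
  induction n with
  | zero =>
    refine ⟨0, le_refl 0, ?_, ?_⟩
    · intro q hq; have : q = 0 := by omega
      simp [this]
    · intro q hq hq2; omega
  | succ n ih =>
    obtain ⟨m, hm, hmin, hstrict⟩ := ih
    by_cases hle : g (n+1) ≤ g m
    · refine ⟨n+1, le_refl _, ?_, ?_⟩
      · intro q hq
        rcases Nat.lt_or_ge q (n+1) with h | h
        · exact le_trans hle (hmin q (by omega))
        · have : q = n+1 := by omega
          simp [this]
      · intro q hq hq2; omega
    · refine ⟨m, by omega, ?_, ?_⟩
      · intro q hq
        rcases Nat.lt_or_ge q (n+1) with h | h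
        · exact hmin q (by omega)
        · have : q = n+1 := by omega
          rw [this]; omega
      · intro q hq hq2
        rcases Nat.lt_or_ge q (n+1) with h | h
        · exact hstrict q (by omega) hq2
        · have : q = n+1 := by omega
          rw [this]; omega

lemma freeX_exists {w : List Bool} (hw : 0 < hgt w w.length) : ∃ p, FreeX w p := by
  obtain ⟨m, hm, hmin, hstrict⟩ := exists_last_argmin (hgt w) w.length
  have hmn : m ≠ w.length := by
    intro he; subst he
    have h0 := hmin 0 (Nat.zero_le _)
    rw [hgt_zero] at h0
    exact absurd hw (by omega)
  have hmlt : m < w.length := by omega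
  refine ⟨m, ?_, ?_⟩
  · by_contra hc
    have hfalse : w.getD m false = false := by
      cases h : w.getD m false
      · rfl
      · exact absurd h hc
    have hstep := hgt_succ w hmlt
    rw [hfalse] at hstep
    simp at hstep
    have h2 := hmin (m+1) (by omega)
    omega
  · exact fun q hq hq2 => hstrict q hq hq2

/-- take of set, when index is beyond the take -/
lemma take_set_of_le {w : List Bool} {p q : ℕ} (b : Bool) (h : q ≤ p) :
    (w.set p b).take q = w.take q := by
  apply List.ext_getElem
  · simp
  · intro i h1 h2
    have hi : i < q := by simp at h1; omega
    rw [List.getElem_take, List.getElem_take]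
    rw [List.getElem_set_ne (by omega)]

lemma take_set_of_gt {w : List Bool} {p q : ℕ} (b : Bool) (h : p < q) :
    (w.set p b).take q = (w.take q).set p b := by
  apply List.ext_getElem
  · simp
  · intro i h1 h2
    rw [List.getElem_take]
    by_cases hip : i = p
    · subst hip
      rw [List.getElem_set_self, List.getElem_set_self]
    · rw [List.getElem_set_ne (fun he => hip he.symm), List.getElem_set_ne (fun he => hip he.symm),
        List.getElem_take]

lemma count_set_true_false {w : List Bool} {p : ℕ} (hp : p < w.length) (hw : w[p] = true) :
    ((w.set p false).count true : ℤ) = (w.count true : ℤ) - 1 ∧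
    ((w.set p false).count false : ℤ) = (w.count false : ℤ) + 1 := by
  have hset : w.set p false = w.take p ++ false :: w.drop (p+1) := by
    rw [List.set_eq_take_append_cons_drop, if_pos hp]
  have hw2 : w = w.take p ++ w[p] :: w.drop (p+1) := by
    conv_lhs => rw [← List.take_append_drop p w]
    rw [← List.getElem_cons_drop hp]
  constructor
  · rw [hset]; conv_rhs => rw [hw2]
    simp [List.count_append, hw]; ring
  · rw [hset]; conv_rhs => rw [hw2]
    simp [List.count_append, hw]; ring

lemma hgt_set_le {w : List Bool} {p q : ℕ} (b : Bool) (h : q ≤ p) :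
    hgt (w.set p b) q = hgt w q := by
  unfold hgt; rw [take_set_of_le b h]

lemma hgt_set_gt {w : List Bool} {p q : ℕ} (hp : p < w.length) (hw : w.getD p false = true)
    (h : p < q) : hgt (w.set p false) q = hgt w q - 2 := by
  unfold hgt
  rw [take_set_of_gt false h]
  have hlt : p < (w.take q).length := by
    rw [List.length_take]; omega
  have hwp : (w.take q)[p] = true := by
    rw [List.getElem_take]
    rwa [List.getD_eq_getElem w false hp] at hw
  obtain ⟨h1, h2⟩ := count_set_true_false hlt hwp
  rw [h1, h2]; ring


lemma freeX_min_prefix {w : List Bool} {p : ℕ} (hp : FreeX w p)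
    (hmin : ∀ p' < p, ¬ FreeX w p') : ∀ q ≤ p, hgt w p ≤ hgt w q := by
  by_contra hc
  push_neg at hc
  obtain ⟨q1, hq1le, hq1⟩ := hc
  obtain ⟨m, hm, hminm, hstrict⟩ := exists_last_argmin (hgt w) p
  have hmv : hgt w m < hgt w p := lt_of_le_of_lt (hminm q1 hq1le) hq1
  have hmp : m < p := by
    rcases Nat.lt_or_ge m p with h | h
    · exact h
    · exfalso; have : m = p := by omega
      rw [this] at hmv; omega
  have hplen : p < w.length := hp.lt_length
  apply hmin m hmp
  constructor
  · by_contra hc2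
    have hfalse : w.getD m false = false := by
      cases h : w.getD m false
      · rfl
      · exact absurd h hc2
    have hstep := hgt_succ w (show m < w.length by omega)
    rw [hfalse] at hstep
    simp at hstep
    have h2 := hminm (m+1) (by omega)
    omega
  · intro q hq hq2
    rcases le_or_gt q p with h | h
    · exact hstrict q h hq2
    · exact lt_trans hmv (hp.2 q hq h)

lemma flip_freeY {w : List Bool} {p : ℕ} (hp : FreeX w p)
    (hmin : ∀ p' < p, ¬ FreeX w p') : FreeY (w.set p false) p := by
  have hplen : p < w.length := hp.lt_length
  refine ⟨by simpa using hplen, ?_, ?_⟩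
  · rw [List.getD_eq_getElem _ false (by simpa using hplen), List.getElem_set_self]
  · intro q hq
    rw [hgt_set_le false (le_refl p), hgt_set_le false hq]
    exact freeX_min_prefix hp hmin q hq

lemma flip_freeY_le {w : List Bool} {p p' : ℕ} (hp : FreeX w p)
    (hp' : FreeY (w.set p false) p') : p' ≤ p := by
  by_contra hc
  push_neg at hc  -- p < p'
  have hplen : p < w.length := hp.lt_length
  have hp'len : p' < w.length := by have := hp'.1; simpa using this
  have hletter : w.getD p' false = false := by
    have := hp'.2.1
    rw [List.getD_eq_getElem _ false (by simpa using hp'len),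
      List.getElem_set_ne (by omega)] at this
    rwa [List.getD_eq_getElem _ false hp'len]
  have hA : hgt (w.set p false) p' ≤ hgt (w.set p false) (p+1) := hp'.2.2 (p+1) (by omega)
  have e1 : hgt (w.set p false) (p+1) = hgt w (p+1) - 2 := hgt_set_gt hplen hp.1 (by omega)
  have e2 : hgt (w.set p false) p' = hgt w p' - 2 := hgt_set_gt hplen hp.1 hc
  have e3 : hgt w (p+1) = hgt w p + 1 := by
    have := hgt_succ w hplen
    rw [hp.1] at this; simp at this; omega
  have hB : hgt w p < hgt w (p'+1) := hp.2 (p'+1) (by omega) (by omega)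
  have e4 : hgt w (p'+1) = hgt w p' - 1 := by
    have := hgt_succ w hp'len
    rw [hletter] at this; simp at this; omega
  omega


/-! ### Tableaux -/

def Cond (N : List ℕ) (f : ℕ → ℕ) (T : ℕ → ℕ → ℕ) : Prop :=
  (∀ i j : ℕ, T i j ≠ 0 ↔ j < N.getD i 0) ∧
  (∀ i j1 j2 : ℕ, j1 ≤ j2 → j2 < N.getD i 0 → T i j1 ≤ T i j2) ∧
  (∀ i1 i2 j : ℕ, i1 < i2 → j < N.getD i2 0 → T i1 j < T i2 j) ∧
  (∀ k : ℕ, 0 < k →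
    Nat.card {p : ℕ × ℕ // p.2 < N.getD p.1 0 ∧ T p.1 p.2 = k} = f (k - 1))

noncomputable def kostkaF (N : List ℕ) (f : ℕ → ℕ) : ℕ :=
  Nat.card {T : ℕ → ℕ → ℕ // Cond N f T}

lemma getD_le_sum (N : List ℕ) (i : ℕ) : N.getD i 0 ≤ N.sum := by
  induction N generalizing i with
  | nil => simp
  | cons a l ih =>
    cases i with
    | zero => simp
    | succ i =>
      simp only [List.getD_cons_succ, List.sum_cons]
      exact le_trans (ih i) (Nat.le_add_left _ _)

lemma lt_length_of_getD_pos {N : List ℕ} {i : ℕ} (h : 0 < N.getD i 0) : i < N.length := by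
  by_contra hc
  rw [List.getD_eq_default _ _ (le_of_not_gt hc)] at h
  omega

lemma shape_finite (N : List ℕ) : {p : ℕ × ℕ | p.2 < N.getD p.1 0}.Finite := by
  apply Set.Finite.subset ((Set.finite_Iio N.length).prod (Set.finite_Iio N.sum))
  rintro ⟨i, j⟩ hij
  simp only [Set.mem_setOf_eq] at hij
  simp only [Set.mem_prod, Set.mem_Iio]
  exact ⟨lt_length_of_getD_pos (by omega), lt_of_lt_of_le hij (getD_le_sum N i)⟩

lemma Sk_finite (N : List ℕ) (T : ℕ → ℕ → ℕ) (k : ℕ) :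
    {p : ℕ × ℕ | p.2 < N.getD p.1 0 ∧ T p.1 p.2 = k}.Finite :=
  Set.Finite.subset (shape_finite N) (fun p hp => hp.1)

lemma entry_le {N : List ℕ} {f : ℕ → ℕ} {T : ℕ → ℕ → ℕ} (hT : Cond N f T) {B : ℕ}
    (hB : ∀ k, B ≤ k → f k = 0) {i j : ℕ} (hin : j < N.getD i 0) : T i j ≤ B := by
  by_contra hc
  push_neg at hc
  set k := T i j with hk
  have hcard := hT.2.2.2 k (by omega)
  have hzero : f (k - 1) = 0 := hB _ (by omega)
  rw [hzero] at hcard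
  have hfin : ({p : ℕ × ℕ | p.2 < N.getD p.1 0 ∧ T p.1 p.2 = k}).Finite := Sk_finite N T k
  have : Nonempty {p : ℕ × ℕ // p.2 < N.getD p.1 0 ∧ T p.1 p.2 = k} :=
    ⟨⟨(i, j), hin, rfl⟩⟩
  have hpos : 0 < Nat.card {p : ℕ × ℕ // p.2 < N.getD p.1 0 ∧ T p.1 p.2 = k} :=
    @Nat.card_pos _ this hfin.to_subtype
  omega

lemma cond_finite (N : List ℕ) (f : ℕ → ℕ) (B : ℕ) (hB : ∀ k, B ≤ k → f k = 0) :
    Finite {T : ℕ → ℕ → ℕ // Cond N f T} := by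
  let φ : {T : ℕ → ℕ → ℕ // Cond N f T} → (Fin N.length × Fin (N.sum + 1) → Fin (B + 1)) :=
    fun s q => ⟨min (s.1 q.1.1 q.2.1) B, by omega⟩
  apply Finite.of_injective φ
  rintro ⟨T1, h1⟩ ⟨T2, h2⟩ he
  ext i j
  show T1 i j = T2 i j
  by_cases hin : j < N.getD i 0
  · have hi : i < N.length := lt_length_of_getD_pos (by omega)
    have hj : j < N.sum + 1 := by
      have := getD_le_sum N i; omega
    have := congrFun he (⟨i, hi⟩, ⟨j, hj⟩)
    simp only [φ, Fin.mk.injEq] at this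
    have b1 : T1 i j ≤ B := entry_le h1 hB hin
    have b2 : T2 i j ≤ B := entry_le h2 hB hin
    omega
  · have z1 : T1 i j = 0 := by
      by_contra hc; exact hin ((h1.1 i j).mp hc)
    have z2 : T2 i j = 0 := by
      by_contra hc; exact hin ((h2.1 i j).mp hc)
    rw [z1, z2]

/-! ### cells and words of a tableau -/

def PairedBelow (N : List ℕ) (t : ℕ) (T : ℕ → ℕ → ℕ) (p : ℕ × ℕ) : Prop :=
  p.2 < N.getD (p.1+1) 0 ∧ T (p.1+1) p.2 = t+2

def PairedAbove (t : ℕ) (T : ℕ → ℕ → ℕ) (p : ℕ × ℕ) : Prop :=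
  1 ≤ p.1 ∧ T (p.1-1) p.2 = t+1

def UnpXY (N : List ℕ) (t : ℕ) (T : ℕ → ℕ → ℕ) (p : ℕ × ℕ) : Prop :=
  (T p.1 p.2 = t+1 ∧ ¬ PairedBelow N t T p) ∨ (T p.1 p.2 = t+2 ∧ ¬ PairedAbove t T p)

def ordC (a b : ℕ × ℕ) : Prop := a.1 < b.1 ∨ (a.1 = b.1 ∧ b.2 < a.2)

def cellList (N : List ℕ) : List (ℕ × ℕ) :=
  (List.range N.length).flatMap fun r =>
    ((List.range (N.getD r 0)).reverse).map fun c => (r, c)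

lemma mem_cellList {N : List ℕ} {p : ℕ × ℕ} :
    p ∈ cellList N ↔ p.2 < N.getD p.1 0 := by
  constructor
  · intro h
    rw [cellList, List.mem_flatMap] at h
    obtain ⟨r, _, hm⟩ := h
    rw [List.mem_map] at hm
    obtain ⟨c, hc, rfl⟩ := hm
    rw [List.mem_reverse, List.mem_range] at hc
    exact hc
  · intro h
    rw [cellList, List.mem_flatMap]
    refine ⟨p.1, ?_, ?_⟩
    · rw [List.mem_range]
      exact lt_length_of_getD_pos (by omega)
    · rw [List.mem_map]
      exact ⟨p.2, by rw [List.mem_reverse, List.mem_range]; exact h, rfl⟩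

lemma cellList_pairwise (N : List ℕ) : (cellList N).Pairwise ordC := by
  rw [cellList, List.pairwise_flatMap]
  constructor
  · intro r _
    rw [List.pairwise_map, List.pairwise_reverse]
    exact List.Pairwise.imp (fun h => Or.inr ⟨rfl, h⟩) List.pairwise_lt_range
  · apply List.Pairwise.imp ?_ List.pairwise_lt_range
    intro a b hab x hx y hy
    rw [List.mem_map] at hx hy
    obtain ⟨c1, _, rfl⟩ := hx
    obtain ⟨c2, _, rfl⟩ := hy
    exact Or.inl hab

lemma cellList_nodup (N : List ℕ) : (cellList N).Nodup :=
  List.Pairwise.imp (fun h => by rintro rfl; unfold ordC at h; omega) (cellList_pairwise N)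

open scoped Classical in
noncomputable def uList (N : List ℕ) (t : ℕ) (T : ℕ → ℕ → ℕ) : List (ℕ × ℕ) :=
  (cellList N).filter fun p => decide (UnpXY N t T p)

open scoped Classical in
noncomputable def word (N : List ℕ) (t : ℕ) (T : ℕ → ℕ → ℕ) : List Bool :=
  (uList N t T).map fun p => decide (T p.1 p.2 = t+1)

lemma mem_uList {N : List ℕ} {t : ℕ} {T : ℕ → ℕ → ℕ} {p : ℕ × ℕ} :
    p ∈ uList N t T ↔ p.2 < N.getD p.1 0 ∧ UnpXY N t T p := by
  classical
  rw [uList, List.mem_filter, mem_cellList]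
  simp

lemma word_length {N : List ℕ} {t : ℕ} {T : ℕ → ℕ → ℕ} :
    (word N t T).length = (uList N t T).length := List.length_map _

lemma uList_nodup (N : List ℕ) (t : ℕ) (T : ℕ → ℕ → ℕ) : (uList N t T).Nodup := by
  classical
  exact (cellList_nodup N).filter _

lemma uList_pairwise (N : List ℕ) (t : ℕ) (T : ℕ → ℕ → ℕ) : (uList N t T).Pairwise ordC := by
  classical
  exact (cellList_pairwise N).filter _

/-- set cardinality as countP over an enumerating nodup list -/
lemma ncard_eq_countP (q : ℕ × ℕ → Bool) (l : List (ℕ × ℕ)) (hnd : l.Nodup)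
    (S : Set (ℕ × ℕ)) (hS : ∀ p, p ∈ S ↔ p ∈ l ∧ q p = true) :
    S.ncard = l.countP q := by
  classical
  have hset : S = ↑((l.filter q).toFinset) := by
    ext p
    rw [Finset.mem_coe, List.mem_toFinset, List.mem_filter, hS p]
  rw [hset, Set.ncard_coe_finset, List.toFinset_card_of_nodup (hnd.filter _),
    ← List.countP_eq_length_filter]

lemma natCard_eq_ncard (P : ℕ × ℕ → Prop) :
    Nat.card {p : ℕ × ℕ // P p} = {p : ℕ × ℕ | P p}.ncard :=
  Nat.card_coe_set_eq _

lemma prodshift_inj : Function.Injective (fun p : ℕ × ℕ => (p.1 + 1, p.2)) := by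
  rintro ⟨a1, a2⟩ ⟨b1, b2⟩ h
  simp only [Prod.mk.injEq] at h
  exact Prod.ext (by omega) h.2

lemma hgt_word_pos {N : List ℕ} {f : ℕ → ℕ} {t : ℕ} {T : ℕ → ℕ → ℕ}
    (hN : Antitone fun k => N.getD k 0) (hT : Cond N f T) (hlt : f (t+1) < f t) :
    0 < hgt (word N t T) (word N t T).length := by
  classical
  have hct : (word N t T).count true
      = (uList N t T).countP (fun p => decide (T p.1 p.2 = t+1)) := by
    rw [word, List.count_eq_countP, List.countP_map]
    exact List.countP_congr (fun p _ => by simp)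
  have hcf : (word N t T).count false
      = (uList N t T).countP (fun p => decide (T p.1 p.2 = t+2)) := by
    rw [word, List.count_eq_countP, List.countP_map]
    apply List.countP_congr
    intro p hp
    have hmem := mem_uList.mp hp
    rcases hmem.2 with ⟨h1, _⟩ | ⟨h2, _⟩
    · simp [Function.comp, h1]
    · simp [Function.comp, h2]
  set SX : Set (ℕ × ℕ) :=
    {p | p.2 < N.getD p.1 0 ∧ T p.1 p.2 = t+1 ∧ ¬ PairedBelow N t T p} with hSX
  set SY : Set (ℕ × ℕ) :=
    {p | p.2 < N.getD p.1 0 ∧ T p.1 p.2 = t+2 ∧ ¬ PairedAbove t T p} with hSY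
  set PX : Set (ℕ × ℕ) :=
    {p | p.2 < N.getD p.1 0 ∧ T p.1 p.2 = t+1 ∧ PairedBelow N t T p} with hPX
  set PY : Set (ℕ × ℕ) :=
    {p | p.2 < N.getD p.1 0 ∧ T p.1 p.2 = t+2 ∧ PairedAbove t T p} with hPY
  have haX : SX.ncard = (uList N t T).countP (fun p => decide (T p.1 p.2 = t+1)) := by
    apply ncard_eq_countP _ _ (uList_nodup N t T)
    intro p
    rw [hSX, Set.mem_setOf_eq, mem_uList]
    simp only [decide_eq_true_eq]
    constructor
    · rintro ⟨hin, hval, hnp⟩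
      exact ⟨⟨hin, Or.inl ⟨hval, hnp⟩⟩, hval⟩
    · rintro ⟨⟨hin, hxy⟩, hval⟩
      rcases hxy with ⟨_, hnp⟩ | ⟨h2, _⟩
      · exact ⟨hin, hval, hnp⟩
      · omega
  have haY : SY.ncard = (uList N t T).countP (fun p => decide (T p.1 p.2 = t+2)) := by
    apply ncard_eq_countP _ _ (uList_nodup N t T)
    intro p
    rw [hSY, Set.mem_setOf_eq, mem_uList]
    simp only [decide_eq_true_eq]
    constructor
    · rintro ⟨hin, hval, hnp⟩
      exact ⟨⟨hin, Or.inr ⟨hval, hnp⟩⟩, hval⟩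
    · rintro ⟨⟨hin, hxy⟩, hval⟩
      rcases hxy with ⟨h1, _⟩ | ⟨_, hnp⟩
      · omega
      · exact ⟨hin, hval, hnp⟩
  have hXcardn : ({p : ℕ × ℕ | p.2 < N.getD p.1 0 ∧ T p.1 p.2 = t+1}).ncard = f t := by
    rw [← natCard_eq_ncard]
    have := hT.2.2.2 (t+1) (by omega)
    simpa using this
  have hYcardn : ({p : ℕ × ℕ | p.2 < N.getD p.1 0 ∧ T p.1 p.2 = t+2}).ncard = f (t+1) := by
    rw [← natCard_eq_ncard]
    have := hT.2.2.2 (t+2) (by omega)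
    simpa using this
  have hsplitX : {p : ℕ × ℕ | p.2 < N.getD p.1 0 ∧ T p.1 p.2 = t+1} = PX ∪ SX := by
    ext p
    rw [hPX, hSX]
    simp only [Set.mem_setOf_eq, Set.mem_union]
    by_cases hpb : PairedBelow N t T p <;> tauto
  have hsplitY : {p : ℕ × ℕ | p.2 < N.getD p.1 0 ∧ T p.1 p.2 = t+2} = PY ∪ SY := by
    ext p
    rw [hPY, hSY]
    simp only [Set.mem_setOf_eq, Set.mem_union]
    by_cases hpb : PairedAbove t T p <;> tauto
  have hfinX : {p : ℕ × ℕ | p.2 < N.getD p.1 0 ∧ T p.1 p.2 = t+1}.Finite := Sk_finite N T (t+1)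
  have hfinY : {p : ℕ × ℕ | p.2 < N.getD p.1 0 ∧ T p.1 p.2 = t+2}.Finite := Sk_finite N T (t+2)
  have hfPX : PX.Finite := hfinX.subset (by rw [hsplitX]; exact Set.subset_union_left)
  have hfSX : SX.Finite := hfinX.subset (by rw [hsplitX]; exact Set.subset_union_right)
  have hfPY : PY.Finite := hfinY.subset (by rw [hsplitY]; exact Set.subset_union_left)
  have hfSY : SY.Finite := hfinY.subset (by rw [hsplitY]; exact Set.subset_union_right)
  have hdX : Disjoint PX SX := by
    rw [Set.disjoint_left]
    rintro p ⟨_, _, hpb⟩ ⟨_, _, hnp⟩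
    exact hnp hpb
  have hdY : Disjoint PY SY := by
    rw [Set.disjoint_left]
    rintro p ⟨_, _, hpb⟩ ⟨_, _, hnp⟩
    exact hnp hpb
  have heqX : f t = PX.ncard + SX.ncard := by
    rw [← hXcardn, hsplitX, Set.ncard_union_eq hdX hfPX hfSX]
  have heqY : f (t+1) = PY.ncard + SY.ncard := by
    rw [← hYcardn, hsplitY, Set.ncard_union_eq hdY hfPY hfSY]
  have himg : PY = (fun p : ℕ × ℕ => (p.1 + 1, p.2)) '' PX := by
    ext q
    rw [hPY, Set.mem_setOf_eq]
    constructor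
    · rintro ⟨hin, hval, h1, habove⟩
      refine ⟨(q.1 - 1, q.2), ?_, ?_⟩
      · rw [hPX, Set.mem_setOf_eq]
        refine ⟨?_, habove, ?_, ?_⟩
        · exact lt_of_lt_of_le hin (hN (show q.1 - 1 ≤ q.1 by omega))
        · show q.2 < N.getD (q.1 - 1 + 1) 0
          rw [show q.1 - 1 + 1 = q.1 by omega]
          exact hin
        · show T (q.1 - 1 + 1) q.2 = t + 2
          rw [show q.1 - 1 + 1 = q.1 by omega]
          exact hval
      · show (q.1 - 1 + 1, q.2) = q
        rw [show q.1 - 1 + 1 = q.1 by omega]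
    · rintro ⟨p, hp, rfl⟩
      rw [hPX, Set.mem_setOf_eq] at hp
      obtain ⟨hin, hval, hbs, hbv⟩ := hp
      refine ⟨hbs, hbv, ?_, ?_⟩
      · show 1 ≤ p.1 + 1
        omega
      · show T (p.1 + 1 - 1) p.2 = t + 1
        simpa using hval
  have hPeq : PY.ncard = PX.ncard := by
    rw [himg, Set.ncard_image_of_injective _ prodshift_inj]
  have hab : SY.ncard < SX.ncard := by omega
  unfold hgt
  rw [List.take_length, hct, hcf, ← haX, ← haY]
  omega

open scoped Classical in
noncomputable def cellStar (N : List ℕ) (t : ℕ) (T : ℕ → ℕ → ℕ) : ℕ × ℕ :=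
  if h : ∃ p, FreeX (word N t T) p then (uList N t T).getD (Nat.find h) (0, 0) else (0, 0)

def updT (T : ℕ → ℕ → ℕ) (p₀ : ℕ × ℕ) (v : ℕ) : ℕ → ℕ → ℕ :=
  fun i j => if i = p₀.1 ∧ j = p₀.2 then v else T i j

lemma updT_self (T : ℕ → ℕ → ℕ) (p₀ : ℕ × ℕ) (v : ℕ) : updT T p₀ v p₀.1 p₀.2 = v := by
  simp [updT]

lemma updT_ne (T : ℕ → ℕ → ℕ) (p₀ : ℕ × ℕ) (v : ℕ) {i j : ℕ} (h : ¬(i = p₀.1 ∧ j = p₀.2)) :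
    updT T p₀ v i j = T i j := by
  simp only [updT, if_neg h]

lemma word_getD {N : List ℕ} {t : ℕ} {T : ℕ → ℕ → ℕ} {p : ℕ} (hp : p < (uList N t T).length) :
    (word N t T).getD p false
      = decide (T ((uList N t T)[p]).1 ((uList N t T)[p]).2 = t+1) := by
  classical
  rw [word, List.getD_eq_getElem?_getD, List.getElem?_map,
    List.getElem?_eq_getElem hp]
  rfl

lemma star_basic {N : List ℕ} {f : ℕ → ℕ} {t : ℕ} {T : ℕ → ℕ → ℕ}
    (hN : Antitone fun k => N.getD k 0) (hT : Cond N f T) (hlt : f (t+1) < f t) :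
    ∃ ps : ℕ, ∃ hps : ps < (uList N t T).length,
      cellStar N t T = (uList N t T)[ps] ∧
      FreeX (word N t T) ps ∧ (∀ p' < ps, ¬ FreeX (word N t T) p') ∧
      T ((uList N t T)[ps]).1 ((uList N t T)[ps]).2 = t+1 ∧
      ((uList N t T)[ps]).2 < N.getD ((uList N t T)[ps]).1 0 ∧
      ¬ PairedBelow N t T ((uList N t T)[ps]) ∧
      (∀ j2, ((uList N t T)[ps]).2 < j2 → j2 < N.getD ((uList N t T)[ps]).1 0 →
        t+2 ≤ T ((uList N t T)[ps]).1 j2) := by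
  classical
  have hex : ∃ p, FreeX (word N t T) p := freeX_exists (hgt_word_pos hN hT hlt)
  have hfx : FreeX (word N t T) (Nat.find hex) := Nat.find_spec hex
  have hmin : ∀ p' < Nat.find hex, ¬ FreeX (word N t T) p' := fun p' h => Nat.find_min hex h
  have hlen : Nat.find hex < (uList N t T).length := by
    have := hfx.lt_length; rwa [word_length] at this
  obtain ⟨cs, hcsdef⟩ : ∃ cs, (uList N t T)[Nat.find hex]'hlen = cs := ⟨_, rfl⟩
  refine ⟨Nat.find hex, hlen, ?_, hfx, hmin, ?_⟩
  · rw [cellStar, dif_pos hex, List.getD_eq_getElem _ _ hlen]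
  rw [hcsdef]
  have hletter : T cs.1 cs.2 = t + 1 := by
    have h1 := hfx.1
    rw [word_getD hlen, decide_eq_true_eq, hcsdef] at h1
    exact h1
  have hmem : cs ∈ uList N t T := by
    rw [← hcsdef]; exact List.getElem_mem _
  have hmem2 := mem_uList.mp hmem
  have hin : cs.2 < N.getD cs.1 0 := hmem2.1
  have hunp : ¬ PairedBelow N t T cs := by
    rcases hmem2.2 with ⟨_, h⟩ | ⟨h2, _⟩
    · exact h
    · rw [hletter] at h2; omega
  have hnright : ∀ _hj : cs.2 + 1 < N.getD cs.1 0, T cs.1 (cs.2+1) ≠ t+1 := by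
    intro hj heq
    have hq0unp : ¬ PairedBelow N t T (cs.1, cs.2+1) := by
      rintro ⟨hbs, hbv⟩
      have hbs' : cs.2 + 1 < N.getD (cs.1 + 1) 0 := hbs
      have hbv' : T (cs.1 + 1) (cs.2 + 1) = t + 2 := hbv
      have hcin : cs.2 < N.getD (cs.1+1) 0 := by omega
      have h3 := hT.2.2.1 cs.1 (cs.1+1) cs.2 (by omega) hcin
      have h4 := hT.2.1 (cs.1+1) cs.2 (cs.2+1) (by omega) hbs'
      rw [hletter] at h3
      exact hunp ⟨hcin, by omega⟩
    have hq0mem : (cs.1, cs.2+1) ∈ uList N t T := by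
      rw [mem_uList]
      exact ⟨hj, Or.inl ⟨heq, hq0unp⟩⟩
    obtain ⟨p', hp'len, hget⟩ := List.mem_iff_getElem.mp hq0mem
    have hpair := List.pairwise_iff_getElem.mp (uList_pairwise N t T)
    have hp'lt : p' < Nat.find hex := by
      rcases lt_trichotomy p' (Nat.find hex) with h | h | h
      · exact h
      · exfalso
        subst h
        have heq2 : (cs.1, cs.2 + 1) = cs := hget.symm.trans hcsdef
        have := congrArg Prod.snd heq2
        simp at this
      · exfalso
        have ho := hpair (Nat.find hex) p' hlen hp'len h
        rw [hcsdef, hget] at ho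
        have ho' : cs.1 < cs.1 ∨ (cs.1 = cs.1 ∧ cs.2 + 1 < cs.2) := ho
        omega
    have hbetween : ∀ q', p' < q' → q' < Nat.find hex → False := by
      intro q' h1 h2
      have hq'len : q' < (uList N t T).length := by omega
      have o1 := hpair p' q' hp'len hq'len h1
      have o2 := hpair q' (Nat.find hex) hq'len hlen h2
      rw [hget] at o1
      rw [hcsdef] at o2
      have o1' : cs.1 < ((uList N t T)[q']'hq'len).1 ∨
          (cs.1 = ((uList N t T)[q']'hq'len).1 ∧ ((uList N t T)[q']'hq'len).2 < cs.2 + 1) := o1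
      have o2' : ((uList N t T)[q']'hq'len).1 < cs.1 ∨
          (((uList N t T)[q']'hq'len).1 = cs.1 ∧ cs.2 < ((uList N t T)[q']'hq'len).2) := o2
      omega
    have hps_eq : Nat.find hex = p' + 1 := by
      by_contra hne
      exact hbetween (p'+1) (by omega) (by omega)
    have hl' : (word N t T).getD p' false = true := by
      rw [word_getD hp'len, decide_eq_true_eq, hget]
      exact heq
    apply hmin p' hp'lt
    refine ⟨hl', ?_⟩
    intro q hq hq2
    have hstep : hgt (word N t T) (p'+1) = hgt (word N t T) p' + 1 := by
      have hs := hgt_succ (word N t T) (show p' < (word N t T).length by rw [word_length]; omega)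
      rw [hl'] at hs; simpa using hs
    rcases eq_or_lt_of_le (show p' + 1 ≤ q by omega) with h | h
    · rw [← h]; omega
    · have := hfx.2 q hq (by omega)
      rw [hps_eq] at this
      omega
  have hright : ∀ j2, cs.2 < j2 → j2 < N.getD cs.1 0 → t+2 ≤ T cs.1 j2 := by
    intro j2 hj2 hj2b
    have hcp1 : cs.2 + 1 < N.getD cs.1 0 := by omega
    have h5 := hT.2.1 cs.1 cs.2 (cs.2+1) (by omega) hcp1
    have h6 := hnright hcp1
    have h7 := hT.2.1 cs.1 (cs.2+1) j2 (by omega) hj2b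
    rw [hletter] at h5
    omega
  exact ⟨hletter, hin, hunp, hright⟩


lemma updT_cond {N : List ℕ} {f : ℕ → ℕ} {t : ℕ} {T : ℕ → ℕ → ℕ}
    (hN : Antitone fun k => N.getD k 0) (hT : Cond N f T) {k c : ℕ}
    (hin : c < N.getD k 0) (hval : T k c = t+1)
    (hunp : ¬ PairedBelow N t T (k, c))
    (hright : ∀ j2, c < j2 → j2 < N.getD k 0 → t+2 ≤ T k j2) :
    Cond N (fun k' => if k' = t then f t - 1 else if k' = t+1 then f (t+1) + 1 else f k')
      (updT T (k, c) (t+2)) := by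
  classical
  have hbelow_ne : ∀ i2, k < i2 → c < N.getD i2 0 → t + 2 < T i2 c := by
    intro i2 hki hci
    have h3 := hT.2.2.1 k i2 c hki hci
    rw [hval] at h3
    have hne : T i2 c ≠ t + 2 := by
      intro he
      rcases eq_or_lt_of_le (show k + 1 ≤ i2 by omega) with h | h
      · subst h
        refine hunp ?_
        unfold PairedBelow
        exact ⟨hci, he⟩
      · have hc1 : c < N.getD (k+1) 0 :=
          lt_of_lt_of_le hci (hN (show k + 1 ≤ i2 by omega))
        have h4 := hT.2.2.1 k (k+1) c (by omega) hc1
        have h5 := hT.2.2.1 (k+1) i2 c h hci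
        rw [hval] at h4
        omega
    omega
  refine ⟨?_, ?_, ?_, ?_⟩
  · intro i j
    by_cases hp : i = k ∧ j = c
    · obtain ⟨rfl, rfl⟩ := hp
      rw [show updT T (i, j) (t+2) i j = t+2 from updT_self T (i,j) _]
      constructor
      · intro _; exact hin
      · intro _; omega
    · rw [updT_ne T (k,c) _ hp]
      exact hT.1 i j
  · intro i j1 j2 hle hlt2
    by_cases h2 : i = k ∧ j2 = c
    · obtain ⟨rfl, rfl⟩ := h2
      rw [show updT T (i, j2) (t+2) i j2 = t+2 from updT_self T (i,j2) _]
      by_cases h1 : j1 = j2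
      · subst h1
        rw [show updT T (i, j1) (t+2) i j1 = t+2 from updT_self T (i,j1) _]
      · rw [updT_ne T (i,j2) _ (by tauto)]
        have := hT.2.1 i j1 j2 hle hlt2
        rw [hval] at this
        omega
    · by_cases h1 : i = k ∧ j1 = c
      · obtain ⟨rfl, rfl⟩ := h1
        rw [show updT T (i, j1) (t+2) i j1 = t+2 from updT_self T (i,j1) _]
        rw [updT_ne T (i,j1) _ (by tauto)]
        have hj2 : j1 < j2 := by
          rcases eq_or_lt_of_le hle with h | h
          · exact absurd ⟨rfl, h.symm⟩ h2
          · exact h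
        exact hright j2 hj2 hlt2
      · rw [updT_ne T (k,c) _ h1, updT_ne T (k,c) _ h2]
        exact hT.2.1 i j1 j2 hle hlt2
  · intro i1 i2 j hlt12 hj
    by_cases h2 : i2 = k ∧ j = c
    · obtain ⟨rfl, rfl⟩ := h2
      rw [show updT T (i2, j) (t+2) i2 j = t+2 from updT_self T (i2,j) _]
      rw [updT_ne T (i2,j) _ (by rintro ⟨rfl, -⟩; omega)]
      have := hT.2.2.1 i1 i2 j hlt12 hj
      rw [hval] at this
      omega
    · by_cases h1 : i1 = k ∧ j = c
      · obtain ⟨rfl, rfl⟩ := h1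
        rw [show updT T (i1, j) (t+2) i1 j = t+2 from updT_self T (i1,j) _]
        rw [updT_ne T (i1,j) _ (by rintro ⟨rfl, -⟩; omega)]
        exact hbelow_ne i2 hlt12 hj
      · rw [updT_ne T (k,c) _ h1, updT_ne T (k,c) _ h2]
        exact hT.2.2.1 i1 i2 j hlt12 hj
  · intro k' hk'
    have hbase : ∀ k'' , 0 < k'' → ({p : ℕ × ℕ | p.2 < N.getD p.1 0 ∧ T p.1 p.2 = k''}).ncard
        = f (k'' - 1) := by
      intro k'' h
      rw [← natCard_eq_ncard]
      exact hT.2.2.2 k'' h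
    rw [natCard_eq_ncard]
    by_cases hx : k' = t + 1
    · subst hx
      have hsets : {p : ℕ × ℕ | p.2 < N.getD p.1 0 ∧ updT T (k,c) (t+2) p.1 p.2 = t+1}
          = {p : ℕ × ℕ | p.2 < N.getD p.1 0 ∧ T p.1 p.2 = t+1} \ {(k, c)} := by
        ext p
        simp only [Set.mem_setOf_eq, Set.mem_diff, Set.mem_singleton_iff]
        by_cases hp : p = (k, c)
        · subst hp
          rw [show updT T (k, c) (t+2) (k,c).1 (k,c).2 = t+2 from updT_self T (k,c) _]
          constructor
          · rintro ⟨-, h⟩; omega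
          · rintro ⟨-, h⟩; exact absurd rfl h
        · have hp' : ¬(p.1 = k ∧ p.2 = c) := by
            intro hh; exact hp (Prod.ext hh.1 hh.2)
          rw [updT_ne T (k,c) _ hp']
          tauto
      rw [hsets, Set.ncard_diff_singleton_of_mem (show (k, c) ∈ {p : ℕ × ℕ | p.2 < N.getD p.1 0 ∧ T p.1 p.2 = t+1} from ⟨hin, hval⟩),
        hbase (t+1) (by omega)]
      show f (t + 1 - 1) - 1
        = if t + 1 - 1 = t then f t - 1 else if t + 1 - 1 = t+1 then f (t+1) + 1 else f (t+1-1)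
      rw [show t + 1 - 1 = t by omega, if_pos rfl]
    · by_cases hy : k' = t + 2
      · subst hy
        have hsets : {p : ℕ × ℕ | p.2 < N.getD p.1 0 ∧ updT T (k,c) (t+2) p.1 p.2 = t+2}
            = insert (k, c) {p : ℕ × ℕ | p.2 < N.getD p.1 0 ∧ T p.1 p.2 = t+2} := by
          ext p
          simp only [Set.mem_setOf_eq, Set.mem_insert_iff]
          by_cases hp : p = (k, c)
          · subst hp
            rw [show updT T (k, c) (t+2) (k,c).1 (k,c).2 = t+2 from updT_self T (k,c) _]
            exact ⟨fun _ => Or.inl rfl, fun _ => ⟨hin, rfl⟩⟩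
          · have hp' : ¬(p.1 = k ∧ p.2 = c) := by
              intro hh; exact hp (Prod.ext hh.1 hh.2)
            rw [updT_ne T (k,c) _ hp']
            constructor
            · exact fun h => Or.inr h
            · rintro (h | h)
              · exact absurd h hp
              · exact h
        have hnotmem : (k, c) ∉ {p : ℕ × ℕ | p.2 < N.getD p.1 0 ∧ T p.1 p.2 = t+2} := by
          rintro ⟨-, h⟩
          rw [show T (k,c).1 (k,c).2 = t+1 from hval] at h
          omega
        rw [hsets, Set.ncard_insert_of_notMem hnotmem (Sk_finite N T (t+2)),
          hbase (t+2) (by omega)]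
        show f (t + 2 - 1) + 1
          = if t + 2 - 1 = t then f t - 1 else if t + 2 - 1 = t+1 then f (t+1) + 1 else f (t+2-1)
        rw [show t + 2 - 1 = t + 1 by omega, if_neg (by omega), if_pos rfl]
      · have hsets : {p : ℕ × ℕ | p.2 < N.getD p.1 0 ∧ updT T (k,c) (t+2) p.1 p.2 = k'}
            = {p : ℕ × ℕ | p.2 < N.getD p.1 0 ∧ T p.1 p.2 = k'} := by
          ext p
          simp only [Set.mem_setOf_eq]
          by_cases hp : p = (k, c)
          · subst hp
            rw [show updT T (k, c) (t+2) (k,c).1 (k,c).2 = t+2 from updT_self T (k,c) _]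
            rw [show T (k,c).1 (k,c).2 = t+1 from hval]
            constructor
            · rintro ⟨-, h⟩; omega
            · rintro ⟨-, h⟩; omega
          · have hp' : ¬(p.1 = k ∧ p.2 = c) := by
              intro hh; exact hp (Prod.ext hh.1 hh.2)
            rw [updT_ne T (k,c) _ hp']
        rw [hsets, hbase k' hk']
        show f (k' - 1)
          = if k' - 1 = t then f t - 1 else if k' - 1 = t+1 then f (t+1) + 1 else f (k'-1)
        rw [if_neg (by omega), if_neg (by omega)]


lemma uList_updT {N : List ℕ} {f : ℕ → ℕ} {t : ℕ} {T : ℕ → ℕ → ℕ}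
    (hN : Antitone fun k => N.getD k 0) (hT : Cond N f T) {k c : ℕ}
    (hin : c < N.getD k 0) (hval : T k c = t+1)
    (hunp : ¬ PairedBelow N t T (k, c)) :
    uList N t (updT T (k, c) (t+2)) = uList N t T := by
  classical
  unfold uList
  apply List.filter_congr
  intro p hp
  have hinp : p.2 < N.getD p.1 0 := mem_cellList.mp hp
  rw [decide_eq_decide]
  by_cases hp0 : p = (k, c)
  · rw [hp0]
    have hv' : updT T (k, c) (t+2) (k, c).1 (k, c).2 = t+2 := updT_self T (k, c) _
    apply iff_of_true
    · refine Or.inr ⟨hv', ?_⟩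
      rintro ⟨hk1, habove⟩
      have hk1' : 1 ≤ k := hk1
      have habove' : updT T (k, c) (t+2) (k - 1) c = t + 1 := habove
      rw [updT_ne T (k, c) _ (by rintro ⟨hh1, -⟩; have : k - 1 = k := hh1; omega)] at habove'
      have h3 := hT.2.2.1 (k-1) k c (by omega) hin
      rw [habove', hval] at h3
      omega
    · exact Or.inl ⟨hval, hunp⟩
  · have hp' : ¬(p.1 = k ∧ p.2 = c) := by
      intro hh; exact hp0 (Prod.ext hh.1 hh.2)
    have e1 : updT T (k, c) (t+2) p.1 p.2 = T p.1 p.2 := updT_ne T (k,c) _ hp'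
    by_cases hA : p.1 + 1 = k ∧ p.2 = c
    · -- p is directly above the cell
      have hck : p.2 < N.getD k 0 := by rw [← hA.2] at hin; exact hin
      have h3 := hT.2.2.1 p.1 k p.2 (by omega) hck
      rw [show T k p.2 = t + 1 by rw [hA.2]; exact hval] at h3
      constructor
      · rintro (⟨h1, -⟩ | ⟨h2, -⟩)
        · rw [e1] at h1; omega
        · rw [e1] at h2; omega
      · rintro (⟨h1, -⟩ | ⟨h2, -⟩)
        · omega
        · omega
    · by_cases hB : p.1 = k + 1 ∧ p.2 = c
      · -- p is directly below the cell
        have hcp : c < N.getD (k+1) 0 := by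
          rw [← hB.1, ← hB.2]; exact hinp
        have h3 := hT.2.2.1 k (k+1) c (by omega) hcp
        rw [hval] at h3
        have hne2 : T (k+1) c ≠ t + 2 := by
          intro he
          exact hunp ⟨hcp, he⟩
        have hvp : t + 1 < T p.1 p.2 ∧ T p.1 p.2 ≠ t + 2 := by
          rw [hB.1, hB.2]; exact ⟨h3, hne2⟩
        constructor
        · rintro (⟨h1, -⟩ | ⟨h2, -⟩)
          · rw [e1] at h1; omega
          · rw [e1] at h2; exact absurd h2 hvp.2
        · rintro (⟨h1, -⟩ | ⟨h2, -⟩)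
          · omega
          · exact absurd h2 hvp.2
      · -- generic cell
        have e2 : updT T (k, c) (t+2) (p.1+1) p.2 = T (p.1+1) p.2 := by
          apply updT_ne
          intro hh
          exact hA ⟨hh.1, hh.2⟩
        have e3 : updT T (k, c) (t+2) (p.1-1) p.2 = T (p.1-1) p.2 := by
          apply updT_ne
          rintro ⟨hh1, hh2⟩
          rcases Nat.eq_zero_or_pos p.1 with h0 | h0
          · apply hp'
            constructor
            · omega
            · exact hh2
          · exact hB ⟨by omega, hh2⟩
        unfold UnpXY PairedBelow PairedAbove
        rw [e1, e2, e3]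

lemma word_updT {N : List ℕ} {t : ℕ} {T : ℕ → ℕ → ℕ} {k c : ℕ} {ps : ℕ}
    (huL : uList N t (updT T (k, c) (t+2)) = uList N t T)
    (hps : ps < (uList N t T).length)
    (hcell : (uList N t T)[ps] = (k, c)) :
    word N t (updT T (k, c) (t+2)) = (word N t T).set ps false := by
  classical
  apply List.ext_getElem?
  intro i
  rw [word, word, List.getElem?_map, huL]
  by_cases hips : i = ps
  · subst hips
    rw [List.getElem?_eq_getElem hps, hcell]
    have hlen2 : i < ((uList N t T).map fun p => decide (T p.1 p.2 = t+1)).length := by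
      rw [List.length_map]; exact hps
    rw [List.getElem?_set_self hlen2]
    have hv : updT T (k, c) (t+2) (k,c).1 (k,c).2 = t+2 := updT_self T (k,c) _
    simp [hv]
  · rw [List.getElem?_set_ne (fun h => hips h.symm), List.getElem?_map]
    rcases Nat.lt_or_ge i (uList N t T).length with h | h
    · rw [List.getElem?_eq_getElem h]
      have hne : (uList N t T)[i] ≠ (k, c) := by
        intro he
        apply hips
        exact (uList_nodup N t T).getElem_inj_iff.mp (he.trans hcell.symm)
      have hv : updT T (k, c) (t+2) ((uList N t T)[i]).1 ((uList N t T)[i]).2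
          = T ((uList N t T)[i]).1 ((uList N t T)[i]).2 :=
        updT_ne _ _ _ (fun hh => hne (Prod.ext hh.1 hh.2))
      simp [hv]
    · rw [List.getElem?_eq_none h]
      simp

open scoped Classical in
noncomputable def rawE (N : List ℕ) (t : ℕ) (T' : ℕ → ℕ → ℕ) : ℕ → ℕ → ℕ :=
  if h : ∃ p, FreeY (word N t T') p then
    updT T'
      ((uList N t T').getD (Nat.findGreatest (FreeY (word N t T')) (word N t T').length) (0,0))
      (t+1)
  else T'

open scoped Classical in
lemma rawE_updT {N : List ℕ} {f : ℕ → ℕ} {t : ℕ} {T : ℕ → ℕ → ℕ}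
    (hN : Antitone fun k => N.getD k 0) (hT : Cond N f T) (hlt : f (t+1) < f t) :
    rawE N t (updT T (cellStar N t T) (t+2)) = T := by
  obtain ⟨ps, hps, hcell, hfx, hmin, hval, hin, hunp, hright⟩ := star_basic hN hT hlt
  obtain ⟨k, c, hkc⟩ : ∃ k c, cellStar N t T = (k, c) :=
    ⟨(cellStar N t T).1, (cellStar N t T).2, rfl⟩
  rw [hkc]
  rw [hkc] at hcell
  have hcell' : (uList N t T)[ps] = (k, c) := hcell.symm
  have hink : c < N.getD k 0 := by rw [hcell'] at hin; exact hin
  have hvalk : T k c = t + 1 := by rw [hcell'] at hval; exact hval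
  have hunpk : ¬ PairedBelow N t T (k, c) := by rw [hcell'] at hunp; exact hunp
  have huL := uList_updT hN hT hink hvalk hunpk
  have hwd := word_updT huL hps hcell'
  have hfy : FreeY ((word N t T).set ps false) ps := flip_freeY hfx hmin
  have hley : ∀ p', FreeY ((word N t T).set ps false) p' → p' ≤ ps :=
    fun p' h => flip_freeY_le hfx h
  have hex' : ∃ p, FreeY (word N t (updT T (k, c) (t+2))) p := ⟨ps, by rw [hwd]; exact hfy⟩
  rw [rawE, dif_pos hex']
  have hG : Nat.findGreatest (FreeY (word N t (updT T (k, c) (t+2))))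
      (word N t (updT T (k, c) (t+2))).length = ps := by
    rw [hwd]
    have hlen' : ps ≤ ((word N t T).set ps false).length := by
      rw [List.length_set, word_length]; omega
    have le1 := Nat.le_findGreatest hlen' hfy
    have spec := Nat.findGreatest_spec hlen' hfy
    exact Nat.le_antisymm (hley _ spec) le1
  rw [hG, huL, List.getD_eq_getElem _ _ hps, hcell']
  funext i j
  by_cases hij : i = k ∧ j = c
  · obtain ⟨rfl, rfl⟩ := hij
    rw [show updT (updT T (i, j) (t+2)) (i, j) (t+1) i j = t+1 from updT_self _ (i,j) _]
    exact hvalk.symm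
  · rw [updT_ne _ (k,c) _ hij, updT_ne _ (k,c) _ hij]

theorem transfer_le (N : List ℕ) (hN : Antitone fun k => N.getD k 0) (f : ℕ → ℕ) (t B : ℕ)
    (hlt : f (t+1) < f t) (hB : ∀ k, B ≤ k → f k = 0) :
    kostkaF N f ≤ kostkaF N
      (fun k' => if k' = t then f t - 1 else if k' = t+1 then f (t+1) + 1 else f k') := by
  classical
  set f' := fun k' => if k' = t then f t - 1 else if k' = t+1 then f (t+1) + 1 else f k' with hf'
  have hB' : ∀ k, max B (t+2) ≤ k → f' k = 0 := by
    intro k hk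
    rw [hf']
    simp only
    rw [if_neg (by omega), if_neg (by omega)]
    exact hB k (by omega)
  haveI : Finite {T : ℕ → ℕ → ℕ // Cond N f' T} := cond_finite N f' _ hB'
  have hvalid : ∀ T : ℕ → ℕ → ℕ, Cond N f T → Cond N f' (updT T (cellStar N t T) (t+2)) := by
    intro T hT
    obtain ⟨ps, hps, hcell, hfx, hmin, hval, hin, hunp, hright⟩ := star_basic hN hT hlt
    rw [hcell]
    rw [hf']
    exact updT_cond hN hT hin hval hunp hright
  apply Nat.card_le_card_of_injective
    (fun s : {T : ℕ → ℕ → ℕ // Cond N f T} =>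
      (⟨updT s.1 (cellStar N t s.1) (t+2), hvalid s.1 s.2⟩ : {T : ℕ → ℕ → ℕ // Cond N f' T}))
  intro s1 s2 he
  apply Subtype.ext
  have h1 : rawE N t (updT s1.1 (cellStar N t s1.1) (t+2)) = s1.1 := rawE_updT hN s1.2 hlt
  have h2 : rawE N t (updT s2.1 (cellStar N t s2.1) (t+2)) = s2.1 := rawE_updT hN s2.2 hlt
  have he' := congrArg Subtype.val he
  simp only at he'
  rw [← h1, ← h2, he']


lemma sq_transfer_lt (a u : ℕ) : (a + 1 + u)^2 + (a + 1)^2 < (a + 2 + u)^2 + a^2 := by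
  have h1 : (a + 2 + u)^2 = (a + 1 + u)^2 + (2*a + 3 + 2*u) := by ring
  have h2 : (a + 1)^2 = a^2 + 2*a + 1 := by ring
  omega

lemma monoF (N : List ℕ) (n : ℕ) (hN : Antitone fun k => N.getD k 0) :
    ∀ s : ℕ, ∀ g m : ℕ → ℕ,
      (∀ k, g (k+1) ≤ g k) → (∀ k, m (k+1) ≤ m k) →
      (∀ k, n ≤ k → g k = 0) → (∀ k, n ≤ k → m k = 0) →
      (∑ k ∈ Finset.range n, g k = ∑ k ∈ Finset.range n, m k) →
      (∀ k, ∑ x ∈ Finset.range k, m x ≤ ∑ x ∈ Finset.range k, g x) →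
      (∑ k ∈ Finset.range n, (g k)^2 < s) →
      kostkaF N g ≤ kostkaF N m := by
  intro s
  induction s with
  | zero =>
    intro g m _ _ _ _ _ _ hmeas
    exact absurd hmeas (by omega)
  | succ s ih =>
    intro g m hg hm hgs hms hsum hdom hmeas
    by_cases hpt : ∀ k, g k = m k
    · exact le_of_eq (congrArg (kostkaF N) (funext hpt))
    · push_neg at hpt
      classical
      have hi : g (Nat.find hpt) ≠ m (Nat.find hpt) := Nat.find_spec hpt
      set i := Nat.find hpt with hidef
      have hieq : ∀ k < i, g k = m k := by
        intro k hk
        have := Nat.find_min hpt hk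
        omega
      have hpre : ∀ K ≤ i, ∑ k ∈ Finset.range K, m k = ∑ k ∈ Finset.range K, g k := by
        intro K hK
        apply Finset.sum_congr rfl
        intro k hk
        rw [Finset.mem_range] at hk
        exact (hieq k (by omega)).symm
      have hmi : m i < g i := by
        have h1 := hdom (i+1)
        rw [Finset.sum_range_succ, Finset.sum_range_succ, hpre i le_rfl] at h1
        omega
      have hin : i < n := by
        by_contra hc
        push_neg at hc
        have h1 := hgs i hc
        have h2 := hms i hc
        omega
      have hj : ∃ k, g k < m k := by
        by_contra hc
        push_neg at hc
        have hstrict : ∑ k ∈ Finset.range n, m k < ∑ k ∈ Finset.range n, g k :=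
          Finset.sum_lt_sum (fun k _ => hc k) ⟨i, Finset.mem_range.mpr hin, hmi⟩
        omega
      have hjs : g (Nat.find hj) < m (Nat.find hj) := Nat.find_spec hj
      set j := Nat.find hj with hjdef
      have hjmin : ∀ k < j, ¬ g k < m k := fun k hk => Nat.find_min hj hk
      have hij : i < j := by
        rcases lt_trichotomy i j with h | h | h
        · exact h
        · exfalso; rw [← h] at hjs; omega
        · exfalso
          have := hieq j (by omega)
          omega
      have hga : Antitone g := antitone_nat_of_succ_le hg
      have hma : Antitone m := antitone_nat_of_succ_le hm
      have hjn : j < n := by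
        by_contra hc
        push_neg at hc
        have h1 := hgs j hc
        have h2 := hms j hc
        omega
      have hmj : m j ≤ m i := hma (le_of_lt hij)
      have hvw : g j + 2 ≤ g i := by omega
      have hgi_pos : 1 ≤ g i := by omega
      have hp_le : i ≤ n := le_of_lt hin
      set p := Nat.findGreatest (fun r => g r = g i) n with hpdef
      have hp_ge : i ≤ p := Nat.le_findGreatest (P := fun r => g r = g i) hp_le rfl
      have hp_spec : g p = g i := Nat.findGreatest_spec (P := fun r => g r = g i) hp_le rfl
      have hp_lt_n : p < n := by
        by_contra hc
        push_neg at hc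
        have hple : p ≤ n := Nat.findGreatest_le n
        have hpn : p = n := by omega
        rw [hpn, hgs n le_rfl] at hp_spec
        omega
      have hp_succ : g (p+1) < g i := by
        by_cases he : p + 1 ≤ n
        · have hnp : ¬ g (p+1) = g i :=
            Nat.findGreatest_is_greatest (P := fun r => g r = g i) (show p < p+1 by omega) he
          have hle := hg p
          rw [hp_spec] at hle
          omega
        · have h0 : g (p+1) = 0 := hgs (p+1) (by omega)
          omega
      have hq_ex : ∃ r, g r = g j := ⟨j, rfl⟩
      have hq_spec : g (Nat.find hq_ex) = g j := Nat.find_spec hq_ex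
      set q := Nat.find hq_ex with hqdef
      have hq_le : q ≤ j := Nat.find_min' hq_ex rfl
      have hq_gt : ∀ r < q, g j < g r := by
        intro r hr
        have hne : g r ≠ g j := Nat.find_min hq_ex hr
        have hge : g q ≤ g r := hga (by omega)
        rw [hq_spec] at hge
        omega
      have hpq : p < q := by
        by_contra hc
        push_neg at hc
        have := hga hc
        rw [hp_spec, hq_spec] at this
        omega
      have hqn : q < n := by omega
      have hchain : ∀ d, 1 ≤ d → p + d ≤ q →
          kostkaF N g ≤ kostkaF N (fun k => if k = p then g i - 1
            else if k = p + d then g (p + d) + 1 else g k) := by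
        intro d
        induction d with
        | zero => omega
        | succ d ihd =>
          intro h1 h2
          by_cases hd0 : d = 0
          · subst hd0
            have htr := transfer_le N hN g p n (by rw [hp_spec]; exact hp_succ) hgs
            have hfun : (fun k' => if k' = p then g p - 1
                else if k' = p + 1 then g (p+1) + 1 else g k')
                = (fun k => if k = p then g i - 1
                  else if k = p + (0 + 1) then g (p + (0 + 1)) + 1 else g k) := by
              funext k
              rw [hp_spec]
            rw [← hfun]
            exact htr
          · have hd1 : 1 ≤ d := by omega
            have hstep := ihd hd1 (by omega)
            refine le_trans hstep ?_
            set gd : ℕ → ℕ := fun k => if k = p then g i - 1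
              else if k = p + d then g (p + d) + 1 else g k with hgd
            have hne1 : p + d ≠ p := by omega
            have hne2 : p + d + 1 ≠ p := by omega
            have hne3 : p + d + 1 ≠ p + d := by omega
            have hgdp : gd p = g i - 1 := by simp [hgd]
            have hgdpd : gd (p+d) = g (p+d) + 1 := by simp [hgd, hne1, hd0]
            have hgdpd1 : gd (p+d+1) = g (p+d+1) := by simp [hgd, hne2, hne3]
            have hcond : gd (p + d + 1) < gd (p + d) := by
              rw [hgdpd, hgdpd1]
              have := hg (p + d)
              omega
            have hbound : ∀ k, n ≤ k → gd k = 0 := by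
              intro k hk
              simp only [hgd]
              rw [if_neg (by omega), if_neg (by omega)]
              exact hgs k hk
            have htr := transfer_le N hN gd (p + d) n hcond hbound
            have hfun : (fun k' => if k' = p + d then gd (p + d) - 1
                else if k' = p + d + 1 then gd (p + d + 1) + 1 else gd k')
                = (fun k => if k = p then g i - 1
                  else if k = p + (d + 1) then g (p + (d + 1)) + 1 else g k) := by
              have hassoc : p + (d + 1) = p + d + 1 := rfl
              funext k
              by_cases hk : k = p
              · subst hk
                simp [hne1.symm, hne2.symm, hgdp, hd0]
              · by_cases hk2 : k = p + d
                · subst hk2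
                  have hr : p + d ≠ p + (d + 1) := by omega
                  simp [hgdpd, hne3.symm, hk, hr, hd0]
                · by_cases hk3 : k = p + d + 1
                  · subst hk3
                    simp [hne3, hgdpd1, hne2, hassoc]
                  · have hk3' : k ≠ p + (d + 1) := by omega
                    simp [hk, hk2, hk3, hk3', hgd]
            rw [← hfun]
            exact htr
      set g' : ℕ → ℕ := fun k => if k = p then g i - 1 else if k = q then g j + 1 else g k
        with hg'def
      have hfq : (fun k => if k = p then g i - 1
          else if k = p + (q - p) then g (p + (q - p)) + 1 else g k) = g' := by
        funext k
        rw [show p + (q - p) = q by omega, hq_spec, hg'def]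
      have hstep1 : kostkaF N g ≤ kostkaF N g' := by
        rw [← hfq]
        exact hchain (q - p) (by omega) (by omega)
      have hg'p : g' p = g i - 1 := by simp [hg'def]
      have hg'q : g' q = g j + 1 := by
        have hne : q ≠ p := by omega
        simp [hg'def, hne]
      have hg'else : ∀ k, k ≠ p → k ≠ q → g' k = g k := by
        intro k h1 h2
        simp [hg'def, h1, h2]
      have hg'succ : ∀ k, g' (k+1) ≤ g' k := by
        intro k
        by_cases hk2 : k = p
        · subst hk2
          by_cases hk3 : p + 1 = q
          · rw [hg'p, show p+1 = q from hk3, hg'q]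
            omega
          · rw [hg'p, hg'else (p+1) (by omega) hk3]
            omega
        · by_cases hk4 : k = q
          · subst hk4
            rw [hg'else (q+1) (by omega) (by omega), hg'q]
            have h5 := hg q
            rw [hq_spec] at h5
            omega
          · by_cases hk1 : k + 1 = p
            · rw [hg'else k (by omega) (by omega), show k+1 = p from hk1, hg'p]
              have h5 : g p ≤ g k := hga (by omega)
              rw [hp_spec] at h5
              omega
            · by_cases hk5 : k + 1 = q
              · rw [hg'else k hk2 (by omega), show k+1 = q from hk5, hg'q]
                have := hq_gt k (by omega)
                omega
              · rw [hg'else k hk2 hk4, hg'else (k+1) hk1 hk5]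
                exact hg k
      have hg's : ∀ k, n ≤ k → g' k = 0 := by
        intro k hk
        rw [hg'else k (by omega) (by omega)]
        exact hgs k hk
      have hA : ∀ K, (∑ k ∈ Finset.range K, g' k) + (if p < K ∧ K ≤ q then 1 else 0)
          = ∑ k ∈ Finset.range K, g k := by
        intro K
        induction K with
        | zero => simp
        | succ K ihK =>
          rw [Finset.sum_range_succ, Finset.sum_range_succ]
          by_cases hKp : K = p
          · subst hKp
            rw [hg'p, hp_spec]
            rw [if_neg (show ¬(p < p ∧ p ≤ q) by omega)] at ihK
            rw [if_pos (show p < p + 1 ∧ p + 1 ≤ q by omega)]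
            omega
          · by_cases hKq : K = q
            · subst hKq
              rw [hg'q, hq_spec]
              rw [if_pos (show p < q ∧ q ≤ q by omega)] at ihK
              rw [if_neg (show ¬(p < q + 1 ∧ q + 1 ≤ q) by omega)]
              omega
            · rw [hg'else K hKp hKq]
              have h01 : (if p < K ∧ K ≤ q then 1 else 0)
                  = (if p < K+1 ∧ K+1 ≤ q then (1:ℕ) else 0) := by
                split_ifs <;> omega
              rw [h01] at ihK
              omega
      have hsum' : ∑ k ∈ Finset.range n, g' k = ∑ k ∈ Finset.range n, m k := by
        have h := hA n
        rw [if_neg (show ¬(p < n ∧ n ≤ q) by omega)] at h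
        omega
      have hdom' : ∀ K, ∑ x ∈ Finset.range K, m x ≤ ∑ x ∈ Finset.range K, g' x := by
        intro K
        have h := hA K
        by_cases hKd : p < K ∧ K ≤ q
        · rw [if_pos hKd] at h
          have hiK : i < K := by omega
          have hKj : K ≤ j := by omega
          have hstrict : ∑ x ∈ Finset.range K, m x < ∑ x ∈ Finset.range K, g x := by
            rw [Finset.range_eq_Ico,
              ← Finset.sum_Ico_consecutive (fun x => m x) (Nat.zero_le i) (le_of_lt hiK),
              ← Finset.sum_Ico_consecutive (fun x => g x) (Nat.zero_le i) (le_of_lt hiK)]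
            have heq1 : ∑ x ∈ Finset.Ico 0 i, m x = ∑ x ∈ Finset.Ico 0 i, g x := by
              apply Finset.sum_congr rfl
              intro k hk
              rw [Finset.mem_Ico] at hk
              exact (hieq k hk.2).symm
            rw [heq1]
            apply Nat.add_lt_add_left
            apply Finset.sum_lt_sum
            · intro k hk
              rw [Finset.mem_Ico] at hk
              rcases eq_or_lt_of_le hk.1 with he | hlt2
              · rw [← he]; exact le_of_lt hmi
              · have hkj : k < j := by omega
                have := hjmin k hkj
                omega
            · exact ⟨i, Finset.mem_Ico.mpr ⟨le_rfl, hiK⟩, hmi⟩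
          omega
        · rw [if_neg hKd] at h
          have := hdom K
          omega
      have hpmem : p ∈ Finset.range n := Finset.mem_range.mpr hp_lt_n
      have hqmem : q ∈ (Finset.range n).erase p :=
        Finset.mem_erase.mpr ⟨by omega, Finset.mem_range.mpr hqn⟩
      have e1 : g' p ^ 2 + ∑ k ∈ (Finset.range n).erase p, g' k ^ 2
          = ∑ k ∈ Finset.range n, g' k ^ 2 :=
        Finset.add_sum_erase (Finset.range n) (fun k => g' k ^ 2) hpmem
      have e2 : g' q ^ 2 + ∑ k ∈ ((Finset.range n).erase p).erase q, g' k ^ 2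
          = ∑ k ∈ (Finset.range n).erase p, g' k ^ 2 :=
        Finset.add_sum_erase ((Finset.range n).erase p) (fun k => g' k ^ 2) hqmem
      have e3 : g p ^ 2 + ∑ k ∈ (Finset.range n).erase p, g k ^ 2
          = ∑ k ∈ Finset.range n, g k ^ 2 :=
        Finset.add_sum_erase (Finset.range n) (fun k => g k ^ 2) hpmem
      have e4 : g q ^ 2 + ∑ k ∈ ((Finset.range n).erase p).erase q, g k ^ 2
          = ∑ k ∈ (Finset.range n).erase p, g k ^ 2 :=
        Finset.add_sum_erase ((Finset.range n).erase p) (fun k => g k ^ 2) hqmem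
      have eR : ∑ k ∈ ((Finset.range n).erase p).erase q, g' k ^ 2
          = ∑ k ∈ ((Finset.range n).erase p).erase q, g k ^ 2 := by
        apply Finset.sum_congr rfl
        intro k hk
        rw [Finset.mem_erase, Finset.mem_erase] at hk
        rw [hg'else k hk.2.1 hk.1]
      simp only [hg'p, hg'q] at e1 e2
      rw [hp_spec] at e3
      rw [hq_spec] at e4
      have hkey : (g i - 1)^2 + (g j + 1)^2 < (g i)^2 + (g j)^2 := by
        obtain ⟨u, hu⟩ : ∃ u, g i = g j + 2 + u := ⟨g i - (g j + 2), by omega⟩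
        have h1 : g i - 1 = g j + 1 + u := by omega
        rw [h1, hu]
        exact sq_transfer_lt (g j) u
      have hmeas' : ∑ k ∈ Finset.range n, g' k ^ 2 < s := by omega
      exact le_trans hstep1 (ih g' m hg'succ hm hg's hms hsum' hdom' hmeas')


lemma sorted_getD_antitone {L : List ℕ} (hL : L.Pairwise (· ≥ ·)) :
    Antitone (fun k => L.getD k 0) := by
  apply antitone_nat_of_succ_le
  intro k
  by_cases h : k + 1 < L.length
  · have hk : k < L.length := by omega
    have hrel := List.Pairwise.rel_get_of_lt hL (a := ⟨k, hk⟩) (b := ⟨k+1, h⟩)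
      (Fin.mk_lt_mk.mpr (Nat.lt_succ_self k))
    rw [List.getD_eq_getElem _ _ h, List.getD_eq_getElem _ _ hk]
    exact hrel
  · rw [List.getD_eq_default _ _ (by omega)]
    omega

lemma take_sum (L : List ℕ) (k : ℕ) :
    (L.take k).sum = ∑ x ∈ Finset.range k, L.getD x 0 := by
  induction k with
  | zero => simp
  | succ k ih =>
    rw [Finset.sum_range_succ, ← ih]
    by_cases h : k < L.length
    · rw [List.take_succ, List.getElem?_eq_getElem h, Option.toList_some, List.sum_append,
        List.sum_cons, List.sum_nil, List.getD_eq_getElem _ _ h]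
      omega
    · rw [List.take_of_length_le (by omega), List.take_of_length_le (by omega),
        List.getD_eq_default _ _ (by omega)]
      omega

lemma length_le_sum {L : List ℕ} (h : ∀ x ∈ L, 0 < x) : L.length ≤ L.sum := by
  induction L with
  | nil => simp
  | cons a l ih =>
    simp only [List.length_cons, List.sum_cons]
    have ha := h a (by simp)
    have hl := ih (fun x hx => h x (by simp [hx]))
    omega

end SchurAux

lemma kostka_eq (N M : List ℕ) : kostka N M = SchurAux.kostkaF N (fun k => M.getD k 0) := rfl

theorem stronglyNice_of_schur_positive {V : Type*} [Fintype V] (G : SimpleGraph V)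
    (c : Nat.Partition (Fintype.card V) → ℚ) (hc : ∀ ν, 0 ≤ c ν)
    (h : ∀ ρ : Nat.Partition (Fintype.card V),
      (aTilde G (ρ.parts.sort (· ≥ ·)) : ℚ) =
        ∑ ν : Nat.Partition (Fintype.card V),
          c ν * kostka (ν.parts.sort (· ≥ ·)) (ρ.parts.sort (· ≥ ·))) :
    StronglyNice G := by
  classical
  intro L M hL hM hdomLM
  obtain ⟨hLs, hLp, hLsum⟩ := hL
  obtain ⟨hMs, hMp, hMsum⟩ := hM
  have mkρ : ∀ K : List ℕ, K.Pairwise (· ≥ ·) → (∀ x ∈ K, 0 < x) →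
      K.sum = Fintype.card V →
      ∃ ρ : Nat.Partition (Fintype.card V), ρ.parts.sort (· ≥ ·) = K := by
    intro K hs hp hsum
    refine ⟨⟨(K : Multiset ℕ), ?_, ?_⟩, ?_⟩
    · intro i hi
      exact hp i (by exact_mod_cast hi)
    · rw [Multiset.sum_coe]; exact hsum
    · exact List.Perm.eq_of_pairwise' (Multiset.pairwise_sort _ _) hs
        (Multiset.coe_eq_coe.mp (Multiset.sort_eq _ _))
  obtain ⟨ρL, hρL⟩ := mkρ L hLs hLp hLsum
  obtain ⟨ρM, hρM⟩ := mkρ M hMs hMp hMsum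
  have hLq := h ρL
  rw [hρL] at hLq
  have hMq := h ρM
  rw [hρM] at hMq
  have hkey : ∀ ν : Nat.Partition (Fintype.card V),
      kostka (ν.parts.sort (· ≥ ·)) L ≤ kostka (ν.parts.sort (· ≥ ·)) M := by
    intro ν
    have hNs : (ν.parts.sort (· ≥ ·)).Pairwise (· ≥ ·) := Multiset.pairwise_sort _ _
    rw [kostka_eq, kostka_eq]
    have hgL : ∀ k, L.getD (k+1) 0 ≤ L.getD k 0 :=
      fun k => SchurAux.sorted_getD_antitone hLs (Nat.le_succ k)
    have hgM : ∀ k, M.getD (k+1) 0 ≤ M.getD k 0 :=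
      fun k => SchurAux.sorted_getD_antitone hMs (Nat.le_succ k)
    have hLlen : L.length ≤ Fintype.card V := by
      have := SchurAux.length_le_sum hLp
      omega
    have hMlen : M.length ≤ Fintype.card V := by
      have := SchurAux.length_le_sum hMp
      omega
    have hgsL : ∀ k, Fintype.card V ≤ k → L.getD k 0 = 0 :=
      fun k hk => List.getD_eq_default _ _ (by omega)
    have hgsM : ∀ k, Fintype.card V ≤ k → M.getD k 0 = 0 :=
      fun k hk => List.getD_eq_default _ _ (by omega)
    have hsL : ∑ k ∈ Finset.range (Fintype.card V), L.getD k 0 = Fintype.card V := by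
      rw [← SchurAux.take_sum, List.take_of_length_le hLlen]
      exact hLsum
    have hsM : ∑ k ∈ Finset.range (Fintype.card V), M.getD k 0 = Fintype.card V := by
      rw [← SchurAux.take_sum, List.take_of_length_le hMlen]
      exact hMsum
    have hdom' : ∀ k, ∑ x ∈ Finset.range k, M.getD x 0 ≤ ∑ x ∈ Finset.range k, L.getD x 0 := by
      intro k
      rw [← SchurAux.take_sum, ← SchurAux.take_sum]
      exact hdomLM k
    exact SchurAux.monoF _ (Fintype.card V) (SchurAux.sorted_getD_antitone hNs)
      ((∑ k ∈ Finset.range (Fintype.card V), (L.getD k 0)^2) + 1)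
      (fun k => L.getD k 0) (fun k => M.getD k 0)
      hgL hgM hgsL hgsM (by rw [hsL, hsM]) hdom' (Nat.lt_succ_self _)
  have hsum_le : (aTilde G L : ℚ) ≤ (aTilde G M : ℚ) := by
    rw [hLq, hMq]
    apply Finset.sum_le_sum
    intro ν _
    have hcast : (kostka (ν.parts.sort (· ≥ ·)) L : ℚ)
        ≤ (kostka (ν.parts.sort (· ≥ ·)) M : ℚ) := by
      exact_mod_cast hkey ν
    exact mul_le_mul_of_nonneg_left hcast (hc ν)
  exact_mod_cast hsum_le
end

section
/- For every integer n ≥ 3, the chromatic symmetric function of the squid graph Sq(2n−1;1^n) is not Schur positive: there is no family of nonnegative rational numbers (c_ν), indexed by partitions ν of 3n−1, such that ã_ρ(Sq(2n−1;1^n)) = Σ_ν c_ν · K_{νρ} for every partition ρ of 3n−1. -/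
/-! ### Auxiliary development -/

section SquidAux

open Finset Sum

/-- Abbreviation for the vertex type of the squid with `n = k+3`. -/
abbrev Vk (k : ℕ) := Fin (2*(k+3)-1) ⊕ Fin (k+3)

def uV (k : ℕ) : Vk k := Sum.inl ⟨0, by omega⟩

lemma mod_char (k a : ℕ) (ha : a < 2*k+5) :
    (a+1) % (2*(k+3)-1) = if a = 2*k+4 then 0 else a+1 := by
  have h : 2*(k+3)-1 = 2*k+5 := by omega
  rw [h]
  split
  · next h => rw [h, show 2*k+4+1 = 2*k+5 by omega, Nat.mod_self]
  · exact Nat.mod_eq_of_lt (by omega)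

lemma squid_adj_inl_inl (k : ℕ) (a b : Fin (2*(k+3)-1)) :
    (squid (k+3)).Adj (.inl a) (.inl b) ↔
      a.val ≠ b.val ∧ (a.val+1 = b.val ∨ b.val+1 = a.val ∨
        (a.val = 2*k+4 ∧ b.val = 0) ∨ (b.val = 2*k+4 ∧ a.val = 0)) := by
  rw [squid, SimpleGraph.fromRel_adj]
  have ha := a.isLt
  have hb := b.isLt
  simp only [mod_char k a.val (by omega), mod_char k b.val (by omega)]
  constructor
  · rintro ⟨hne, h | h⟩ <;>
    · refine ⟨fun hv => hne (by exact congrArg Sum.inl (Fin.ext hv)), ?_⟩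
      split at h <;> omega
  · rintro ⟨hne, h⟩
    refine ⟨fun hv => hne (by injection hv with h2; exact congrArg Fin.val h2), ?_⟩
    by_cases h1 : a.val = 2*k+4 <;> by_cases h2 : b.val = 2*k+4 <;> simp [h1, h2] <;> omega

lemma squid_adj_inl_inr (k : ℕ) (a : Fin (2*(k+3)-1)) (p : Fin (k+3)) :
    (squid (k+3)).Adj (.inl a) (.inr p) ↔ a.val = 0 := by
  rw [squid, SimpleGraph.fromRel_adj]
  simp

lemma squid_adj_inr_inl (k : ℕ) (a : Fin (2*(k+3)-1)) (p : Fin (k+3)) :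
    (squid (k+3)).Adj (.inr p) (.inl a) ↔ a.val = 0 := by
  rw [squid, SimpleGraph.fromRel_adj]
  simp

lemma squid_not_adj_inr_inr (k : ℕ) (p q : Fin (k+3)) :
    ¬ (squid (k+3)).Adj (.inr p) (.inr q) := by
  rw [squid, SimpleGraph.fromRel_adj]
  simp

def rhoMap (k : ℕ) (r : Fin (k+2)) (i : Fin (k+2)) : Vk k :=
  Sum.inl ⟨if i.val ≤ r.val then 2*i.val else 2*i.val+1, by split <;> omega⟩

def sigMap (k : ℕ) (r : Fin (k+2)) (i : Fin (k+1)) : Vk k :=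
  Sum.inl ⟨if i.val < r.val then 2*i.val+1 else 2*i.val+4, by split <;> omega⟩

def tauV (k : ℕ) (r : Fin (k+2)) (ε : Fin 2) : Vk k :=
  Sum.inl ⟨2*r.val+1+ε.val, by omega⟩

def eMap (k : ℕ) (r : Fin (k+2)) : (Fin (k+1) ⊕ Fin (k+3)) → Vk k :=
  Sum.elim (sigMap k r) Sum.inr

def Ublock (k : ℕ) (r : Fin (k+2)) : Finset (Vk k) :=
  Finset.image (rhoMap k r) Finset.univ

def mkX (k : ℕ) (r : Fin (k+2)) (ε : Fin 2) (S : Finset (Fin (k+1) ⊕ Fin (k+3))) :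
    Finset (Vk k) :=
  insert (tauV k r ε) (S.image (eMap k r))

def flip2 : Fin 2 → Fin 2 := fun ε => ⟨1 - ε.val, by omega⟩

lemma flip2_ne (ε : Fin 2) : flip2 ε ≠ ε := by
  fin_cases ε <;> simp [flip2]

lemma inl_mem_Ublock_iff (k : ℕ) (r : Fin (k+2)) (a : Fin (2*(k+3)-1)) :
    Sum.inl a ∈ Ublock k r ↔
      ((a.val % 2 = 0 ∧ a.val ≤ 2*r.val) ∨
       (a.val % 2 = 1 ∧ 2*r.val+3 ≤ a.val ∧ a.val ≤ 2*k+3)) := by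
  constructor
  · intro h
    rw [Ublock, Finset.mem_image] at h
    obtain ⟨i, -, hi⟩ := h
    have hiv := i.isLt
    have hrv := r.isLt
    rw [rhoMap] at hi
    injection hi with h2
    rw [Fin.ext_iff, Fin.val_mk] at h2
    split_ifs at h2 <;> omega
  · intro h
    rw [Ublock, Finset.mem_image]
    have ha := a.isLt
    refine ⟨⟨a.val/2, by omega⟩, Finset.mem_univ _, ?_⟩
    rw [rhoMap]
    congr 1
    apply Fin.ext
    show (if a.val/2 ≤ r.val then 2*(a.val/2) else 2*(a.val/2)+1) = a.val
    split <;> omega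

lemma inr_not_mem_Ublock (k : ℕ) (r : Fin (k+2)) (p : Fin (k+3)) :
    Sum.inr p ∉ Ublock k r := by
  intro h
  rw [Ublock, Finset.mem_image] at h
  obtain ⟨i, -, hi⟩ := h
  exact absurd hi (by rw [rhoMap]; simp)

lemma inl_mem_mkX_iff (k : ℕ) (r : Fin (k+2)) (ε : Fin 2)
    (S : Finset (Fin (k+1) ⊕ Fin (k+3))) (a : Fin (2*(k+3)-1)) :
    Sum.inl a ∈ mkX k r ε S ↔ a.val = 2*r.val+1+ε.val ∨
      ∃ i : Fin (k+1), Sum.inl i ∈ S ∧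
        a.val = (if i.val < r.val then 2*i.val+1 else 2*i.val+4) := by
  rw [mkX, Finset.mem_insert, Finset.mem_image]
  constructor
  · rintro (h | ⟨s, hs, hv⟩)
    · left
      rw [tauV] at h
      injection h with h'
      exact congrArg Fin.val h'
    · rcases s with i | p
      · right
        refine ⟨i, hs, ?_⟩
        rw [eMap] at hv
        simp only [Sum.elim_inl, sigMap] at hv
        injection hv with h'
        exact (congrArg Fin.val h').symm
      · rw [eMap] at hv; simp at hv
  · rintro (h | ⟨i, hi, hv⟩)
    · left
      rw [tauV]
      congr 1
      exact Fin.ext h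
    · right
      refine ⟨Sum.inl i, hi, ?_⟩
      rw [eMap]
      simp only [Sum.elim_inl, sigMap]
      congr 1
      exact Fin.ext hv.symm

lemma inr_mem_mkX_iff (k : ℕ) (r : Fin (k+2)) (ε : Fin 2)
    (S : Finset (Fin (k+1) ⊕ Fin (k+3))) (p : Fin (k+3)) :
    Sum.inr p ∈ mkX k r ε S ↔ Sum.inr p ∈ S := by
  rw [mkX, Finset.mem_insert, Finset.mem_image]
  constructor
  · rintro (h | ⟨s, hs, hv⟩)
    · rw [tauV] at h; simp at h
    · rcases s with i | q
      · rw [eMap] at hv; simp only [Sum.elim_inl, sigMap] at hv; simp at hv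
      · rw [eMap] at hv
        simp only [Sum.elim_inr] at hv
        injection hv with h'
        rwa [h'] at hs
  · intro h
    exact Or.inr ⟨Sum.inr p, h, rfl⟩

lemma stable_Ublock (k : ℕ) (r : Fin (k+2)) :
    IsStableSet (squid (k+3)) (Ublock k r) := by
  intro v hv w hw hadj
  rcases v with a | p
  · rcases w with b | q
    · rw [inl_mem_Ublock_iff] at hv hw
      rw [squid_adj_inl_inl] at hadj
      omega
    · exact inr_not_mem_Ublock k r q hw
  · exact inr_not_mem_Ublock k r p hv

lemma stable_mkX (k : ℕ) (r : Fin (k+2)) (ε : Fin 2)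
    (S : Finset (Fin (k+1) ⊕ Fin (k+3))) :
    IsStableSet (squid (k+3)) (mkX k r ε S) := by
  intro v hv w hw hadj
  have hε := ε.isLt
  rcases v with a | p
  · rcases w with b | q
    · rw [inl_mem_mkX_iff] at hv hw
      rw [squid_adj_inl_inl] at hadj
      have hr := r.isLt
      rcases hv with hv | ⟨i, -, hv⟩ <;> rcases hw with hw | ⟨j, -, hw⟩
      · omega
      · have := j.isLt; split_ifs at hw <;> omega
      · have := i.isLt; split_ifs at hv <;> omega
      · have := i.isLt; have := j.isLt; split_ifs at hv hw <;> omega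
    · rw [squid_adj_inl_inr] at hadj
      rw [inl_mem_mkX_iff] at hv
      rcases hv with hv | ⟨i, -, hv⟩
      · omega
      · split_ifs at hv <;> omega
  · rcases w with b | q
    · rw [squid_adj_inr_inl] at hadj
      rw [inl_mem_mkX_iff] at hw
      rcases hw with hw | ⟨i, -, hw⟩
      · omega
      · split_ifs at hw <;> omega
    · exact squid_not_adj_inr_inr k p q hadj

lemma Ublock_disj_mkX (k : ℕ) (r : Fin (k+2)) (ε : Fin 2)
    (S : Finset (Fin (k+1) ⊕ Fin (k+3))) :
    Disjoint (Ublock k r) (mkX k r ε S) := by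
  rw [Finset.disjoint_left]
  intro v hv hv'
  rcases v with a | p
  · rw [inl_mem_Ublock_iff] at hv
    rw [inl_mem_mkX_iff] at hv'
    have hε := ε.isLt
    rcases hv' with h | ⟨i, -, h⟩
    · omega
    · split_ifs at h <;> omega
  · exact inr_not_mem_Ublock k r p hv

lemma mkX_disj_mkX (k : ℕ) (r : Fin (k+2)) {ε ε' : Fin 2}
    {S S' : Finset (Fin (k+1) ⊕ Fin (k+3))} (hε : ε ≠ ε') (hS : Disjoint S S') :
    Disjoint (mkX k r ε S) (mkX k r ε' S') := by
  rw [Finset.disjoint_left]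
  intro v hv hv'
  have hεε' : ε.val ≠ ε'.val := fun h => hε (Fin.ext h)
  have h1 := ε.isLt
  have h2 := ε'.isLt
  rcases v with a | p
  · rw [inl_mem_mkX_iff] at hv hv'
    rcases hv with h | ⟨i, hi, h⟩ <;> rcases hv' with h' | ⟨j, hj, h'⟩
    · omega
    · split_ifs at h' <;> omega
    · split_ifs at h <;> omega
    · have : i = j := by
        apply Fin.ext
        split_ifs at h h' <;> omega
      subst this
      exact Finset.disjoint_left.mp hS hi hj
  · rw [inr_mem_mkX_iff] at hv hv'
    exact Finset.disjoint_left.mp hS hv hv'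

lemma rhoMap_inj (k : ℕ) (r : Fin (k+2)) : Function.Injective (rhoMap k r) := by
  intro i j h
  rw [rhoMap, rhoMap] at h
  injection h with h'
  have := congrArg Fin.val h'
  simp only at this
  apply Fin.ext
  split_ifs at this <;> omega

lemma eMap_inj (k : ℕ) (r : Fin (k+2)) : Function.Injective (eMap k r) := by
  intro s s' h
  rcases s with i | p <;> rcases s' with j | q <;>
    simp only [eMap, Sum.elim_inl, Sum.elim_inr, sigMap] at h
  · injection h with h'
    have := congrArg Fin.val h'
    simp only at this
    congr 1
    apply Fin.ext
    split_ifs at this <;> omega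
  · exact absurd h (by simp)
  · exact absurd h (by simp)
  · injection h with h'
    rw [h']

lemma tauV_not_mem_image (k : ℕ) (r : Fin (k+2)) (ε : Fin 2)
    (S : Finset (Fin (k+1) ⊕ Fin (k+3))) :
    tauV k r ε ∉ S.image (eMap k r) := by
  intro h
  rw [Finset.mem_image] at h
  obtain ⟨s, -, hs⟩ := h
  have hε := ε.isLt
  rcases s with i | p <;>
    simp only [eMap, Sum.elim_inl, Sum.elim_inr, sigMap, tauV] at hs
  · injection hs with h'
    have := congrArg Fin.val h'
    simp only at this
    have := i.isLt
    split_ifs at * <;> omega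
  · exact absurd hs (by simp)

lemma card_Ublock (k : ℕ) (r : Fin (k+2)) : (Ublock k r).card = k+2 := by
  rw [Ublock, Finset.card_image_of_injective _ (rhoMap_inj k r)]
  simp

lemma card_mkX (k : ℕ) (r : Fin (k+2)) (ε : Fin 2)
    (S : Finset (Fin (k+1) ⊕ Fin (k+3))) : (mkX k r ε S).card = S.card + 1 := by
  rw [mkX, Finset.card_insert_of_notMem (tauV_not_mem_image k r ε S),
    Finset.card_image_of_injective _ (eMap_inj k r)]

lemma val_classify (k : ℕ) (r : Fin (k+2)) (a : Fin (2*(k+3)-1)) :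
    (Sum.inl a ∈ Ublock k r) ∨ a.val = 2*r.val+1 ∨ a.val = 2*r.val+2 ∨
      ∃ i : Fin (k+1), a.val = (if i.val < r.val then 2*i.val+1 else 2*i.val+4) := by
  have ha := a.isLt
  have hr := r.isLt
  by_cases h1 : (a.val % 2 = 0 ∧ a.val ≤ 2*r.val) ∨
      (a.val % 2 = 1 ∧ 2*r.val+3 ≤ a.val ∧ a.val ≤ 2*k+3)
  · exact Or.inl ((inl_mem_Ublock_iff k r a).mpr h1)
  by_cases h2 : a.val = 2*r.val+1
  · exact Or.inr (Or.inl h2)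
  by_cases h3 : a.val = 2*r.val+2
  · exact Or.inr (Or.inr (Or.inl h3))
  refine Or.inr (Or.inr (Or.inr ?_))
  by_cases ho : a.val % 2 = 1
  · refine ⟨⟨a.val/2, by omega⟩, ?_⟩
    show a.val = if a.val/2 < r.val then 2*(a.val/2)+1 else 2*(a.val/2)+4
    split <;> omega
  · refine ⟨⟨(a.val-4)/2, by omega⟩, ?_⟩
    show a.val = if (a.val-4)/2 < r.val then 2*((a.val-4)/2)+1 else 2*((a.val-4)/2)+4
    split <;> omega

lemma tau_mem_mkX (k : ℕ) (r : Fin (k+2)) (ε : Fin 2)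
    (S : Finset (Fin (k+1) ⊕ Fin (k+3))) : tauV k r ε ∈ mkX k r ε S :=
  Finset.mem_insert_self _ _

lemma sig_mem_mkX (k : ℕ) (r : Fin (k+2)) (ε : Fin 2)
    {S : Finset (Fin (k+1) ⊕ Fin (k+3))} {i : Fin (k+1)}
    (h : Sum.inl i ∈ S) : sigMap k r i ∈ mkX k r ε S :=
  Finset.mem_insert_of_mem (Finset.mem_image.mpr ⟨Sum.inl i, h, rfl⟩)

lemma pend_mem_mkX (k : ℕ) (r : Fin (k+2)) (ε : Fin 2)
    {S : Finset (Fin (k+1) ⊕ Fin (k+3))} {p : Fin (k+3)}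
    (h : Sum.inr p ∈ S) : Sum.inr p ∈ mkX k r ε S :=
  (inr_mem_mkX_iff k r ε S p).mpr h

lemma cover_lemma (k : ℕ) (r : Fin (k+2)) (ε : Fin 2)
    (S : Finset (Fin (k+1) ⊕ Fin (k+3))) (v : Vk k) :
    v ∈ Ublock k r ∨ v ∈ mkX k r ε S ∨ v ∈ mkX k r (flip2 ε) Sᶜ := by
  have hε := ε.isLt
  have hfε : (flip2 ε).val = 1 - ε.val := rfl
  rcases v with a | p
  · rcases val_classify k r a with h | h | h | ⟨i, hi⟩
    · exact Or.inl h
    · right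
      by_cases hε0 : ε.val = 0
      · left; rw [inl_mem_mkX_iff]; left; omega
      · right; rw [inl_mem_mkX_iff]; left; omega
    · right
      by_cases hε0 : ε.val = 1
      · left; rw [inl_mem_mkX_iff]; left; omega
      · right; rw [inl_mem_mkX_iff]; left; omega
    · right
      by_cases hS : Sum.inl i ∈ S
      · left; rw [inl_mem_mkX_iff]; exact Or.inr ⟨i, hS, hi⟩
      · right; rw [inl_mem_mkX_iff]
        exact Or.inr ⟨i, Finset.mem_compl.mpr hS, hi⟩
  · right
    by_cases hS : Sum.inr p ∈ S
    · left; exact pend_mem_mkX k r ε hS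
    · right; exact pend_mem_mkX k r (flip2 ε) (Finset.mem_compl.mpr hS)

lemma u_mem_Ublock (k : ℕ) (r : Fin (k+2)) : uV k ∈ Ublock k r := by
  rw [uV, inl_mem_Ublock_iff]
  left
  exact ⟨by rw [Fin.val_mk], by rw [Fin.val_mk]; omega⟩

lemma u_not_mem_mkX (k : ℕ) (r : Fin (k+2)) (ε : Fin 2)
    (S : Finset (Fin (k+1) ⊕ Fin (k+3))) : uV k ∉ mkX k r ε S := by
  intro h
  rw [uV, inl_mem_mkX_iff] at h
  rcases h with h | ⟨i, -, h⟩
  · rw [Fin.val_mk] at h; omega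
  · rw [Fin.val_mk] at h; split_ifs at h <;> omega

lemma Ublock_inj (k : ℕ) {r r' : Fin (k+2)} (h : Ublock k r = Ublock k r') :
    r = r' := by
  have key : ∀ (s s' : Fin (k+2)), Ublock k s = Ublock k s' → s.val < s'.val → False := by
    intro s s' hss hlt
    have hs' := s'.isLt
    have h1 : Sum.inl (⟨2*s.val+2, by omega⟩ : Fin (2*(k+3)-1)) ∈ Ublock k s' := by
      rw [inl_mem_Ublock_iff]
      left
      constructor
      · show (2*s.val+2) % 2 = 0; omega
      · show 2*s.val+2 ≤ 2*s'.val; omega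
    rw [← hss, inl_mem_Ublock_iff] at h1
    simp only at h1
    omega
  rcases Nat.lt_trichotomy r.val r'.val with hlt | heq | hlt
  · exact absurd (key r r' h hlt) (by simp)
  · exact Fin.ext heq
  · exact absurd (key r' r h.symm hlt) (by simp)

lemma mkX_inj (k : ℕ) (r : Fin (k+2)) {ε ε' : Fin 2}
    {S S' : Finset (Fin (k+1) ⊕ Fin (k+3))}
    (h : mkX k r ε S = mkX k r ε' S') : ε = ε' ∧ S = S' := by
  have hε := ε.isLt
  have hε' := ε'.isLt
  have htau : tauV k r ε ∈ mkX k r ε' S' := h ▸ tau_mem_mkX k r ε S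
  have hee : ε = ε' := by
    rw [tauV, inl_mem_mkX_iff] at htau
    rcases htau with h' | ⟨i, -, h'⟩
    · simp only at h'
      exact Fin.ext (by omega)
    · have := i.isLt
      simp only at h'
      split_ifs at h' <;> omega
  subst hee
  refine ⟨rfl, ?_⟩
  have himg : S.image (eMap k r) = S'.image (eMap k r) := by
    have := tauV_not_mem_image k r ε S
    have := tauV_not_mem_image k r ε S'
    ext x
    constructor
    · intro hx
      have : x ∈ mkX k r ε S' := by
        rw [← h]
        exact Finset.mem_insert_of_mem hx
      rw [mkX, Finset.mem_insert] at this
      rcases this with h' | h'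
      · subst h'
        exact absurd hx (tauV_not_mem_image k r ε S)
      · exact h'
    · intro hx
      have : x ∈ mkX k r ε S := by
        rw [h]
        exact Finset.mem_insert_of_mem hx
      rw [mkX, Finset.mem_insert] at this
      rcases this with h' | h'
      · subst h'
        exact absurd hx (tauV_not_mem_image k r ε S')
      · exact h'
  exact Finset.image_injective (eMap_inj k r) himg

def shiftV (k : ℕ) : Vk k → Vk k := fun v =>
  match v with
  | Sum.inl a => Sum.inl ⟨(a.val+1) % (2*(k+3)-1), Nat.mod_lt _ (by omega)⟩
  | Sum.inr p => Sum.inr p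

lemma shiftV_inj (k : ℕ) : Function.Injective (shiftV k) := by
  intro v w h
  rcases v with a | p <;> rcases w with b | q <;> simp only [shiftV] at h
  · have ha := a.isLt
    have hb := b.isLt
    injection h with h'
    rw [Fin.ext_iff] at h'
    simp only [Fin.val_mk] at h'
    rw [mod_char k a.val (by omega), mod_char k b.val (by omega)] at h'
    congr 1
    apply Fin.ext
    split_ifs at h' <;> omega
  · simp at h
  · simp at h
  · exact h

lemma no_pendant_of_stable_u (k : ℕ) {S : Finset (Vk k)}
    (hS : IsStableSet (squid (k+3)) S) (hu : uV k ∈ S) (p : Fin (k+3)) :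
    Sum.inr p ∉ S := by
  intro hp
  exact hS (uV k) hu (Sum.inr p) hp ((squid_adj_inl_inr k ⟨0, by omega⟩ p).mpr rfl)

lemma stable_card_le (k : ℕ) (S : Finset (Vk k))
    (hS : IsStableSet (squid (k+3)) S) (hu : uV k ∈ S) : S.card ≤ k+2 := by
  classical
  have hnopend : ∀ p : Fin (k+3), Sum.inr p ∉ S := no_pendant_of_stable_u k hS hu
  have hadjshift : ∀ a : Fin (2*(k+3)-1), (squid (k+3)).Adj (Sum.inl a)
      (Sum.inl ⟨(a.val+1) % (2*(k+3)-1), Nat.mod_lt _ (by omega)⟩) := by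
    intro a
    have ha := a.isLt
    rw [squid_adj_inl_inl]
    simp only [Fin.val_mk]
    rw [mod_char k a.val (by omega)]
    split_ifs <;> omega
  have hdisj : Disjoint S (S.image (shiftV k)) := by
    rw [Finset.disjoint_right]
    intro v hv hv'
    rw [Finset.mem_image] at hv
    obtain ⟨w, hw, rfl⟩ := hv
    rcases w with a | p
    · exact hS (Sum.inl a) hw _ hv' (hadjshift a)
    · exact hnopend p hw
  have hsub : S ∪ S.image (shiftV k) ⊆
      (Finset.univ : Finset (Fin (2*(k+3)-1))).map ⟨Sum.inl, Sum.inl_injective⟩ := by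
    intro v hv
    rw [Finset.mem_union] at hv
    rw [Finset.mem_map]
    have : ∀ w ∈ S, ∃ a : Fin (2*(k+3)-1), Sum.inl a = w := by
      intro w hw
      rcases w with a | p
      · exact ⟨a, rfl⟩
      · exact absurd hw (hnopend p)
    rcases hv with hv | hv
    · obtain ⟨a, ha⟩ := this v hv
      exact ⟨a, Finset.mem_univ _, ha⟩
    · rw [Finset.mem_image] at hv
      obtain ⟨w, hw, rfl⟩ := hv
      obtain ⟨a, ha⟩ := this w hw
      subst ha
      exact ⟨_, Finset.mem_univ _, rfl⟩
  have hcard := Finset.card_le_card hsub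
  rw [Finset.card_union_of_disjoint hdisj,
    Finset.card_image_of_injective _ (shiftV_inj k), Finset.card_map,
    Finset.card_univ, Fintype.card_fin] at hcard
  omega

lemma downward_closed_eq_range (E : Finset ℕ) (h : ∀ t, t+1 ∈ E → t ∈ E) :
    E = Finset.range E.card := by
  have hdc : ∀ x, x ∈ E → ∀ y, y ≤ x → y ∈ E := by
    intro x
    induction x with
    | zero =>
      intro hx y hy
      have : y = 0 := Nat.le_zero.mp hy
      rwa [this]
    | succ n ih =>
      intro hx y hy
      by_cases hyn : y = n+1
      · rwa [hyn]
      · exact ih (h n hx) y (by omega)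
  rcases E.eq_empty_or_nonempty with rfl | hne
  · simp
  · have hmem := E.max'_mem hne
    have heq : E = Finset.range (E.max' hne + 1) := by
      ext x
      rw [Finset.mem_range]
      constructor
      · intro hx; exact Nat.lt_succ_of_le (Finset.le_max' E x hx)
      · intro hx; exact hdc (E.max' hne) hmem x (by omega)
    have hcard : E.card = E.max' hne + 1 := by
      have h2 := congrArg Finset.card heq
      rwa [Finset.card_range] at h2
    rw [hcard]; exact heq

lemma stable_eq_Ublock (k : ℕ) (T : Finset (Vk k))
    (hT : IsStableSet (squid (k+3)) T) (hu : uV k ∈ T) (hc : T.card = k+2) :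
    ∃ r : Fin (k+2), T = Ublock k r := by
  classical
  have hnopend := no_pendant_of_stable_u k hT hu
  set D : Finset ℕ := T.image (fun v => Sum.elim Fin.val (fun _ => 0) v) with hD
  have memD : ∀ x, x ∈ D ↔ ∃ a : Fin (2*(k+3)-1), Sum.inl a ∈ T ∧ a.val = x := by
    intro x
    rw [hD, Finset.mem_image]
    constructor
    · rintro ⟨v, hv, rfl⟩
      rcases v with a | p
      · exact ⟨a, hv, rfl⟩
      · exact absurd hv (hnopend p)
    · rintro ⟨a, ha, rfl⟩
      exact ⟨Sum.inl a, ha, rfl⟩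
  have hDbound : ∀ x ∈ D, x ≤ 2*k+4 := by
    intro x hx
    obtain ⟨a, -, rfl⟩ := (memD x).mp hx
    have := a.isLt
    omega
  have hadj2 : ∀ x, x ∈ D → x+1 ∈ D → False := by
    intro x hx hx1
    obtain ⟨a, ha, rfl⟩ := (memD x).mp hx
    obtain ⟨b, hb, hab⟩ := (memD _).mp hx1
    refine hT _ ha _ hb ?_
    rw [squid_adj_inl_inl]
    omega
  have h0 : 0 ∈ D := (memD 0).mpr ⟨⟨0, by omega⟩, hu, rfl⟩
  have htop : 2*k+4 ∉ D := by
    intro hx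
    obtain ⟨a, ha, hav⟩ := (memD _).mp hx
    refine hT _ ha _ hu ?_
    have hgoal : (squid (k+3)).Adj (Sum.inl a) (Sum.inl (⟨0, by omega⟩ : Fin (2*(k+3)-1))) := by
      rw [squid_adj_inl_inl]
      refine ⟨?_, Or.inr (Or.inr (Or.inl ⟨hav, rfl⟩))⟩
      show a.val ≠ 0
      omega
    exact hgoal
  have hcardD : D.card = k+2 := by
    rw [hD, Finset.card_image_of_injOn, hc]
    intro v hv w hw hvw
    rcases v with a | p
    · rcases w with b | q
      · simp only [Sum.elim_inl] at hvw
        exact congrArg Sum.inl (Fin.ext hvw)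
      · exact absurd hw (hnopend q)
    · exact absurd hv (hnopend p)
  have hhalf : ∀ t, t < k+2 → (2*t ∈ D ∨ 2*t+1 ∈ D) := by
    have hsub : D.image (·/2) ⊆ Finset.range (k+2) := by
      intro x hx
      rw [Finset.mem_range]
      rw [Finset.mem_image] at hx
      obtain ⟨y, hy, rfl⟩ := hx
      have h1 := hDbound y hy
      have h2 : y ≠ 2*k+4 := fun h => htop (h ▸ hy)
      omega
    have hinj : Set.InjOn (·/2) D := by
      intro x hx y hy hxy
      by_contra hne
      have hxy2 : x/2 = y/2 := hxy
      rcases Nat.lt_or_ge x y with h' | h'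
      · have hy1 : y = x+1 := by
          have hx2 := hDbound x hx
          omega
        exact hadj2 x hx (hy1 ▸ hy)
      · have hx1 : x = y+1 := by
          have hy2 := hDbound y hy
          omega
        exact hadj2 y hy (hx1 ▸ hx)
    have heq : D.image (·/2) = Finset.range (k+2) :=
      Finset.eq_of_subset_of_card_le hsub
        (by rw [Finset.card_image_of_injOn hinj, hcardD, Finset.card_range])
    intro t ht
    have hmem : t ∈ D.image (·/2) := by rw [heq, Finset.mem_range]; exact ht
    rw [Finset.mem_image] at hmem
    obtain ⟨y, hy, hyt0⟩ := hmem
    have hyt : y/2 = t := hyt0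
    rcases (by omega : y = 2*t ∨ y = 2*t+1) with h | h
    · rw [h] at hy; exact Or.inl hy
    · rw [h] at hy; exact Or.inr hy
  set E : Finset ℕ := (Finset.range (k+2)).filter (fun t => 2*t ∈ D) with hE
  have hEdc : ∀ t, t+1 ∈ E → t ∈ E := by
    intro t ht
    rw [hE, Finset.mem_filter, Finset.mem_range] at ht ⊢
    obtain ⟨ht1, ht2⟩ := ht
    have h1 : 2*t+1 ∉ D := fun h =>
      hadj2 (2*t+1) h (by rw [show 2*t+1+1 = 2*(t+1) by ring]; exact ht2)
    exact ⟨by omega, (hhalf t (by omega)).resolve_right h1⟩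
  have hErange : E = Finset.range E.card := downward_closed_eq_range E hEdc
  have hE0 : 0 ∈ E := by
    rw [hE, Finset.mem_filter, Finset.mem_range]
    refine ⟨by omega, ?_⟩
    rw [show 2*0 = 0 by ring]
    exact h0
  have hEcard_pos : 1 ≤ E.card := Finset.card_pos.mpr ⟨0, hE0⟩
  have hEcard_le : E.card ≤ k+2 := by
    calc E.card ≤ (Finset.range (k+2)).card := by
          rw [hE]; exact Finset.card_le_card (Finset.filter_subset _ _)
      _ = k+2 := Finset.card_range _
  have hmemE : ∀ t, t ∈ E ↔ t < E.card := by
    intro t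
    constructor
    · intro h; rw [hErange, Finset.mem_range] at h; exact h
    · intro h; rw [hErange, Finset.mem_range]; exact h
  refine ⟨⟨E.card - 1, by omega⟩, ?_⟩
  ext v
  constructor
  · intro hv
    rcases v with a | p
    · rw [inl_mem_Ublock_iff]
      simp only [Fin.val_mk]
      have hx : a.val ∈ D := (memD _).mpr ⟨a, hv, rfl⟩
      have hb := hDbound _ hx
      have hne : a.val ≠ 2*k+4 := fun h => htop (h ▸ hx)
      rcases (by omega : a.val = 2*(a.val/2) ∨ a.val = 2*(a.val/2)+1) with h | h
      · have htE : a.val/2 ∈ E := by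
          rw [hE, Finset.mem_filter, Finset.mem_range]
          exact ⟨by omega, h ▸ hx⟩
        rw [hmemE] at htE
        left; omega
      · have htE : a.val/2 ∉ E := by
          intro htE
          rw [hE, Finset.mem_filter] at htE
          exact hadj2 (2*(a.val/2)) htE.2 (h ▸ hx)
        rw [hmemE] at htE
        right; omega
    · exact absurd hv (hnopend p)
  · intro hv
    rcases v with a | p
    · rw [inl_mem_Ublock_iff] at hv
      simp only [Fin.val_mk] at hv
      have hget : a.val ∈ D → Sum.inl a ∈ T := by
        intro h
        obtain ⟨b, hb, hba⟩ := (memD _).mp h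
        have hba' : b = a := Fin.ext hba
        rwa [hba'] at hb
      rcases hv with ⟨hpar, hle⟩ | ⟨hpar, hge, hle⟩
      · have ht : a.val/2 ∈ E := by rw [hmemE]; omega
        rw [hE, Finset.mem_filter] at ht
        apply hget
        have heqa : 2*(a.val/2) = a.val := by omega
        rw [← heqa]
        exact ht.2
      · have ht2 : a.val/2 < k+2 := by omega
        have htE : a.val/2 ∉ E := by rw [hmemE]; omega
        rcases hhalf (a.val/2) ht2 with h | h
        · exact absurd (by rw [hE, Finset.mem_filter, Finset.mem_range]; exact ⟨ht2, h⟩) htE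
        · apply hget
          have heqa : 2*(a.val/2)+1 = a.val := by omega
          rwa [heqa] at h
    · exact absurd hv (inr_not_mem_Ublock k _ p)

lemma stable_decomp (k : ℕ) (r : Fin (k+2)) (X Y : Finset (Vk k))
    (hX : IsStableSet (squid (k+3)) X) (hY : IsStableSet (squid (k+3)) Y)
    (hXU : Disjoint X (Ublock k r)) (hYU : Disjoint Y (Ublock k r))
    (hXY : Disjoint X Y)
    (hcov : ∀ v : Vk k, v ∈ X ∨ v ∈ Y ∨ v ∈ Ublock k r) :
    ∃ (ε : Fin 2) (S : Finset (Fin (k+1) ⊕ Fin (k+3))),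
      X = mkX k r ε S ∧ Y = mkX k r (flip2 ε) Sᶜ := by
  classical
  have hr := r.isLt
  -- the two tau vertices
  have htau_not_U : ∀ ε : Fin 2, tauV k r ε ∉ Ublock k r := by
    intro ε h
    have hε := ε.isLt
    rw [tauV, inl_mem_Ublock_iff] at h
    simp only [Fin.val_mk] at h
    omega
  have htau_adj : (squid (k+3)).Adj (tauV k r 0) (tauV k r 1) := by
    rw [tauV, tauV, squid_adj_inl_inl]
    simp only [Fin.val_mk]
    omega
  have htau_where : ∀ ε : Fin 2, tauV k r ε ∈ X ∨ tauV k r ε ∈ Y := by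
    intro ε
    rcases hcov (tauV k r ε) with h | h | h
    · exact Or.inl h
    · exact Or.inr h
    · exact absurd h (htau_not_U ε)
  have hnotboth : ∀ Z, IsStableSet (squid (k+3)) Z →
      ¬ (tauV k r 0 ∈ Z ∧ tauV k r 1 ∈ Z) := by
    rintro Z hZ ⟨h0, h1⟩
    exact hZ _ h0 _ h1 htau_adj
  -- pick ε with tau ε ∈ X
  have hpick : ∃ ε : Fin 2, tauV k r ε ∈ X ∧ tauV k r (flip2 ε) ∈ Y := by
    rcases htau_where 0 with h0 | h0
    · rcases htau_where 1 with h1 | h1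
      · exact absurd ⟨h0, h1⟩ (hnotboth X hX)
      · exact ⟨0, h0, h1⟩
    · rcases htau_where 1 with h1 | h1
      · exact ⟨1, h1, by exact h0⟩
      · exact absurd ⟨h0, h1⟩ (hnotboth Y hY)
  obtain ⟨ε, hτX, hτY⟩ := hpick
  set S : Finset (Fin (k+1) ⊕ Fin (k+3)) :=
    Finset.univ.filter (fun s => eMap k r s ∈ X) with hS
  have hmemS : ∀ s, s ∈ S ↔ eMap k r s ∈ X := by
    intro s
    rw [hS, Finset.mem_filter]
    simp
  have hmemSc : ∀ s, s ∈ Sᶜ ↔ eMap k r s ∉ X := by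
    intro s
    rw [Finset.mem_compl, hmemS]
  have hτ_ne_sig : ∀ (ε' : Fin 2) (i : Fin (k+1)), sigMap k r i ≠ tauV k r ε' := by
    intro ε' i h
    have hε' := ε'.isLt
    have hi := i.isLt
    rw [sigMap, tauV] at h
    injection h with h'
    rw [Fin.ext_iff] at h'
    simp only [Fin.val_mk] at h'
    split_ifs at h' <;> omega
  have hsig_not_U : ∀ i : Fin (k+1), sigMap k r i ∉ Ublock k r := by
    intro i h
    have hi := i.isLt
    rw [sigMap, inl_mem_Ublock_iff] at h
    simp only [Fin.val_mk] at h
    split_ifs at h <;> omega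
  have hpend_not_U : ∀ p : Fin (k+3), (Sum.inr p : Vk k) ∉ Ublock k r :=
    fun p => inr_not_mem_Ublock k r p
  -- where does eMap s live
  have hemap_not_U : ∀ s, eMap k r s ∉ Ublock k r := by
    intro s
    rcases s with i | p
    · exact hsig_not_U i
    · exact hpend_not_U p
  have hXmk : X = mkX k r ε S := by
    ext v
    constructor
    · intro hv
      have hvU : v ∉ Ublock k r := fun h => (Finset.disjoint_left.mp hXU hv) h
      rcases v with a | p
      · rcases val_classify k r a with h | h | h | ⟨i, hi⟩
        · exact absurd h hvU
        · -- a.val = 2r+1 : v is a tau vertex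
          have hε := ε.isLt
          by_cases hε0 : ε.val = 0
          · have hva : Sum.inl a = tauV k r ε := by
              rw [tauV]; congr 1; apply Fin.ext; show a.val = 2*r.val+1+ε.val; omega
            rw [hva]; exact tau_mem_mkX k r ε S
          · -- tau of flip ε : in Y, contradiction
            have hva : Sum.inl a = tauV k r (flip2 ε) := by
              rw [tauV]
              congr 1
              apply Fin.ext
              show a.val = 2*r.val+1+(flip2 ε).val
              have hfv : (flip2 ε).val = 1 - ε.val := rfl
              omega
            exact absurd hv (fun hv' => (Finset.disjoint_left.mp hXY hv') (hva ▸ hτY))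
        · have hε := ε.isLt
          by_cases hε0 : ε.val = 1
          · have hva : Sum.inl a = tauV k r ε := by
              rw [tauV]; congr 1; apply Fin.ext; show a.val = 2*r.val+1+ε.val; omega
            rw [hva]; exact tau_mem_mkX k r ε S
          · have hva : Sum.inl a = tauV k r (flip2 ε) := by
              rw [tauV]
              congr 1
              apply Fin.ext
              show a.val = 2*r.val+1+(flip2 ε).val
              have hfv : (flip2 ε).val = 1 - ε.val := rfl
              omega
            exact absurd hv (fun hv' => (Finset.disjoint_left.mp hXY hv') (hva ▸ hτY))
        · -- sigma vertex
          have hva : Sum.inl a = sigMap k r i := by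
            rw [sigMap]; congr 1; apply Fin.ext; exact hi
          have hiS : Sum.inl i ∈ S := by
            rw [hmemS]
            show sigMap k r i ∈ X
            rw [← hva]; exact hv
          rw [hva]
          exact sig_mem_mkX k r ε hiS
      · have hpS : Sum.inr p ∈ S := by
          rw [hmemS]
          exact hv
        exact pend_mem_mkX k r ε hpS
    · intro hv
      rcases Finset.mem_insert.mp hv with h | h
      · rw [h]; exact hτX
      · rw [Finset.mem_image] at h
        obtain ⟨s, hs, rfl⟩ := h
        exact (hmemS s).mp hs
  have hYmk : Y = mkX k r (flip2 ε) Sᶜ := by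
    ext v
    constructor
    · intro hv
      have hvU : v ∉ Ublock k r := fun h => (Finset.disjoint_left.mp hYU hv) h
      have hvX : v ∉ X := fun h => (Finset.disjoint_left.mp hXY h) hv
      rcases v with a | p
      · rcases val_classify k r a with h | h | h | ⟨i, hi⟩
        · exact absurd h hvU
        · have hε := ε.isLt
          by_cases hε0 : ε.val = 0
          · have hva : Sum.inl a = tauV k r ε := by
              rw [tauV]; congr 1; apply Fin.ext; show a.val = 2*r.val+1+ε.val; omega
            exact absurd (hva ▸ hτX) hvX
          · have hva : Sum.inl a = tauV k r (flip2 ε) := by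
              rw [tauV]
              congr 1
              apply Fin.ext
              show a.val = 2*r.val+1+(flip2 ε).val
              have hfv : (flip2 ε).val = 1 - ε.val := rfl
              omega
            rw [hva]; exact tau_mem_mkX k r (flip2 ε) Sᶜ
        · have hε := ε.isLt
          by_cases hε0 : ε.val = 1
          · have hva : Sum.inl a = tauV k r ε := by
              rw [tauV]; congr 1; apply Fin.ext; show a.val = 2*r.val+1+ε.val; omega
            exact absurd (hva ▸ hτX) hvX
          · have hva : Sum.inl a = tauV k r (flip2 ε) := by
              rw [tauV]
              congr 1
              apply Fin.ext
              show a.val = 2*r.val+1+(flip2 ε).val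
              have hfv : (flip2 ε).val = 1 - ε.val := rfl
              omega
            rw [hva]; exact tau_mem_mkX k r (flip2 ε) Sᶜ
        · have hva : Sum.inl a = sigMap k r i := by
            rw [sigMap]; congr 1; apply Fin.ext; exact hi
          have hiS : Sum.inl i ∈ Sᶜ := by
            rw [hmemSc]
            show sigMap k r i ∉ X
            rw [← hva]; exact hvX
          rw [hva]
          exact sig_mem_mkX k r (flip2 ε) hiS
      · have hpS : Sum.inr p ∈ Sᶜ := by
          rw [hmemSc]
          exact hvX
        exact pend_mem_mkX k r (flip2 ε) hpS
    · intro hv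
      rcases Finset.mem_insert.mp hv with h | h
      · rw [h]; exact hτY
      · rw [Finset.mem_image] at h
        obtain ⟨s, hs, rfl⟩ := h
        have hsX : eMap k r s ∉ X := (hmemSc s).mp hs
        rcases hcov (eMap k r s) with h' | h' | h'
        · exact absurd h' hsX
        · exact h'
        · exact absurd h' (hemap_not_U s)
  exact ⟨ε, S, hXmk, hYmk⟩

/-! ### The bijection for type (k+3, k+3, k+2) -/

def fMu (k : ℕ)
    (q : Fin (k+2) × Fin 2 × {S : Finset (Fin (k+1) ⊕ Fin (k+3)) // S.card = k+2}) :
    Fin 3 → Finset (Vk k) :=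
  fun i => if i.val = 0 then mkX k q.1 q.2.1 q.2.2.1
    else if i.val = 1 then mkX k q.1 (flip2 q.2.1) (q.2.2.1)ᶜ
    else Ublock k q.1

lemma card_compl_sum (k m : ℕ) (S : Finset (Fin (k+1) ⊕ Fin (k+3)))
    (h : S.card = m) : Sᶜ.card = 2*k+4-m := by
  rw [Finset.card_compl]
  simp only [Fintype.card_sum, Fintype.card_fin]
  omega

lemma len3 : ∀ (a b c : ℕ) (m : ℕ), m < 3 → m < List.length [a,b,c] := by
  intro a b c m h
  simpa using h

lemma fMu_sos (k : ℕ)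
    (q : Fin (k+2) × Fin 2 × {S : Finset (Fin (k+1) ⊕ Fin (k+3)) // S.card = k+2}) :
    SemiOrderedStable (squid (k+3)) [k+3, k+3, k+2] (fMu k q) := by
  obtain ⟨r, ε, S, hS⟩ := q
  refine ⟨?_, ?_, ?_, ?_⟩
  · intro i
    simp only [fMu]
    split_ifs
    · exact stable_mkX k r ε S
    · exact stable_mkX k r (flip2 ε) Sᶜ
    · exact stable_Ublock k r
  · intro i j hij
    have hvij : i.val ≠ j.val := fun h => hij (Fin.ext h)
    have h3i : i.val < 3 := i.isLt
    have h3j : j.val < 3 := j.isLt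
    simp only [fMu]
    split_ifs <;>
      first
        | exact absurd (show i.val = j.val by omega) hvij
        | exact mkX_disj_mkX k r (flip2_ne ε).symm disjoint_compl_right
        | exact (mkX_disj_mkX k r (flip2_ne ε).symm disjoint_compl_right).symm
        | exact (Ublock_disj_mkX k r _ _).symm
        | exact Ublock_disj_mkX k r _ _
  · intro v
    rcases cover_lemma k r ε S v with h | h | h
    · exact ⟨⟨2, len3 _ _ _ 2 (by omega)⟩, h⟩
    · exact ⟨⟨0, len3 _ _ _ 0 (by omega)⟩, h⟩
    · exact ⟨⟨1, len3 _ _ _ 1 (by omega)⟩, h⟩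
  · intro i
    have h3 : i.val < 3 := i.isLt
    by_cases h0 : i.val = 0
    · have hi : i = ⟨0, len3 _ _ _ 0 (by omega)⟩ := Fin.ext h0
      rw [hi]
      show (mkX k r ε S).card = k+3
      rw [card_mkX, hS]
    · by_cases h1 : i.val = 1
      · have hi : i = ⟨1, len3 _ _ _ 1 (by omega)⟩ := Fin.ext h1
        rw [hi]
        show (mkX k r (flip2 ε) Sᶜ).card = k+3
        rw [card_mkX, card_compl_sum k (k+2) S hS]
        omega
      · have hi : i = ⟨2, len3 _ _ _ 2 (by omega)⟩ := Fin.ext ((by omega : i.val = 2))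
        rw [hi]
        show (Ublock k r).card = k+2
        exact card_Ublock k r

lemma fMu_bij (k : ℕ) :
    Function.Bijective
      (fun q => (⟨fMu k q, fMu_sos k q⟩ :
        {B : Fin (List.length [k+3, k+3, k+2]) → Finset (Vk k) //
          SemiOrderedStable (squid (k+3)) [k+3, k+3, k+2] B})) := by
  constructor
  · rintro ⟨r, ε, S, hS⟩ ⟨r', ε', S', hS'⟩ h
    have hf : fMu k (r, ε, ⟨S, hS⟩) = fMu k (r', ε', ⟨S', hS'⟩) :=
      congrArg Subtype.val h
    have h2 : Ublock k r = Ublock k r' :=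
      congrFun hf ⟨2, len3 (k+3) (k+3) (k+2) 2 (by omega)⟩
    have hrr : r = r' := Ublock_inj k h2
    subst hrr
    have h0 : mkX k r ε S = mkX k r ε' S' :=
      congrFun hf ⟨0, len3 (k+3) (k+3) (k+2) 0 (by omega)⟩
    obtain ⟨hee, hSS⟩ := mkX_inj k r h0
    subst hee
    subst hSS
    rfl
  · rintro ⟨B, hstab, hdisj, hcov, hcard⟩
    have l0 : (0:ℕ) < List.length [k+3,k+3,k+2] := len3 _ _ _ 0 (by omega)
    have l1 : (1:ℕ) < List.length [k+3,k+3,k+2] := len3 _ _ _ 1 (by omega)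
    have l2 : (2:ℕ) < List.length [k+3,k+3,k+2] := len3 _ _ _ 2 (by omega)
    obtain ⟨iu, hiu⟩ := hcov (uV k)
    have hiu3 : iu.val < 3 := iu.isLt
    have hle := stable_card_le k (B iu) (hstab iu) hiu
    have hiu2 : iu.val = 2 := by
      by_contra hne
      by_cases h0 : iu.val = 0
      · have hi : iu = ⟨0, l0⟩ := Fin.ext h0
        rw [hi] at hle
        have hcc : (B ⟨0, l0⟩).card = k+3 := hcard ⟨0, l0⟩
        omega
      · have hi : iu = ⟨1, l1⟩ := Fin.ext ((by omega : iu.val = 1))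
        rw [hi] at hle
        have hcc : (B ⟨1, l1⟩).card = k+3 := hcard ⟨1, l1⟩
        omega
    have hi : iu = ⟨2, l2⟩ := Fin.ext hiu2
    rw [hi] at hiu
    have hcT : (B ⟨2, l2⟩).card = k+2 := hcard ⟨2, l2⟩
    obtain ⟨r, hTU⟩ := stable_eq_Ublock k (B ⟨2, l2⟩) (hstab _) hiu hcT
    have hne01 : (⟨0, l0⟩ : Fin (List.length [k+3,k+3,k+2])) ≠ ⟨1, l1⟩ :=
      Fin.ne_of_val_ne (show (0:ℕ) ≠ (1:ℕ) by omega)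
    have hne02 : (⟨0, l0⟩ : Fin (List.length [k+3,k+3,k+2])) ≠ ⟨2, l2⟩ :=
      Fin.ne_of_val_ne (show (0:ℕ) ≠ (2:ℕ) by omega)
    have hne12 : (⟨1, l1⟩ : Fin (List.length [k+3,k+3,k+2])) ≠ ⟨2, l2⟩ :=
      Fin.ne_of_val_ne (show (1:ℕ) ≠ (2:ℕ) by omega)
    obtain ⟨ε, S, hXeq, hYeq⟩ := stable_decomp k r (B ⟨0, l0⟩) (B ⟨1, l1⟩)
      (hstab _) (hstab _)
      (hTU ▸ hdisj _ _ hne02) (hTU ▸ hdisj _ _ hne12) (hdisj _ _ hne01)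
      (by
        intro v
        obtain ⟨i, hi'⟩ := hcov v
        have h3 : i.val < 3 := i.isLt
        by_cases h0 : i.val = 0
        · have hieq : i = ⟨0, l0⟩ := Fin.ext h0
          rw [hieq] at hi'
          exact Or.inl hi'
        · by_cases h1 : i.val = 1
          · have hieq : i = ⟨1, l1⟩ := Fin.ext h1
            rw [hieq] at hi'
            exact Or.inr (Or.inl hi')
          · have hieq : i = ⟨2, l2⟩ := Fin.ext ((by omega : i.val = 2))
            rw [hieq] at hi'
            exact Or.inr (Or.inr (hTU ▸ hi')))
    have hc0 : (B ⟨0, l0⟩).card = k+3 := hcard ⟨0, l0⟩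
    have hSc : S.card = k+2 := by
      rw [hXeq, card_mkX] at hc0
      omega
    refine ⟨(r, ε, ⟨S, hSc⟩), ?_⟩
    apply Subtype.ext
    funext i
    have h3 : i.val < 3 := i.isLt
    by_cases h0 : i.val = 0
    · have hieq : i = ⟨0, l0⟩ := Fin.ext h0
      rw [hieq]
      exact hXeq.symm
    · by_cases h1 : i.val = 1
      · have hieq : i = ⟨1, l1⟩ := Fin.ext h1
        rw [hieq]
        exact hYeq.symm
      · have hieq : i = ⟨2, l2⟩ := Fin.ext ((by omega : i.val = 2))
        rw [hieq]
        exact hTU.symm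

lemma aTilde_mu_val (k : ℕ) :
    aTilde (squid (k+3)) [k+3, k+3, k+2] = 2*(k+2) * Nat.choose (2*k+4) (k+2) := by
  rw [aTilde, ← Nat.card_eq_of_bijective _ (fMu_bij k)]
  rw [Nat.card_eq_fintype_card]
  rw [Fintype.card_prod, Fintype.card_prod, Fintype.card_fin, Fintype.card_fin,
    Fintype.card_finset_len]
  simp only [Fintype.card_sum, Fintype.card_fin]
  rw [show k+1+(k+3) = 2*k+4 by omega]
  ring

/-! ### The bijection for type (k+4, k+2, k+2) -/

def fLam (k : ℕ)
    (q : Fin 2 × Fin (k+2) × Fin 2 × {S : Finset (Fin (k+1) ⊕ Fin (k+3)) // S.card = k+3}) :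
    Fin 3 → Finset (Vk k) :=
  fun i => if i.val = 0 then mkX k q.2.1 q.2.2.1 q.2.2.2.1
    else if i.val = 1 + q.1.val then Ublock k q.2.1
    else mkX k q.2.1 (flip2 q.2.2.1) (q.2.2.2.1)ᶜ

lemma fLam_sos (k : ℕ)
    (q : Fin 2 × Fin (k+2) × Fin 2 × {S : Finset (Fin (k+1) ⊕ Fin (k+3)) // S.card = k+3}) :
    SemiOrderedStable (squid (k+3)) [k+4, k+2, k+2] (fLam k q) := by
  obtain ⟨d, r, ε, S, hS⟩ := q
  have hd := d.isLt
  refine ⟨?_, ?_, ?_, ?_⟩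
  · intro i
    simp only [fLam]
    split_ifs
    · exact stable_mkX k r ε S
    · exact stable_Ublock k r
    · exact stable_mkX k r (flip2 ε) Sᶜ
  · intro i j hij
    have hvij : i.val ≠ j.val := fun h => hij (Fin.ext h)
    have h3i : i.val < 3 := i.isLt
    have h3j : j.val < 3 := j.isLt
    simp only [fLam]
    split_ifs <;>
      first
        | exact absurd (show i.val = j.val by omega) hvij
        | exact mkX_disj_mkX k r (flip2_ne ε).symm disjoint_compl_right
        | exact (mkX_disj_mkX k r (flip2_ne ε).symm disjoint_compl_right).symm
        | exact (Ublock_disj_mkX k r _ _).symm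
        | exact Ublock_disj_mkX k r _ _
  · intro v
    rcases cover_lemma k r ε S v with h | h | h
    · refine ⟨⟨1+d.val, len3 (k+4) (k+2) (k+2) (1+d.val) (by omega)⟩, ?_⟩
      show v ∈ (if 1+d.val = 0 then mkX k r ε S
        else if 1+d.val = 1+d.val then Ublock k r else mkX k r (flip2 ε) Sᶜ)
      rw [if_neg (show ¬(1+d.val = 0) by omega), if_pos rfl]
      exact h
    · exact ⟨⟨0, len3 (k+4) (k+2) (k+2) 0 (by omega)⟩, h⟩
    · refine ⟨⟨2-d.val, len3 (k+4) (k+2) (k+2) (2-d.val) (by omega)⟩, ?_⟩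
      show v ∈ (if 2-d.val = 0 then mkX k r ε S
        else if 2-d.val = 1+d.val then Ublock k r else mkX k r (flip2 ε) Sᶜ)
      rw [if_neg (show ¬(2-d.val = 0) by omega), if_neg (show ¬(2-d.val = 1+d.val) by omega)]
      exact h
  · intro i
    have h3 : i.val < 3 := i.isLt
    by_cases h0 : i.val = 0
    · have hi : i = ⟨0, len3 _ _ _ 0 (by omega)⟩ := Fin.ext h0
      rw [hi]
      show (mkX k r ε S).card = k+4
      rw [card_mkX, hS]
    · by_cases h1 : i.val = 1
      · have hi : i = ⟨1, len3 _ _ _ 1 (by omega)⟩ := Fin.ext h1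
        rw [hi]
        show (if (1:ℕ) = 1 + d.val then Ublock k r else mkX k r (flip2 ε) Sᶜ).card = k+2
        by_cases hd0 : d.val = 0
        · rw [if_pos (show (1:ℕ) = 1+d.val by omega)]
          exact card_Ublock k r
        · rw [if_neg (show ¬((1:ℕ) = 1+d.val) by omega)]
          rw [card_mkX, card_compl_sum k (k+3) S hS]
          omega
      · have hi : i = ⟨2, len3 _ _ _ 2 (by omega)⟩ := Fin.ext ((by omega : i.val = 2))
        rw [hi]
        show (if (2:ℕ) = 1 + d.val then Ublock k r else mkX k r (flip2 ε) Sᶜ).card = k+2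
        by_cases hd1 : d.val = 1
        · rw [if_pos (show (2:ℕ) = 1+d.val by omega)]
          exact card_Ublock k r
        · rw [if_neg (show ¬((2:ℕ) = 1+d.val) by omega)]
          rw [card_mkX, card_compl_sum k (k+3) S hS]
          omega

lemma fLam_bij (k : ℕ) :
    Function.Bijective
      (fun q => (⟨fLam k q, fLam_sos k q⟩ :
        {B : Fin (List.length [k+4, k+2, k+2]) → Finset (Vk k) //
          SemiOrderedStable (squid (k+3)) [k+4, k+2, k+2] B})) := by
  have l0 : (0:ℕ) < List.length [k+4,k+2,k+2] := len3 _ _ _ 0 (by omega)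
  have l1 : (1:ℕ) < List.length [k+4,k+2,k+2] := len3 _ _ _ 1 (by omega)
  have l2 : (2:ℕ) < List.length [k+4,k+2,k+2] := len3 _ _ _ 2 (by omega)
  constructor
  · rintro ⟨d, r, ε, S, hS⟩ ⟨d', r', ε', S', hS'⟩ h
    have hd := d.isLt
    have hd' := d'.isLt
    have hf : fLam k (d, r, ε, ⟨S, hS⟩) = fLam k (d', r', ε', ⟨S', hS'⟩) :=
      congrArg Subtype.val h
    have hdd : d = d' := by
      by_contra hne
      have hvne : d.val ≠ d'.val := fun hv => hne (Fin.ext hv)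
      have h1 := congrFun hf ⟨1+d.val, len3 (k+4) (k+2) (k+2) (1+d.val) (by omega)⟩
      have h1' : (if 1+d.val = 0 then mkX k r ε S
            else if 1+d.val = 1+d.val then Ublock k r else mkX k r (flip2 ε) Sᶜ) =
          (if 1+d.val = 0 then mkX k r' ε' S'
            else if 1+d.val = 1+d'.val then Ublock k r' else mkX k r' (flip2 ε') S'ᶜ) := h1
      rw [if_neg (show ¬(1+d.val = 0) by omega), if_pos rfl,
        if_neg (show ¬(1+d.val = 0) by omega),
        if_neg (show ¬(1+d.val = 1+d'.val) by omega)] at h1'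
      exact u_not_mem_mkX k r' (flip2 ε') S'ᶜ (h1' ▸ u_mem_Ublock k r)
    subst hdd
    have h2 := congrFun hf ⟨1+d.val, len3 (k+4) (k+2) (k+2) (1+d.val) (by omega)⟩
    have h2' : (if 1+d.val = 0 then mkX k r ε S
          else if 1+d.val = 1+d.val then Ublock k r else mkX k r (flip2 ε) Sᶜ) =
        (if 1+d.val = 0 then mkX k r' ε' S'
          else if 1+d.val = 1+d.val then Ublock k r' else mkX k r' (flip2 ε') S'ᶜ) := h2
    rw [if_neg (show ¬(1+d.val = 0) by omega), if_pos rfl,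
      if_neg (show ¬(1+d.val = 0) by omega), if_pos rfl] at h2'
    have hrr : r = r' := Ublock_inj k h2' 
    subst hrr
    have h0 : mkX k r ε S = mkX k r ε' S' :=
      congrFun hf ⟨0, len3 (k+4) (k+2) (k+2) 0 (by omega)⟩
    obtain ⟨hee, hSS⟩ := mkX_inj k r h0
    subst hee
    subst hSS
    rfl
  · rintro ⟨B, hstab, hdisj, hcov, hcard⟩
    obtain ⟨iu, hiu⟩ := hcov (uV k)
    have hiu3 : iu.val < 3 := iu.isLt
    have hle := stable_card_le k (B iu) (hstab iu) hiu
    have hne01 : (⟨0, l0⟩ : Fin (List.length [k+4,k+2,k+2])) ≠ ⟨1, l1⟩ :=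
      Fin.ne_of_val_ne (show (0:ℕ) ≠ (1:ℕ) by omega)
    have hne02 : (⟨0, l0⟩ : Fin (List.length [k+4,k+2,k+2])) ≠ ⟨2, l2⟩ :=
      Fin.ne_of_val_ne (show (0:ℕ) ≠ (2:ℕ) by omega)
    have hne12 : (⟨1, l1⟩ : Fin (List.length [k+4,k+2,k+2])) ≠ ⟨2, l2⟩ :=
      Fin.ne_of_val_ne (show (1:ℕ) ≠ (2:ℕ) by omega)
    have hiu0 : iu.val ≠ 0 := by
      intro h0
      have hi : iu = ⟨0, l0⟩ := Fin.ext h0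
      rw [hi] at hle
      have hcc : (B ⟨0, l0⟩).card = k+4 := hcard ⟨0, l0⟩
      omega
    have hc0 : (B ⟨0, l0⟩).card = k+4 := hcard ⟨0, l0⟩
    by_cases hiu1 : iu.val = 1
    · -- u-block is B 1
      have hi : iu = ⟨1, l1⟩ := Fin.ext hiu1
      rw [hi] at hiu
      have hcT : (B ⟨1, l1⟩).card = k+2 := hcard ⟨1, l1⟩
      obtain ⟨r, hTU⟩ := stable_eq_Ublock k (B ⟨1, l1⟩) (hstab _) hiu hcT
      obtain ⟨ε, S, hXeq, hYeq⟩ := stable_decomp k r (B ⟨0, l0⟩) (B ⟨2, l2⟩)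
        (hstab _) (hstab _)
        (hTU ▸ hdisj _ _ hne01) (hTU ▸ (hdisj _ _ hne12).symm) (hdisj _ _ hne02)
        (by
          intro v
          obtain ⟨i, hi'⟩ := hcov v
          have h3 : i.val < 3 := i.isLt
          by_cases h0 : i.val = 0
          · have hieq : i = ⟨0, l0⟩ := Fin.ext h0
            rw [hieq] at hi'
            exact Or.inl hi'
          · by_cases h1 : i.val = 1
            · have hieq : i = ⟨1, l1⟩ := Fin.ext h1
              rw [hieq] at hi'
              exact Or.inr (Or.inr (hTU ▸ hi'))
            · have hieq : i = ⟨2, l2⟩ := Fin.ext ((by omega : i.val = 2))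
              rw [hieq] at hi'
              exact Or.inr (Or.inl hi'))
      have hSc : S.card = k+3 := by
        rw [hXeq, card_mkX] at hc0
        omega
      refine ⟨(⟨0, by omega⟩, r, ε, ⟨S, hSc⟩), ?_⟩
      apply Subtype.ext
      funext i
      have h3 : i.val < 3 := i.isLt
      by_cases h0 : i.val = 0
      · have hieq : i = ⟨0, l0⟩ := Fin.ext h0
        rw [hieq]
        exact hXeq.symm
      · by_cases h1 : i.val = 1
        · have hieq : i = ⟨1, l1⟩ := Fin.ext h1
          rw [hieq]
          exact hTU.symm
        · have hieq : i = ⟨2, l2⟩ := Fin.ext ((by omega : i.val = 2))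
          rw [hieq]
          exact hYeq.symm
    · -- u-block is B 2
      have hi : iu = ⟨2, l2⟩ := Fin.ext ((by omega : iu.val = 2))
      rw [hi] at hiu
      have hcT : (B ⟨2, l2⟩).card = k+2 := hcard ⟨2, l2⟩
      obtain ⟨r, hTU⟩ := stable_eq_Ublock k (B ⟨2, l2⟩) (hstab _) hiu hcT
      obtain ⟨ε, S, hXeq, hYeq⟩ := stable_decomp k r (B ⟨0, l0⟩) (B ⟨1, l1⟩)
        (hstab _) (hstab _)
        (hTU ▸ hdisj _ _ hne02) (hTU ▸ hdisj _ _ hne12) (hdisj _ _ hne01)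
        (by
          intro v
          obtain ⟨i, hi'⟩ := hcov v
          have h3 : i.val < 3 := i.isLt
          by_cases h0 : i.val = 0
          · have hieq : i = ⟨0, l0⟩ := Fin.ext h0
            rw [hieq] at hi'
            exact Or.inl hi'
          · by_cases h1 : i.val = 1
            · have hieq : i = ⟨1, l1⟩ := Fin.ext h1
              rw [hieq] at hi'
              exact Or.inr (Or.inl hi')
            · have hieq : i = ⟨2, l2⟩ := Fin.ext ((by omega : i.val = 2))
              rw [hieq] at hi'
              exact Or.inr (Or.inr (hTU ▸ hi')))
      have hSc : S.card = k+3 := by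
        rw [hXeq, card_mkX] at hc0
        omega
      refine ⟨(⟨1, by omega⟩, r, ε, ⟨S, hSc⟩), ?_⟩
      apply Subtype.ext
      funext i
      have h3 : i.val < 3 := i.isLt
      by_cases h0 : i.val = 0
      · have hieq : i = ⟨0, l0⟩ := Fin.ext h0
        rw [hieq]
        exact hXeq.symm
      · by_cases h1 : i.val = 1
        · have hieq : i = ⟨1, l1⟩ := Fin.ext h1
          rw [hieq]
          exact hYeq.symm
        · have hieq : i = ⟨2, l2⟩ := Fin.ext ((by omega : i.val = 2))
          rw [hieq]
          exact hTU.symm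

lemma aTilde_lam_val (k : ℕ) :
    aTilde (squid (k+3)) [k+4, k+2, k+2] = 4*(k+2) * Nat.choose (2*k+4) (k+3) := by
  rw [aTilde, ← Nat.card_eq_of_bijective _ (fLam_bij k)]
  rw [Nat.card_eq_fintype_card]
  simp only [Fintype.card_prod, Fintype.card_fin, Fintype.card_finset_len,
    Fintype.card_sum]
  rw [show k+1+(k+3) = 2*k+4 by omega]
  ring

lemma aTilde_lt (k : ℕ) :
    aTilde (squid (k+3)) [k+3, k+3, k+2] < aTilde (squid (k+3)) [k+4, k+2, k+2] := by
  rw [aTilde_mu_val, aTilde_lam_val]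
  have hid := Nat.choose_succ_right_eq (2*k+4) (k+2)
  rw [show (2*k+4) - (k+2) = k+2 by omega] at hid
  have hpos : 0 < Nat.choose (2*k+4) (k+3) := Nat.choose_pos (by omega)
  nlinarith [hid, hpos]

/-! ### Kostka monotonicity -/

section Kostka

lemma getD_anti {L : List ℕ} (hL : L.Pairwise (· ≥ ·)) {i1 i2 : ℕ} (h : i1 ≤ i2) :
    L.getD i2 0 ≤ L.getD i1 0 := by
  rcases Nat.lt_or_ge i2 L.length with h2 | h2
  · have h1 : i1 < L.length := lt_of_le_of_lt h h2
    rw [List.getD_eq_get L 0 ⟨i2, h2⟩, List.getD_eq_get L 0 ⟨i1, h1⟩]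
    rcases Nat.lt_or_ge i1 i2 with hlt | hge
    · exact hL.rel_get_of_lt hlt
    · have heq : i1 = i2 := by omega
      subst heq
      exact le_refl _
  · rw [List.getD_eq_default L 0 h2]
    exact Nat.zero_le _

lemma cells_finite {L : List ℕ} (hL : L.Pairwise (· ≥ ·)) :
    {p : ℕ × ℕ | p.2 < L.getD p.1 0}.Finite := by
  apply Set.Finite.subset ((Finset.range L.length ×ˢ Finset.range (L.getD 0 0)).finite_toSet)
  rintro ⟨i, j⟩ hp
  simp only [Set.mem_setOf_eq] at hp
  rw [Finset.mem_coe, Finset.mem_product, Finset.mem_range, Finset.mem_range]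
  constructor
  · by_contra hi
    push_neg at hi
    rw [List.getD_eq_default L 0 hi] at hp
    omega
  · exact lt_of_lt_of_le hp (getD_anti hL (Nat.zero_le i))

lemma count_as_ncard (L : List ℕ) (T : ℕ → ℕ → ℕ) (t : ℕ) :
    Nat.card {p : ℕ × ℕ // p.2 < L.getD p.1 0 ∧ T p.1 p.2 = t} =
      Set.ncard {p : ℕ × ℕ | p.2 < L.getD p.1 0 ∧ T p.1 p.2 = t} :=
  Nat.card_coe_set_eq _

lemma entry_ge {L : List ℕ} (hL : L.Pairwise (· ≥ ·)) (T : ℕ → ℕ → ℕ)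
    (h1 : ∀ i j, T i j ≠ 0 ↔ j < L.getD i 0)
    (h3 : ∀ i1 i2 j, i1 < i2 → j < L.getD i2 0 → T i1 j < T i2 j) :
    ∀ i j, j < L.getD i 0 → i + 1 ≤ T i j := by
  intro i
  induction i with
  | zero =>
    intro j hj
    have := (h1 0 j).mpr hj
    omega
  | succ n ih =>
    intro j hj
    have hcell : j < L.getD n 0 := lt_of_lt_of_le hj (getD_anti hL (by omega))
    have ha := ih j hcell
    have hb := h3 n (n+1) j (by omega) hj
    omega

lemma entry_le3 {L : List ℕ} (hL : L.Pairwise (· ≥ ·)) (M : List ℕ) (hM : M.length = 3)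
    (T : ℕ → ℕ → ℕ)
    (h4 : ∀ t, 0 < t → Nat.card {p : ℕ × ℕ // p.2 < L.getD p.1 0 ∧ T p.1 p.2 = t} =
      M.getD (t-1) 0) :
    ∀ i j, j < L.getD i 0 → T i j ≤ 3 := by
  intro i j hc
  by_contra hgt
  push_neg at hgt
  have h0 := h4 (T i j) (by omega)
  rw [List.getD_eq_default M 0 (by omega)] at h0
  rw [count_as_ncard] at h0
  have hfin : {p : ℕ × ℕ | p.2 < L.getD p.1 0 ∧ T p.1 p.2 = T i j}.Finite :=
    (cells_finite hL).subset (fun p hp => hp.1)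
  have hemp := (Set.ncard_eq_zero hfin).mp h0
  have hne : ((i,j) : ℕ × ℕ) ∈ {p : ℕ × ℕ | p.2 < L.getD p.1 0 ∧ T p.1 p.2 = T i j} :=
    ⟨hc, rfl⟩
  rw [hemp] at hne
  exact hne

lemma ones_char (k : ℕ) {L : List ℕ} (hL : L.Pairwise (· ≥ ·)) (T : ℕ → ℕ → ℕ)
    (h1 : ∀ i j, T i j ≠ 0 ↔ j < L.getD i 0)
    (h2 : ∀ i j1 j2, j1 ≤ j2 → j2 < L.getD i 0 → T i j1 ≤ T i j2)
    (h3 : ∀ i1 i2 j, i1 < i2 → j < L.getD i2 0 → T i1 j < T i2 j)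
    (hcnt : Set.ncard {p : ℕ × ℕ | p.2 < L.getD p.1 0 ∧ T p.1 p.2 = 1} = k+4) :
    ∀ j, (j < L.getD 0 0 ∧ T 0 j = 1) ↔ j < k+4 := by
  have hA1fin : {p : ℕ × ℕ | p.2 < L.getD p.1 0 ∧ T p.1 p.2 = 1}.Finite :=
    (cells_finite hL).subset (fun p hp => hp.1)
  have hrow0 : ∀ p : ℕ × ℕ, p ∈ {p : ℕ × ℕ | p.2 < L.getD p.1 0 ∧ T p.1 p.2 = 1} →
      p.1 = 0 := by
    rintro ⟨i, j⟩ ⟨hc, hv⟩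
    have hc' : j < L.getD i 0 := hc
    have hv' : T i j = 1 := hv
    have := entry_ge hL T h1 h3 i j hc'
    show i = 0
    omega
  have hnu1 : k+4 ≤ L.getD 0 0 := by
    have hsub : {p : ℕ × ℕ | p.2 < L.getD p.1 0 ∧ T p.1 p.2 = 1} ⊆
        ↑(({0} : Finset ℕ) ×ˢ Finset.range (L.getD 0 0)) := by
      rintro ⟨i, j⟩ hp
      have hi0 := hrow0 _ hp
      have hi0' : i = 0 := hi0
      subst hi0'
      have hc' : j < L.getD 0 0 := hp.1
      simp only [Finset.mem_coe, Finset.mem_product, Finset.mem_singleton, Finset.mem_range]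
      exact ⟨by trivial, hc'⟩
    have := Set.ncard_le_ncard hsub ((({0} : Finset ℕ) ×ˢ Finset.range (L.getD 0 0)).finite_toSet)
    rw [hcnt, Set.ncard_coe_finset, Finset.card_product, Finset.card_singleton,
      Finset.card_range, one_mul] at this
    exact this
  intro j
  constructor
  · rintro ⟨hc, hv⟩
    by_contra hge
    push_neg at hge
    have hsub : ↑(({0} : Finset ℕ) ×ˢ Finset.range (j+1)) ⊆
        {p : ℕ × ℕ | p.2 < L.getD p.1 0 ∧ T p.1 p.2 = 1} := by
      rintro ⟨i', j'⟩ hp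
      simp only [Finset.mem_coe, Finset.mem_product, Finset.mem_singleton,
        Finset.mem_range] at hp
      obtain ⟨hp1, hp2⟩ := hp
      subst hp1
      have hc' : j' < L.getD 0 0 := by omega
      have hle := h2 0 j' j (by omega) hc
      have hne := (h1 0 j').mpr hc'
      show j' < L.getD 0 0 ∧ T 0 j' = 1
      omega
    have := Set.ncard_le_ncard hsub hA1fin
    rw [hcnt, Set.ncard_coe_finset, Finset.card_product, Finset.card_singleton,
      Finset.card_range, one_mul] at this
    omega
  · intro hj
    have hc : j < L.getD 0 0 := by omega
    refine ⟨hc, ?_⟩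
    by_contra hv
    have hge2 : 2 ≤ T 0 j := by
      have := (h1 0 j).mpr hc
      omega
    have hsub : {p : ℕ × ℕ | p.2 < L.getD p.1 0 ∧ T p.1 p.2 = 1} ⊆
        ↑(({0} : Finset ℕ) ×ˢ Finset.range j) := by
      rintro ⟨i', j'⟩ hp
      have hi0' : i' = 0 := hrow0 _ hp
      subst hi0'
      have hc' : j' < L.getD 0 0 := hp.1
      have hv' : T 0 j' = 1 := hp.2
      simp only [Finset.mem_coe, Finset.mem_product, Finset.mem_singleton, Finset.mem_range]
      refine ⟨by trivial, ?_⟩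
      by_contra hgej
      push_neg at hgej
      have := h2 0 j j' hgej hc'
      omega
    have := Set.ncard_le_ncard hsub ((({0} : Finset ℕ) ×ˢ Finset.range j).finite_toSet)
    rw [hcnt, Set.ncard_coe_finset, Finset.card_product, Finset.card_singleton,
      Finset.card_range, one_mul] at this
    omega

lemma hq_lemma (k : ℕ) {L : List ℕ} (hL : L.Pairwise (· ≥ ·)) (T : ℕ → ℕ → ℕ)
    (h1 : ∀ i j, T i j ≠ 0 ↔ j < L.getD i 0)
    (h2 : ∀ i j1 j2, j1 ≤ j2 → j2 < L.getD i 0 → T i j1 ≤ T i j2)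
    (h3 : ∀ i1 i2 j, i1 < i2 → j < L.getD i2 0 → T i1 j < T i2 j)
    (h4 : ∀ t : ℕ, 0 < t →
      Nat.card {p : ℕ × ℕ // p.2 < L.getD p.1 0 ∧ T p.1 p.2 = t} =
        [k+4,k+2,k+2].getD (t - 1) 0) :
    (k+3) < L.getD 0 0 ∧ T 0 (k+3) = 1 := by
  have hcnt1 : Set.ncard {p : ℕ × ℕ | p.2 < L.getD p.1 0 ∧ T p.1 p.2 = 1} = k+4 := by
    rw [← count_as_ncard]
    exact h4 1 (by omega)
  exact (ones_char k hL T h1 h2 h3 hcnt1 (k+3)).mpr (by omega)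

lemma Tprime_prop (k : ℕ) {L : List ℕ} (hL : L.Pairwise (· ≥ ·)) (T : ℕ → ℕ → ℕ)
    (h1 : ∀ i j, T i j ≠ 0 ↔ j < L.getD i 0)
    (h2 : ∀ i j1 j2, j1 ≤ j2 → j2 < L.getD i 0 → T i j1 ≤ T i j2)
    (h3 : ∀ i1 i2 j, i1 < i2 → j < L.getD i2 0 → T i1 j < T i2 j)
    (h4 : ∀ t : ℕ, 0 < t →
      Nat.card {p : ℕ × ℕ // p.2 < L.getD p.1 0 ∧ T p.1 p.2 = t} =
        [k+4,k+2,k+2].getD (t - 1) 0) :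
    (∀ i j : ℕ, (if i = 0 ∧ j = k+3 then 2 else T i j) ≠ 0 ↔ j < L.getD i 0) ∧
    (∀ i j1 j2 : ℕ, j1 ≤ j2 → j2 < L.getD i 0 →
      (if i = 0 ∧ j1 = k+3 then 2 else T i j1) ≤ (if i = 0 ∧ j2 = k+3 then 2 else T i j2)) ∧
    (∀ i1 i2 j : ℕ, i1 < i2 → j < L.getD i2 0 →
      (if i1 = 0 ∧ j = k+3 then 2 else T i1 j) < (if i2 = 0 ∧ j = k+3 then 2 else T i2 j)) ∧
    (∀ t : ℕ, 0 < t →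
      Nat.card {p : ℕ × ℕ //
        p.2 < L.getD p.1 0 ∧ (if p.1 = 0 ∧ p.2 = k+3 then 2 else T p.1 p.2) = t} =
        [k+3,k+3,k+2].getD (t - 1) 0) := by
  have hcnt1 : Set.ncard {p : ℕ × ℕ | p.2 < L.getD p.1 0 ∧ T p.1 p.2 = 1} = k+4 := by
    rw [← count_as_ncard]
    exact h4 1 (by omega)
  have hcnt2 : Set.ncard {p : ℕ × ℕ | p.2 < L.getD p.1 0 ∧ T p.1 p.2 = 2} = k+2 := by
    rw [← count_as_ncard]
    exact h4 2 (by omega)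
  have hones := ones_char k hL T h1 h2 h3 hcnt1
  have hq := (hq_lemma k hL T h1 h2 h3 h4).2
  have hqcell := (hq_lemma k hL T h1 h2 h3 h4).1
  have hT1cell : ∀ j, k+3 < j → j < L.getD 0 0 → 2 ≤ T 0 j := by
    intro j hj hc
    have hne := (h1 0 j).mpr hc
    have hnot : ¬ (j < k+4) := by omega
    have hnv : T 0 j ≠ 1 := fun hv => hnot ((hones j).mp ⟨hc, hv⟩)
    omega
  have htwo3 : k+3 < L.getD 1 0 → 3 ≤ T 1 (k+3) := by
    intro hc
    have hgt := h3 0 1 (k+3) (by omega) hc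
    by_contra hlt
    push_neg at hlt
    have hT2 : T 1 (k+3) = 2 := by omega
    have hsub : ↑(({1} : Finset ℕ) ×ˢ Finset.range (k+4)) ⊆
        {p : ℕ × ℕ | p.2 < L.getD p.1 0 ∧ T p.1 p.2 = 2} := by
      rintro ⟨i', j'⟩ hp
      simp only [Finset.mem_coe, Finset.mem_product, Finset.mem_singleton,
        Finset.mem_range] at hp
      obtain ⟨hp1, hp2⟩ := hp
      subst hp1
      have hc' : j' < L.getD 1 0 := by omega
      have hle := h2 1 j' (k+3) (by omega) hc
      have hge := entry_ge hL T h1 h3 1 j' hc'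
      show j' < L.getD 1 0 ∧ T 1 j' = 2
      omega
    have hle := Set.ncard_le_ncard hsub ((cells_finite hL).subset (fun p hp => hp.1))
    rw [hcnt2, Set.ncard_coe_finset, Finset.card_product, Finset.card_singleton,
      Finset.card_range, one_mul] at hle
    omega
  have hge3 : ∀ i j, 2 ≤ i → j < L.getD i 0 → 3 ≤ T i j := by
    intro i j h2i hc
    have := entry_ge hL T h1 h3 i j hc
    omega
  refine ⟨?_, ?_, ?_, ?_⟩
  · intro i j
    by_cases hij : i = 0 ∧ j = k+3
    · rw [if_pos hij]
      obtain ⟨rfl, rfl⟩ := hij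
      constructor
      · intro _; exact hqcell
      · intro _; omega
    · rw [if_neg hij]; exact h1 i j
  · intro i j1 j2 hj hc2
    by_cases hA : i = 0 ∧ j1 = k+3
    · rw [if_pos hA]
      obtain ⟨rfl, rfl⟩ := hA
      by_cases hB : (0:ℕ) = 0 ∧ j2 = k+3
      · rw [if_pos hB]
      · rw [if_neg hB]
        have hlt : k+3 < j2 := by
          rcases Nat.lt_or_ge (k+3) j2 with h | h
          · exact h
          · exact absurd ⟨rfl, by omega⟩ hB
        exact hT1cell j2 hlt hc2
    · rw [if_neg hA]
      by_cases hB : i = 0 ∧ j2 = k+3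
      · rw [if_pos hB]
        obtain ⟨rfl, rfl⟩ := hB
        have hj1 : j1 < k+3 := by
          rcases Nat.lt_or_ge j1 (k+3) with h | h
          · exact h
          · exact absurd ⟨rfl, by omega⟩ hA
        have := ((hones j1).mpr (by omega)).2
        omega
      · rw [if_neg hB]; exact h2 i j1 j2 hj hc2
  · intro i1 i2 j hi hc2
    have hi2ne : ¬ (i2 = 0 ∧ j = k+3) := by
      rintro ⟨h, -⟩; omega
    rw [if_neg hi2ne]
    by_cases hA : i1 = 0 ∧ j = k+3
    · rw [if_pos hA]
      obtain ⟨rfl, rfl⟩ := hA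
      rcases Nat.lt_or_ge i2 2 with h | h
      · have hi21 : i2 = 1 := by omega
        subst hi21
        exact htwo3 hc2
      · exact hge3 i2 (k+3) h hc2
    · rw [if_neg hA]; exact h3 i1 i2 j hi hc2
  · intro t ht
    refine (count_as_ncard L (fun i j => if i = 0 ∧ j = k+3 then 2 else T i j) t).trans ?_
    show Set.ncard {p : ℕ × ℕ | p.2 < L.getD p.1 0 ∧
      (if p.1 = 0 ∧ p.2 = k+3 then 2 else T p.1 p.2) = t} = [k+3,k+3,k+2].getD (t-1) 0
    have hAfin : ∀ u : ℕ, {p : ℕ × ℕ | p.2 < L.getD p.1 0 ∧ T p.1 p.2 = u}.Finite :=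
      fun u => (cells_finite hL).subset (fun p hp => hp.1)
    by_cases ht1 : t = 1
    · subst ht1
      have hset : {p : ℕ × ℕ | p.2 < L.getD p.1 0 ∧
          (if p.1 = 0 ∧ p.2 = k+3 then 2 else T p.1 p.2) = 1} =
          ↑(({0} : Finset ℕ) ×ˢ Finset.range (k+3)) := by
        ext ⟨i, j⟩
        simp only [Set.mem_setOf_eq, Finset.mem_coe, Finset.mem_product,
          Finset.mem_singleton, Finset.mem_range]
        constructor
        · rintro ⟨hc, hv⟩
          by_cases hij : i = 0 ∧ j = k+3
          · rw [if_pos hij] at hv; omega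
          · rw [if_neg hij] at hv
            have h0 := entry_ge hL T h1 h3 i j hc
            have hi0 : i = 0 := by omega
            subst hi0
            have := (hones j).mp ⟨hc, hv⟩
            exact ⟨by trivial, by omega⟩
        · rintro ⟨hi0, hj⟩
          have hi0' : i = 0 := by simpa using hi0
          subst hi0'
          have hh := (hones j).mpr (by omega)
          refine ⟨hh.1, ?_⟩
          rw [if_neg (by omega : ¬((0:ℕ) = 0 ∧ j = k+3))]
          exact hh.2
      rw [hset, Set.ncard_coe_finset, Finset.card_product, Finset.card_singleton,
        Finset.card_range, one_mul]
      rfl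
    by_cases ht2 : t = 2
    · subst ht2
      have hset : {p : ℕ × ℕ | p.2 < L.getD p.1 0 ∧
          (if p.1 = 0 ∧ p.2 = k+3 then 2 else T p.1 p.2) = 2} =
          insert ((0:ℕ), k+3) {p : ℕ × ℕ | p.2 < L.getD p.1 0 ∧ T p.1 p.2 = 2} := by
        ext ⟨i, j⟩
        simp only [Set.mem_setOf_eq, Set.mem_insert_iff, Prod.mk.injEq]
        constructor
        · rintro ⟨hc, hv⟩
          by_cases hij : i = 0 ∧ j = k+3
          · exact Or.inl hij
          · rw [if_neg hij] at hv
            exact Or.inr ⟨hc, hv⟩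
        · rintro (⟨rfl, rfl⟩ | ⟨hc, hv⟩)
          · exact ⟨hqcell, by rw [if_pos ⟨rfl, rfl⟩]⟩
          · refine ⟨hc, ?_⟩
            have hij : ¬ (i = 0 ∧ j = k+3) := by
              rintro ⟨rfl, rfl⟩
              rw [hq] at hv
              omega
            rw [if_neg hij]
            exact hv
      have hnotmem : ((0:ℕ), k+3) ∉ {p : ℕ × ℕ | p.2 < L.getD p.1 0 ∧ T p.1 p.2 = 2} := by
        rintro ⟨-, hv⟩
        have hv' : T 0 (k+3) = 2 := hv
        omega
      rw [hset, Set.ncard_insert_of_notMem hnotmem (hAfin 2), hcnt2]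
      rfl
    -- t ≥ 3 : set unchanged
    have hset : {p : ℕ × ℕ | p.2 < L.getD p.1 0 ∧
        (if p.1 = 0 ∧ p.2 = k+3 then 2 else T p.1 p.2) = t} =
        {p : ℕ × ℕ | p.2 < L.getD p.1 0 ∧ T p.1 p.2 = t} := by
      ext ⟨i, j⟩
      simp only [Set.mem_setOf_eq]
      constructor
      · rintro ⟨hc, hv⟩
        by_cases hij : i = 0 ∧ j = k+3
        · rw [if_pos hij] at hv; omega
        · rw [if_neg hij] at hv; exact ⟨hc, hv⟩
      · rintro ⟨hc, hv⟩
        refine ⟨hc, ?_⟩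
        have hij : ¬ (i = 0 ∧ j = k+3) := by
          rintro ⟨rfl, rfl⟩
          rw [hq] at hv
          omega
        rw [if_neg hij]
        exact hv
    rw [hset, ← count_as_ncard]
    by_cases ht3 : t = 3
    · subst ht3
      exact h4 3 (by omega)
    · rw [h4 t (by omega),
        List.getD_eq_default _ 0 (show [k+4,k+2,k+2].length ≤ t-1 by
          simp only [List.length_cons, List.length_nil]; omega),
        List.getD_eq_default _ 0 (show [k+3,k+3,k+2].length ≤ t-1 by
          simp only [List.length_cons, List.length_nil]; omega)]

lemma kostka_mono (k : ℕ) {L : List ℕ} (hL : L.Pairwise (· ≥ ·)) :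
    kostka L [k+4, k+2, k+2] ≤ kostka L [k+3, k+3, k+2] := by
  classical
  have hfin2 : Finite {T : ℕ → ℕ → ℕ //
      (∀ i j : ℕ, T i j ≠ 0 ↔ j < L.getD i 0) ∧
      (∀ i j1 j2 : ℕ, j1 ≤ j2 → j2 < L.getD i 0 → T i j1 ≤ T i j2) ∧
      (∀ i1 i2 j : ℕ, i1 < i2 → j < L.getD i2 0 → T i1 j < T i2 j) ∧
      (∀ t : ℕ, 0 < t →
        Nat.card {p : ℕ × ℕ // p.2 < L.getD p.1 0 ∧ T p.1 p.2 = t} =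
          [k+3,k+3,k+2].getD (t - 1) 0)} := by
    apply Finite.of_injective (β := Fin L.length → Fin (L.getD 0 0) → Fin 4)
      (fun TT => fun i j => ⟨min (TT.1 i.val j.val) 3, by omega⟩)
    intro TT TT' h
    apply Subtype.ext
    funext i j
    obtain ⟨g1, g2, g3, g4⟩ := TT.2
    obtain ⟨g1', g2', g3', g4'⟩ := TT'.2
    by_cases hc : j < L.getD i 0
    · have hi : i < L.length := by
        by_contra h'
        push_neg at h'
        rw [List.getD_eq_default L 0 h'] at hc
        omega
      have hj : j < L.getD 0 0 := lt_of_lt_of_le hc (getD_anti hL (Nat.zero_le i))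
      have happ := congrFun (congrFun h ⟨i, hi⟩) ⟨j, hj⟩
      simp only [Fin.mk.injEq] at happ
      have h3a : TT.1 i j ≤ 3 := entry_le3 hL [k+3,k+3,k+2] rfl TT.1 g4 i j hc
      have h3b : TT'.1 i j ≤ 3 := entry_le3 hL [k+3,k+3,k+2] rfl TT'.1 g4' i j hc
      omega
    · have e1 : TT.1 i j = 0 := by
        by_contra h'
        exact hc ((g1 i j).mp h')
      have e2 : TT'.1 i j = 0 := by
        by_contra h'
        exact hc ((g1' i j).mp h')
      rw [e1, e2]
  rw [kostka, kostka]
  haveI := hfin2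
  apply Nat.card_le_card_of_injective
    (fun TT => (⟨fun i j => if i = 0 ∧ j = k+3 then 2 else TT.1 i j,
      Tprime_prop k hL TT.1 TT.2.1 TT.2.2.1 TT.2.2.2.1 TT.2.2.2.2⟩ :
      {T : ℕ → ℕ → ℕ //
        (∀ i j : ℕ, T i j ≠ 0 ↔ j < L.getD i 0) ∧
        (∀ i j1 j2 : ℕ, j1 ≤ j2 → j2 < L.getD i 0 → T i j1 ≤ T i j2) ∧
        (∀ i1 i2 j : ℕ, i1 < i2 → j < L.getD i2 0 → T i1 j < T i2 j) ∧
        (∀ t : ℕ, 0 < t →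
          Nat.card {p : ℕ × ℕ // p.2 < L.getD p.1 0 ∧ T p.1 p.2 = t} =
            [k+3,k+3,k+2].getD (t - 1) 0)}))
  intro TT TT' heq
  have hval := congrArg Subtype.val heq
  apply Subtype.ext
  funext i j
  have hq1 := (hq_lemma k hL TT.1 TT.2.1 TT.2.2.1 TT.2.2.2.1 TT.2.2.2.2).2
  have hq2 := (hq_lemma k hL TT'.1 TT'.2.1 TT'.2.2.1 TT'.2.2.2.1 TT'.2.2.2.2).2
  by_cases hij : i = 0 ∧ j = k+3
  · obtain ⟨rfl, rfl⟩ := hij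
    rw [hq1, hq2]
  · have happ := congrFun (congrFun hval i) j
    simp only at happ
    rw [if_neg hij, if_neg hij] at happ
    exact happ

end Kostka

/-! ### The two partitions and the final glue -/

def Pmu (k : ℕ) : Nat.Partition (3*(k+3)-1) where
  parts := {k+3, k+3, k+2}
  parts_pos := by
    intro i hi
    simp only [Multiset.insert_eq_cons, Multiset.mem_cons, Multiset.mem_singleton] at hi
    rcases hi with rfl | rfl | rfl <;> omega
  parts_sum := by
    simp only [Multiset.insert_eq_cons, Multiset.sum_cons, Multiset.sum_singleton]
    omega

def Plam (k : ℕ) : Nat.Partition (3*(k+3)-1) where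
  parts := {k+4, k+2, k+2}
  parts_pos := by
    intro i hi
    simp only [Multiset.insert_eq_cons, Multiset.mem_cons, Multiset.mem_singleton] at hi
    rcases hi with rfl | rfl | rfl <;> omega
  parts_sum := by
    simp only [Multiset.insert_eq_cons, Multiset.sum_cons, Multiset.sum_singleton]
    omega

lemma sort_mu (k : ℕ) : (Pmu k).parts.sort (· ≥ ·) = [k+3, k+3, k+2] := by
  have hperm : ((Pmu k).parts.sort (· ≥ ·)).Perm [k+3, k+3, k+2] := by
    rw [← Multiset.coe_eq_coe, Multiset.sort_eq]
    rfl
  exact hperm.eq_of_pairwise' (Multiset.pairwise_sort _ _)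
    (by simp [List.pairwise_cons])

lemma sort_lam (k : ℕ) : (Plam k).parts.sort (· ≥ ·) = [k+4, k+2, k+2] := by
  have hperm : ((Plam k).parts.sort (· ≥ ·)).Perm [k+4, k+2, k+2] := by
    rw [← Multiset.coe_eq_coe, Multiset.sort_eq]
    rfl
  exact hperm.eq_of_pairwise' (Multiset.pairwise_sort _ _)
    (by simp [List.pairwise_cons])

end SquidAux

theorem squid_not_schur_positive (n : ℕ) (hn : 3 ≤ n) :
    ¬ ∃ c : Nat.Partition (3 * n - 1) → ℚ, (∀ ν, 0 ≤ c ν) ∧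
      ∀ ρ : Nat.Partition (3 * n - 1),
        (aTilde (squid n) (ρ.parts.sort (· ≥ ·)) : ℚ) =
          ∑ ν : Nat.Partition (3 * n - 1),
            c ν * kostka (ν.parts.sort (· ≥ ·)) (ρ.parts.sort (· ≥ ·)) := by
  obtain ⟨k, rfl⟩ : ∃ k, n = k + 3 := ⟨n - 3, by omega⟩
  rintro ⟨c, hc0, hc⟩
  have hmu := hc (Pmu k)
  have hlam := hc (Plam k)
  rw [sort_mu] at hmu
  rw [sort_lam] at hlam
  have hkey : (aTilde (squid (k+3)) [k+4,k+2,k+2] : ℚ) ≤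
      (aTilde (squid (k+3)) [k+3,k+3,k+2] : ℚ) := by
    rw [hlam, hmu]
    apply Finset.sum_le_sum
    intro ν _
    have hk := kostka_mono k (Multiset.pairwise_sort ν.parts (· ≥ ·))
    have hcast : (kostka (ν.parts.sort (· ≥ ·)) [k+4,k+2,k+2] : ℚ) ≤
        (kostka (ν.parts.sort (· ≥ ·)) [k+3,k+3,k+2] : ℚ) := by exact_mod_cast hk
    exact mul_le_mul_of_nonneg_left hcast (hc0 ν)
  have hlt := aTilde_lt k
  have hlt' : (aTilde (squid (k+3)) [k+3,k+3,k+2] : ℚ) <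
      (aTilde (squid (k+3)) [k+4,k+2,k+2] : ℚ) := by exact_mod_cast hlt
  linarith
end
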